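/- arXiv:2212.05791 — 6 statements merged into one kernel-verified Lean document; each statement's English description precedes it below -/
import Mathlib

section
/- (Legendre/Hasse–Minkowski for conics) Let q(x,y,z) = a x² + b y² + c z² be a nondegenerate ternary quadratic form over ℚ with a, b, c nonzero rationals. If q has a nontrivial zero over ℝ and over ℚ_p for every prime p, then q has a nontrivial zero over ℚ. -/
/-!
A proof of Legendre's theorem / Hasse–Minkowski for ternary diagonal conics.
-/


/-- Auxiliary: the diagonal form with integer coefficients has a nontrivial zero over `K`. -/
def HMzero (K : Type*) [Field K] (a b c : ℤ) : Prop :=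
  ∃ x y z : K, (x, y, z) ≠ 0 ∧ (a : K) * x ^ 2 + (b : K) * y ^ 2 + (c : K) * z ^ 2 = 0

lemma ne3_iff {K : Type*} [Zero K] {x y z : K} :
    (x, y, z) ≠ 0 ↔ x ≠ 0 ∨ y ≠ 0 ∨ z ≠ 0 := by
  simp only [ne_eq, Prod.mk_eq_zero, not_and_or]

lemma HMzero.swap12 {K : Type*} [Field K] {a b c : ℤ} (h : HMzero K a b c) :
    HMzero K b a c := by
  obtain ⟨x, y, z, hne, heq⟩ := h
  rw [ne3_iff] at hne
  exact ⟨y, x, z, ne3_iff.mpr (by tauto), by linear_combination heq⟩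

lemma HMzero.rot {K : Type*} [Field K] {a b c : ℤ} (h : HMzero K a b c) :
    HMzero K b c a := by
  obtain ⟨x, y, z, hne, heq⟩ := h
  rw [ne3_iff] at hne
  exact ⟨y, z, x, ne3_iff.mpr (by tauto), by linear_combination heq⟩

lemma HMzero.swap23 {K : Type*} [Field K] {a b c : ℤ} (h : HMzero K a b c) :
    HMzero K a c b := h.swap12.rot

lemma HMzero.neg {K : Type*} [Field K] {a b c : ℤ} (h : HMzero K a b c) :
    HMzero K (-a) (-b) (-c) := by
  obtain ⟨x, y, z, hne, heq⟩ := h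
  exact ⟨x, y, z, hne, by push_cast; linear_combination -heq⟩

/-- scaling all three coefficients by a nonzero integer. -/
lemma HMzero.of_smul {K : Type*} [Field K] [CharZero K] {a b c d : ℤ} (hd : d ≠ 0)
    (h : HMzero K (d * a) (d * b) (d * c)) : HMzero K a b c := by
  obtain ⟨x, y, z, hne, heq⟩ := h
  have hd' : (d : K) ≠ 0 := Int.cast_ne_zero.mpr hd
  refine ⟨x, y, z, hne, ?_⟩
  push_cast at heq
  have : (d : K) * ((a : K) * x ^ 2 + (b : K) * y ^ 2 + (c : K) * z ^ 2) = 0 := by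
    linear_combination heq
  rcases mul_eq_zero.mp this with h' | h'
  · exact absurd h' hd'
  · exact h'

lemma HMzero.smul {K : Type*} [Field K] [CharZero K] {a b c : ℤ} (d : ℤ)
    (h : HMzero K a b c) : HMzero K (d * a) (d * b) (d * c) := by
  obtain ⟨x, y, z, hne, heq⟩ := h
  exact ⟨x, y, z, hne, by push_cast; linear_combination (d : K) * heq⟩

/-- removing a square factor from the first coefficient. -/
lemma HMzero.unsquare {K : Type*} [Field K] [CharZero K] {a b c e : ℤ} (he : e ≠ 0)
    (h : HMzero K (e ^ 2 * a) b c) : HMzero K a b c := by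
  obtain ⟨x, y, z, hne, heq⟩ := h
  rw [ne3_iff] at hne
  have he' : (e : K) ≠ 0 := Int.cast_ne_zero.mpr he
  push_cast at heq
  refine ⟨(e : K) * x, y, z, ne3_iff.mpr ?_, by linear_combination heq⟩
  rcases hne with h1 | h2 | h3
  · exact Or.inl (mul_ne_zero he' h1)
  · exact Or.inr (Or.inl h2)
  · exact Or.inr (Or.inr h3)

lemma HMzero.square {K : Type*} [Field K] [CharZero K] {a b c : ℤ} (e : ℤ) (he : e ≠ 0)
    (h : HMzero K a b c) : HMzero K (e ^ 2 * a) b c := by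
  obtain ⟨x, y, z, hne, heq⟩ := h
  rw [ne3_iff] at hne
  have he' : (e : K) ≠ 0 := Int.cast_ne_zero.mpr he
  refine ⟨x, (e : K) * y, (e : K) * z, ne3_iff.mpr ?_, ?_⟩
  · rcases hne with h1 | h2 | h3
    · exact Or.inl h1
    · exact Or.inr (Or.inl (mul_ne_zero he' h2))
    · exact Or.inr (Or.inr (mul_ne_zero he' h3))
  · push_cast
    linear_combination (e : K) ^ 2 * heq

/-- the step `(p a, p b, c) ↦ (a, b, p c)`. -/
lemma HMzero.pdiv {K : Type*} [Field K] [CharZero K] {a b c p : ℤ} (hp : p ≠ 0)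
    (h : HMzero K (p * a) (p * b) c) : HMzero K a b (p * c) := by
  obtain ⟨x, y, z, hne, heq⟩ := h
  rw [ne3_iff] at hne
  have hp' : (p : K) ≠ 0 := Int.cast_ne_zero.mpr hp
  push_cast at heq
  refine ⟨(p : K) * x, (p : K) * y, z, ne3_iff.mpr ?_, ?_⟩
  · rcases hne with h1 | h2 | h3
    · exact Or.inl (mul_ne_zero hp' h1)
    · exact Or.inr (Or.inl (mul_ne_zero hp' h2))
    · exact Or.inr (Or.inr h3)
  · push_cast
    linear_combination (p : K) * heq

lemma HMzero.pmul {K : Type*} [Field K] [CharZero K] {a b c p : ℤ} (hp : p ≠ 0)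
    (h : HMzero K a b (p * c)) : HMzero K (p * a) (p * b) c := by
  obtain ⟨x, y, z, hne, heq⟩ := h
  rw [ne3_iff] at hne
  have hp' : (p : K) ≠ 0 := Int.cast_ne_zero.mpr hp
  push_cast at heq
  refine ⟨x, y, (p : K) * z, ne3_iff.mpr ?_, ?_⟩
  · rcases hne with h1 | h2 | h3
    · exact Or.inl h1
    · exact Or.inr (Or.inl h2)
    · exact Or.inr (Or.inr (mul_ne_zero hp' h3))
  · push_cast
    linear_combination (p : K) * heq


/-- From a nontrivial `ℚ_p`-zero of `a x² + b y² + c z²` with `p ∤ a`, `p ∤ b`,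
`p ∥ c`, we get that `-a b` is a square mod `p`. -/
lemma padic_square (a b c : ℤ) (p : ℕ) [hp : Fact p.Prime]
    (hpa : ¬(p : ℤ) ∣ a) (hpb : ¬(p : ℤ) ∣ b) (hpc : (p : ℤ) ∣ c) (hpc2 : ¬(p : ℤ) ^ 2 ∣ c)
    (h : HMzero ℚ_[p] a b c) :
    ∃ r : ℤ, (p : ℤ) ∣ r ^ 2 + a * b := by
  obtain ⟨x, y, z, hne, heq⟩ := h
  rw [show ((x, y, z) ≠ 0) ↔ (x ≠ 0 ∨ y ≠ 0 ∨ z ≠ 0) by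
    simp only [ne_eq, Prod.mk_eq_zero, not_and_or]] at hne
  -- the maximum of the three norms
  set M : ℝ := max ‖x‖ (max ‖y‖ ‖z‖) with hM
  have hMx : ‖x‖ ≤ M := le_max_left _ _
  have hMy : ‖y‖ ≤ M := le_trans (le_max_left _ _) (le_max_right _ _)
  have hMz : ‖z‖ ≤ M := le_trans (le_max_right _ _) (le_max_right _ _)
  have hMpos : 0 < M := by
    rcases hne with h1 | h2 | h3
    · exact lt_of_lt_of_le (norm_pos_iff.mpr h1) hMx
    · exact lt_of_lt_of_le (norm_pos_iff.mpr h2) hMy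
    · exact lt_of_lt_of_le (norm_pos_iff.mpr h3) hMz
  have hach : ∃ w : ℚ_[p], (w = x ∨ w = y ∨ w = z) ∧ M = ‖w‖ := by
    rcases max_choice ‖x‖ (max ‖y‖ ‖z‖) with h1 | h1
    · exact ⟨x, Or.inl rfl, hM.trans h1⟩
    · rcases max_choice ‖y‖ ‖z‖ with h2 | h2
      · exact ⟨y, Or.inr (Or.inl rfl), hM.trans (h1.trans h2)⟩
      · exact ⟨z, Or.inr (Or.inr rfl), hM.trans (h1.trans h2)⟩
  obtain ⟨w, hwmem, hwM⟩ := hach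
  have hw0 : w ≠ 0 := by
    intro h0
    rw [h0, norm_zero] at hwM
    exact absurd (hwM ▸ hMpos) (lt_irrefl 0)
  -- scale so that the max norm is 1
  set s : ℚ_[p] := (p : ℚ_[p]) ^ (-w.valuation) with hs
  have hsnorm : ‖s‖ = M⁻¹ := by
    rw [hs, Padic.norm_p_zpow, neg_neg, hwM, Padic.norm_eq_zpow_neg_valuation hw0, ← zpow_neg, neg_neg]
  have hsw : ‖s * w‖ = 1 := by
    rw [norm_mul, hsnorm, ← hwM, inv_mul_cancel₀ (ne_of_gt hMpos)]
  have hXle : ‖s * x‖ ≤ 1 := by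
    rw [norm_mul, hsnorm]
    calc M⁻¹ * ‖x‖ ≤ M⁻¹ * M :=
          mul_le_mul_of_nonneg_left hMx (le_of_lt (inv_pos.mpr hMpos))
      _ = 1 := inv_mul_cancel₀ (ne_of_gt hMpos)
  have hYle : ‖s * y‖ ≤ 1 := by
    rw [norm_mul, hsnorm]
    calc M⁻¹ * ‖y‖ ≤ M⁻¹ * M :=
          mul_le_mul_of_nonneg_left hMy (le_of_lt (inv_pos.mpr hMpos))
      _ = 1 := inv_mul_cancel₀ (ne_of_gt hMpos)
  have hZle : ‖s * z‖ ≤ 1 := by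
    rw [norm_mul, hsnorm]
    calc M⁻¹ * ‖z‖ ≤ M⁻¹ * M :=
          mul_le_mul_of_nonneg_left hMz (le_of_lt (inv_pos.mpr hMpos))
      _ = 1 := inv_mul_cancel₀ (ne_of_gt hMpos)
  have hone : ‖s * x‖ = 1 ∨ ‖s * y‖ = 1 ∨ ‖s * z‖ = 1 := by
    rcases hwmem with rfl | rfl | rfl
    · exact Or.inl hsw
    · exact Or.inr (Or.inl hsw)
    · exact Or.inr (Or.inr hsw)
  set X : ℚ_[p] := s * x
  set Y : ℚ_[p] := s * y
  set Z : ℚ_[p] := s * z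
  have heq2 : (a : ℚ_[p]) * X ^ 2 + (b : ℚ_[p]) * Y ^ 2 + (c : ℚ_[p]) * Z ^ 2 = 0 := by
    show (a : ℚ_[p]) * (s * x) ^ 2 + (b : ℚ_[p]) * (s * y) ^ 2 + (c : ℚ_[p]) * (s * z) ^ 2 = 0
    linear_combination s ^ 2 * heq
  clear heq hsnorm hMx hMy hMz hne hMpos
  -- move into ℤ_[p]
  set X' : ℤ_[p] := ⟨X, hXle⟩ with hX'
  set Y' : ℤ_[p] := ⟨Y, hYle⟩ with hY'
  set Z' : ℤ_[p] := ⟨Z, hZle⟩ with hZ'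
  have heq3 : (a : ℤ_[p]) * X' ^ 2 + (b : ℤ_[p]) * Y' ^ 2 + (c : ℤ_[p]) * Z' ^ 2 = 0 := by
    have : (((a : ℤ_[p]) * X' ^ 2 + (b : ℤ_[p]) * Y' ^ 2 + (c : ℤ_[p]) * Z' ^ 2 : ℤ_[p]) : ℚ_[p])
        = ((0 : ℤ_[p]) : ℚ_[p]) := by
      push_cast
      exact heq2
    exact Subtype.coe_injective this
  -- reduce mod p
  set φ : ℤ_[p] →+* ZMod p := PadicInt.toZMod with hφ
  have hcbar : ((c : ℤ) : ZMod p) = 0 := (ZMod.intCast_zmod_eq_zero_iff_dvd c p).mpr hpc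
  have habar : ((a : ℤ) : ZMod p) ≠ 0 := fun h0 =>
    hpa ((ZMod.intCast_zmod_eq_zero_iff_dvd a p).mp h0)
  have hbbar : ((b : ℤ) : ZMod p) ≠ 0 := fun h0 =>
    hpb ((ZMod.intCast_zmod_eq_zero_iff_dvd b p).mp h0)
  have heq4 : (a : ZMod p) * (φ X') ^ 2 + (b : ZMod p) * (φ Y') ^ 2 = 0 := by
    have := congrArg φ heq3
    simp only [map_add, map_mul, map_pow, map_intCast, map_zero] at this
    rw [hcbar] at this
    linear_combination this
  -- not both reductions vanish
  have hnotboth : ¬(φ X' = 0 ∧ φ Y' = 0) := by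
    rintro ⟨hX0, hY0⟩
    have hdX : (p : ℤ_[p]) ∣ X' := by
      rw [← Ideal.mem_span_singleton, ← PadicInt.maximalIdeal_eq_span_p,
        ← PadicInt.ker_toZMod, RingHom.mem_ker]
      exact hX0
    have hdY : (p : ℤ_[p]) ∣ Y' := by
      rw [← Ideal.mem_span_singleton, ← PadicInt.maximalIdeal_eq_span_p,
        ← PadicInt.ker_toZMod, RingHom.mem_ker]
      exact hY0
    -- so ‖X‖, ‖Y‖ ≤ 1/p
    have hp1 : (1 : ℝ) < p := by exact_mod_cast hp.out.one_lt
    have hXp : ‖X‖ ≤ (p : ℝ)⁻¹ := by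
      obtain ⟨t, ht⟩ := hdX
      have : X = (p : ℚ_[p]) * (t : ℚ_[p]) := by
        have := congrArg (fun u : ℤ_[p] => (u : ℚ_[p])) ht
        push_cast at this
        exact this
      rw [this, norm_mul, Padic.norm_p]
      calc (p : ℝ)⁻¹ * ‖(t : ℚ_[p])‖ ≤ (p : ℝ)⁻¹ * 1 :=
            mul_le_mul_of_nonneg_left t.2 (by positivity)
        _ = (p : ℝ)⁻¹ := mul_one _
    have hYp : ‖Y‖ ≤ (p : ℝ)⁻¹ := by
      obtain ⟨t, ht⟩ := hdY
      have : Y = (p : ℚ_[p]) * (t : ℚ_[p]) := by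
        have := congrArg (fun u : ℤ_[p] => (u : ℚ_[p])) ht
        push_cast at this
        exact this
      rw [this, norm_mul, Padic.norm_p]
      calc (p : ℝ)⁻¹ * ‖(t : ℚ_[p])‖ ≤ (p : ℝ)⁻¹ * 1 :=
            mul_le_mul_of_nonneg_left t.2 (by positivity)
        _ = (p : ℝ)⁻¹ := mul_one _
    -- then Z has norm 1
    have hZ1 : ‖Z‖ = 1 := by
      rcases hone with h1 | h1 | h1
      · exact absurd h1 (ne_of_lt (lt_of_le_of_lt hXp (by rw [inv_lt_one_iff₀]; right; exact hp1)))
      · exact absurd h1 (ne_of_lt (lt_of_le_of_lt hYp (by rw [inv_lt_one_iff₀]; right; exact hp1)))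
      · exact h1
    -- ‖c‖ = 1/p exactly
    obtain ⟨c₀, hc₀⟩ := hpc
    have hpc₀ : ¬(p : ℤ) ∣ c₀ := fun hd => hpc2 (by rw [hc₀, sq]; exact mul_dvd_mul_left _ hd)
    have hc₀n : ‖(c₀ : ℚ_[p])‖ = 1 := by
      rcases lt_or_eq_of_le (Padic.norm_int_le_one (p := p) c₀) with hlt | heq1
      · exact absurd ((Padic.norm_intCast_lt_one_iff (p := p) (k := c₀)).mp hlt) hpc₀
      · exact heq1
    have hcn : ‖(c : ℚ_[p])‖ = (p : ℝ)⁻¹ := by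
      rw [hc₀, Int.cast_mul]
      push_cast
      rw [norm_mul, Padic.norm_p, hc₀n, mul_one]
    -- the contradiction via the ultrametric inequality
    have hterm : ‖(c : ℚ_[p]) * Z ^ 2‖ = (p : ℝ)⁻¹ := by
      rw [norm_mul, norm_pow, hZ1, hcn]; ring
    have hsum : ‖(a : ℚ_[p]) * X ^ 2 + (b : ℚ_[p]) * Y ^ 2‖ ≤ (p : ℝ)⁻¹ * (p : ℝ)⁻¹ := by
      refine le_trans (Padic.nonarchimedean _ _) (max_le ?_ ?_)
      · rw [norm_mul, norm_pow]
        calc ‖(a : ℚ_[p])‖ * ‖X‖ ^ 2 ≤ 1 * ((p : ℝ)⁻¹ * (p : ℝ)⁻¹) := by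
              rw [sq]
              exact mul_le_mul (Padic.norm_int_le_one (p := p) a)
                (mul_le_mul hXp hXp (norm_nonneg _) (by positivity))
                (by positivity) zero_le_one
          _ = (p : ℝ)⁻¹ * (p : ℝ)⁻¹ := one_mul _
      · rw [norm_mul, norm_pow]
        calc ‖(b : ℚ_[p])‖ * ‖Y‖ ^ 2 ≤ 1 * ((p : ℝ)⁻¹ * (p : ℝ)⁻¹) := by
              rw [sq]
              exact mul_le_mul (Padic.norm_int_le_one (p := p) b)
                (mul_le_mul hYp hYp (norm_nonneg _) (by positivity))
                (by positivity) zero_le_one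
          _ = (p : ℝ)⁻¹ * (p : ℝ)⁻¹ := one_mul _
    have hCZ : (c : ℚ_[p]) * Z ^ 2 = -((a : ℚ_[p]) * X ^ 2 + (b : ℚ_[p]) * Y ^ 2) := by
      linear_combination heq2
    rw [hCZ, norm_neg] at hterm
    rw [hterm] at hsum
    have hppos : (0 : ℝ) < (p : ℝ)⁻¹ := by positivity
    have hlt1 : (p : ℝ)⁻¹ < 1 := by rw [inv_lt_one_iff₀]; right; exact hp1
    have := mul_lt_mul_of_pos_left hlt1 hppos
    rw [mul_one] at this
    linarith
  -- now work in ZMod p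
  have hφY : φ Y' ≠ 0 := by
    intro hY0
    apply hnotboth
    refine ⟨?_, hY0⟩
    have : (a : ZMod p) * (φ X') ^ 2 = 0 := by
      rw [hY0] at heq4
      linear_combination heq4
    rcases mul_eq_zero.mp this with h0 | h0
    · exact absurd h0 habar
    · exact (pow_eq_zero_iff two_ne_zero).mp h0
  set t : ZMod p := (a : ZMod p) * φ X' * (φ Y')⁻¹ with htdef
  have htY : t * φ Y' = (a : ZMod p) * φ X' := by
    rw [htdef]
    field_simp
  have hkey : (t ^ 2 + (a : ZMod p) * (b : ZMod p)) * (φ Y') ^ 2 = 0 := by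
    linear_combination (t * φ Y' + (a : ZMod p) * φ X') * htY + (a : ZMod p) * heq4
  have ht2 : t ^ 2 = -((a : ZMod p) * (b : ZMod p)) := by
    rcases mul_eq_zero.mp hkey with h0 | h0
    · linear_combination h0
    · exact absurd ((pow_eq_zero_iff two_ne_zero).mp h0) hφY
  refine ⟨(t.val : ℤ), ?_⟩
  rw [← ZMod.intCast_zmod_eq_zero_iff_dvd]
  push_cast
  rw [ZMod.natCast_val, ZMod.cast_id]
  linear_combination ht2


/-- binary CRT for integers. -/
lemma crt2 {m n : ℤ} (h : IsCoprime m n) (u v : ℤ) :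
    ∃ w : ℤ, m ∣ w - u ∧ n ∣ w - v := by
  obtain ⟨s, t, hst⟩ := h
  refine ⟨v * s * m + u * t * n, ⟨s * (v - u), ?_⟩, ⟨t * (u - v), ?_⟩⟩
  · linear_combination u * hst
  · linear_combination v * hst

/-- existence of a square root mod a squarefree integer from roots mod each prime. -/
lemma crt_sq : ∀ n : ℕ, Squarefree n → ∀ k : ℤ,
    (∀ p : ℕ, p.Prime → p ∣ n → ∃ r : ℤ, (p : ℤ) ∣ r ^ 2 + k) →
    ∃ r : ℤ, (n : ℤ) ∣ r ^ 2 + k := by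
  intro n
  induction n using Nat.strong_induction_on with
  | _ n ih =>
    intro hn k hall
    rcases eq_or_lt_of_le (Nat.one_le_iff_ne_zero.mpr hn.ne_zero) with h1 | h1
    · exact ⟨0, by simp [← h1]⟩
    · obtain ⟨p, hp, hpn⟩ := Nat.exists_prime_and_dvd (by omega : n ≠ 1)
      obtain ⟨m, hm⟩ := hpn
      have hm0 : m ≠ 0 := by rintro rfl; rw [mul_zero] at hm; exact hn.ne_zero hm
      have hmsf : Squarefree m := by
        rw [hm] at hn; exact hn.of_mul_right
      have hpm : ¬ p ∣ m := by
        intro hd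
        obtain ⟨l, hl⟩ := hd
        have : p * p ∣ n := by rw [hm, hl]; exact ⟨l, by ring⟩
        exact hp.not_isUnit (hn p this)
      have hcop : Nat.Coprime p m := (Nat.Prime.coprime_iff_not_dvd hp).mpr hpm
      have hmlt : m < n := by
        rw [hm]
        have := hp.two_le
        nlinarith [Nat.pos_of_ne_zero hm0]
      obtain ⟨r₁, hr₁⟩ := hall p hp ⟨m, hm⟩
      obtain ⟨r₂, hr₂⟩ := ih m hmlt hmsf k
        (fun q hq hqm => hall q hq (hm ▸ dvd_mul_of_dvd_right hqm p))
      have hcopZ : IsCoprime (p : ℤ) (m : ℤ) := by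
        rw [Int.isCoprime_iff_gcd_eq_one]
        exact_mod_cast hcop
      obtain ⟨w, hwp, hwm⟩ := crt2 hcopZ r₁ r₂
      refine ⟨w, ?_⟩
      rw [hm]
      push_cast
      refine IsCoprime.mul_dvd hcopZ ?_ ?_
      · have : w ^ 2 + k = (w - r₁) * (w + r₁) + (r₁ ^ 2 + k) := by ring
        rw [this]
        exact dvd_add (Dvd.dvd.mul_right hwp _) hr₁
      · have : w ^ 2 + k = (w - r₂) * (w + r₂) + (r₂ ^ 2 + k) := by ring
        rw [this]
        exact dvd_add (Dvd.dvd.mul_right hwm _) hr₂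

/-- Pigeonhole box lemma: a linear congruence mod `N` has a small nonzero solution. -/
lemma box_lemma (N : ℤ) (hN : 0 < N) (lam mu nu : ℤ) (X Y Z : ℕ)
    (h : N < ((X : ℤ) + 1) * ((Y : ℤ) + 1) * ((Z : ℤ) + 1)) :
    ∃ x y z : ℤ, ¬(x = 0 ∧ y = 0 ∧ z = 0) ∧ N ∣ lam * x + mu * y + nu * z ∧
      |x| ≤ X ∧ |y| ≤ Y ∧ |z| ≤ Z := by
  set n : ℕ := N.toNat with hn
  have hn0 : 0 < n := by omega
  haveI : NeZero n := ⟨by omega⟩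
  have hNn : (n : ℤ) = N := Int.toNat_of_nonneg hN.le
  have hcard : Fintype.card (ZMod n) < Fintype.card (Fin (X + 1) × Fin (Y + 1) × Fin (Z + 1)) := by
    rw [ZMod.card, Fintype.card_prod, Fintype.card_prod, Fintype.card_fin, Fintype.card_fin,
      Fintype.card_fin]
    have : (n : ℤ) < ((X : ℤ) + 1) * ((Y : ℤ) + 1) * ((Z : ℤ) + 1) := hNn ▸ h
    zify
    linarith
  obtain ⟨v, w, hvw, heq⟩ := Fintype.exists_ne_map_eq_of_card_lt
    (fun t : Fin (X + 1) × Fin (Y + 1) × Fin (Z + 1) =>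
      ((lam * t.1 + mu * t.2.1 + nu * t.2.2 : ℤ) : ZMod n)) hcard
  refine ⟨(v.1 : ℤ) - w.1, (v.2.1 : ℤ) - w.2.1, (v.2.2 : ℤ) - w.2.2, ?_, ?_, ?_, ?_, ?_⟩
  · rintro ⟨h1, h2, h3⟩
    apply hvw
    have e1 : (v.1 : ℤ) = w.1 := by omega
    have e2 : (v.2.1 : ℤ) = w.2.1 := by omega
    have e3 : (v.2.2 : ℤ) = w.2.2 := by omega
    have f1 : v.1 = w.1 := Fin.ext (by exact_mod_cast e1)
    have f2 : v.2.1 = w.2.1 := Fin.ext (by exact_mod_cast e2)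
    have f3 : v.2.2 = w.2.2 := Fin.ext (by exact_mod_cast e3)
    exact Prod.ext f1 (Prod.ext f2 f3)
  · rw [← hNn, ← ZMod.intCast_zmod_eq_zero_iff_dvd]
    push_cast
    push_cast at heq
    linear_combination heq
  · have := v.1.isLt
    have := w.1.isLt
    rw [abs_le]
    omega
  · have := v.2.1.isLt
    have := w.2.1.isLt
    rw [abs_le]
    omega
  · have := v.2.2.isLt
    have := w.2.2.isLt
    rw [abs_le]
    omega


set_option maxHeartbeats 1000000 in
/-- **Legendre's theorem**, core case. -/
lemma legendre_key (a b c : ℤ) (ha : 0 < a) (hb : 0 < b) (hc : c < 0)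
    (hsa : Squarefree a) (hsb : Squarefree b) (hsc : Squarefree c)
    (hab : IsCoprime a b) (hac : IsCoprime a c) (hbc : IsCoprime b c)
    (hQa : ∃ r : ℤ, a ∣ r ^ 2 + b * c) (hQb : ∃ r : ℤ, b ∣ r ^ 2 + a * c)
    (hQc : ∃ r : ℤ, c ∣ r ^ 2 + a * b) :
    HMzero ℚ a b c := by
  obtain ⟨s, hs⟩ := hQa
  obtain ⟨t, ht⟩ := hQb
  obtain ⟨r, hr⟩ := hQc
  set c' : ℤ := -c with hc'def
  have hc' : 0 < c' := by omega
  set N : ℤ := a * b * c' with hNdef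
  have hN : 0 < N := by positivity
  -- build the linear form by CRT
  have habc : IsCoprime (a * b) c := hac.mul_left hbc
  obtain ⟨l₁, hl₁a, hl₁b⟩ := crt2 hab 0 t
  obtain ⟨lam, hlab, hlc⟩ := crt2 habc l₁ a
  obtain ⟨m₁, hm₁a, hm₁b⟩ := crt2 hab b 0
  obtain ⟨mu, hmab, hmc⟩ := crt2 habc m₁ (-r)
  obtain ⟨n₁, hn₁a, hn₁b⟩ := crt2 hab (-s) (-c)
  obtain ⟨nu, hnab, hnc⟩ := crt2 habc n₁ 0
  -- congruences of (lam, mu, nu) modulo a, b, c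
  have hla : a ∣ lam := by
    have h1 : a ∣ lam - l₁ := dvd_trans (Dvd.intro b rfl) hlab
    have h2 : a ∣ l₁ := by simpa using hl₁a
    simpa using dvd_add h1 h2
  have hlb : b ∣ lam - t := by
    have h1 : b ∣ lam - l₁ := dvd_trans (Dvd.intro_left a rfl) hlab
    exact by simpa using dvd_add h1 hl₁b
  have hma : a ∣ mu - b := by
    have h1 : a ∣ mu - m₁ := dvd_trans (Dvd.intro b rfl) hmab
    exact by simpa using dvd_add h1 hm₁a
  have hmb : b ∣ mu := by
    have h1 : b ∣ mu - m₁ := dvd_trans (Dvd.intro_left a rfl) hmab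
    have h2 : b ∣ m₁ := by simpa using hm₁b
    simpa using dvd_add h1 h2
  have hna : a ∣ nu + s := by
    have h1 : a ∣ nu - n₁ := dvd_trans (Dvd.intro b rfl) hnab
    have h2 : a ∣ n₁ + s := by simpa using hn₁a
    have := dvd_add h1 h2
    rwa [show nu - n₁ + (n₁ + s) = nu + s by ring] at this
  have hnb : b ∣ nu + c := by
    have h1 : b ∣ nu - n₁ := dvd_trans (Dvd.intro_left a rfl) hnab
    have h2 : b ∣ n₁ + c := by simpa using hn₁b
    have := dvd_add h1 h2
    rwa [show nu - n₁ + (n₁ + c) = nu + c by ring] at this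
  have hnc' : c ∣ nu := by simpa using hnc
  -- any solution of the linear congruence is a zero of q mod N
  have main_dvd : ∀ x y z : ℤ, N ∣ lam * x + mu * y + nu * z →
      N ∣ a * x ^ 2 + b * y ^ 2 + c * z ^ 2 := by
    intro x y z hxyz
    set q : ℤ := a * x ^ 2 + b * y ^ 2 + c * z ^ 2 with hq
    have hdivc : c ∣ q := by
      have h1 : c ∣ lam * x + mu * y + nu * z :=
        dvd_trans (by exact ⟨-(a * b), by rw [hNdef]; ring⟩) hxyz
      have h2 : c ∣ a * x - r * y := by
        have e : a * x - r * y = (lam * x + mu * y + nu * z)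
            - ((lam - a) * x + (mu + r) * y + nu * z) := by ring
        rw [e]
        exact dvd_sub h1 (dvd_add (dvd_add (hlc.mul_right x) ((by rwa [sub_neg_eq_add] at hmc : c ∣ mu + r).mul_right y))
          (hnc'.mul_right z))
      have h3 : c ∣ a * (a * x ^ 2 + b * y ^ 2) := by
        have e : a * (a * x ^ 2 + b * y ^ 2) =
            (a * x - r * y) * (a * x + r * y) + (r ^ 2 + a * b) * y ^ 2 := by ring
        rw [e]
        exact dvd_add (h2.mul_right _) (hr.mul_right _)
      have h4 : c ∣ a * x ^ 2 + b * y ^ 2 := (hac.symm.dvd_of_dvd_mul_left h3)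
      have e : q = (a * x ^ 2 + b * y ^ 2) + c * z ^ 2 := by rw [hq]
      rw [e]
      exact dvd_add h4 (Dvd.intro _ rfl)
    have hdiva : a ∣ q := by
      have h1 : a ∣ lam * x + mu * y + nu * z :=
        dvd_trans (by exact ⟨b * c', by rw [hNdef]; ring⟩) hxyz
      have h2 : a ∣ b * y - s * z := by
        have e : b * y - s * z = (lam * x + mu * y + nu * z)
            - (lam * x + (mu - b) * y + (nu + s) * z) := by ring
        rw [e]
        exact dvd_sub h1 (dvd_add (dvd_add (hla.mul_right x) (hma.mul_right y))
          (hna.mul_right z))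
      have h3 : a ∣ b * (b * y ^ 2 + c * z ^ 2) := by
        have e : b * (b * y ^ 2 + c * z ^ 2) =
            (b * y - s * z) * (b * y + s * z) + (s ^ 2 + b * c) * z ^ 2 := by ring
        rw [e]
        exact dvd_add (h2.mul_right _) (hs.mul_right _)
      have h4 : a ∣ b * y ^ 2 + c * z ^ 2 := (hab.dvd_of_dvd_mul_left h3)
      have e : q = a * x ^ 2 + (b * y ^ 2 + c * z ^ 2) := by rw [hq]; ring
      rw [e]
      exact dvd_add (Dvd.intro _ rfl) h4
    have hdivb : b ∣ q := by
      have h1 : b ∣ lam * x + mu * y + nu * z :=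
        dvd_trans (by exact ⟨a * c', by rw [hNdef]; ring⟩) hxyz
      have h2 : b ∣ t * x - c * z := by
        have e : t * x - c * z = (lam * x + mu * y + nu * z)
            - ((lam - t) * x + mu * y + (nu + c) * z) := by ring
        rw [e]
        exact dvd_sub h1 (dvd_add (dvd_add (hlb.mul_right x) (hmb.mul_right y))
          (hnb.mul_right z))
      have h3 : b ∣ c * (a * x ^ 2 + c * z ^ 2) := by
        have e : c * (a * x ^ 2 + c * z ^ 2) =
            -((t * x - c * z) * (t * x + c * z)) + (t ^ 2 + a * c) * x ^ 2 := by ring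
        rw [e]
        exact dvd_add ((h2.mul_right _).neg_right) (ht.mul_right _)
      have h4 : b ∣ a * x ^ 2 + c * z ^ 2 := (hbc.dvd_of_dvd_mul_left h3)
      have e : q = (a * x ^ 2 + c * z ^ 2) + b * y ^ 2 := by rw [hq]; ring
      rw [e]
      exact dvd_add h4 (Dvd.intro _ rfl)
    -- combine
    have hab' : a * b ∣ q := hab.mul_dvd hdiva hdivb
    have hdivc' : c' ∣ q := (neg_dvd.mpr hdivc)
    have habc' : IsCoprime (a * b) c' := habc.neg_right
    rw [hNdef]
    exact habc'.mul_dvd hab' hdivc'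
  -- choose box sizes
  set X : ℕ := Nat.sqrt (b * c').toNat with hX
  set Y : ℕ := Nat.sqrt (a * c').toNat with hY
  set Z : ℕ := Nat.sqrt (a * b).toNat with hZ
  have hbc'pos : 0 < b * c' := by positivity
  have hac'pos : 0 < a * c' := by positivity
  have habpos : 0 < a * b := by positivity
  have hX1 : (X : ℤ) ^ 2 ≤ b * c' := by
    have := Nat.sqrt_le' (b * c').toNat
    have h2 : ((Nat.sqrt (b * c').toNat : ℤ)) ^ 2 ≤ ((b * c').toNat : ℤ) := by exact_mod_cast this
    rwa [Int.toNat_of_nonneg hbc'pos.le] at h2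
  have hY1 : (Y : ℤ) ^ 2 ≤ a * c' := by
    have := Nat.sqrt_le' (a * c').toNat
    have h2 : ((Nat.sqrt (a * c').toNat : ℤ)) ^ 2 ≤ ((a * c').toNat : ℤ) := by exact_mod_cast this
    rwa [Int.toNat_of_nonneg hac'pos.le] at h2
  have hZ1 : (Z : ℤ) ^ 2 ≤ a * b := by
    have := Nat.sqrt_le' (a * b).toNat
    have h2 : ((Nat.sqrt (a * b).toNat : ℤ)) ^ 2 ≤ ((a * b).toNat : ℤ) := by exact_mod_cast this
    rwa [Int.toNat_of_nonneg habpos.le] at h2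
  have hX2 : b * c' < ((X : ℤ) + 1) ^ 2 := by
    have := Nat.lt_succ_sqrt' (b * c').toNat
    have h2 : ((b * c').toNat : ℤ) < ((Nat.sqrt (b * c').toNat : ℤ) + 1) ^ 2 := by
      exact_mod_cast this
    rwa [Int.toNat_of_nonneg hbc'pos.le] at h2
  have hY2 : a * c' < ((Y : ℤ) + 1) ^ 2 := by
    have := Nat.lt_succ_sqrt' (a * c').toNat
    have h2 : ((a * c').toNat : ℤ) < ((Nat.sqrt (a * c').toNat : ℤ) + 1) ^ 2 := by
      exact_mod_cast this
    rwa [Int.toNat_of_nonneg hac'pos.le] at h2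
  have hZ2 : a * b < ((Z : ℤ) + 1) ^ 2 := by
    have := Nat.lt_succ_sqrt' (a * b).toNat
    have h2 : ((a * b).toNat : ℤ) < ((Nat.sqrt (a * b).toNat : ℤ) + 1) ^ 2 := by
      exact_mod_cast this
    rwa [Int.toNat_of_nonneg habpos.le] at h2
  -- the size condition for the box lemma
  have hsize : N < ((X : ℤ) + 1) * ((Y : ℤ) + 1) * ((Z : ℤ) + 1) := by
    by_contra hle
    push_neg at hle
    have hP1 : (0 : ℤ) < ((X : ℤ) + 1) := by positivity
    have hP2 : (0 : ℤ) < ((Y : ℤ) + 1) := by positivity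
    have hP3 : (0 : ℤ) < ((Z : ℤ) + 1) := by positivity
    have hsq : N ^ 2 < (((X : ℤ) + 1) * ((Y : ℤ) + 1) * ((Z : ℤ) + 1)) ^ 2 := by
      have e : N ^ 2 = (b * c') * ((a * c') * (a * b)) := by rw [hNdef]; ring
      rw [e]
      calc (b * c') * ((a * c') * (a * b))
          < ((X : ℤ) + 1) ^ 2 * (((Y : ℤ) + 1) ^ 2 * ((Z : ℤ) + 1) ^ 2) := by
            apply mul_lt_mul' hX2.le
            · apply mul_lt_mul' hY2.le hZ2 habpos.le (by positivity)
            · positivity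
            · positivity
        _ = (((X : ℤ) + 1) * ((Y : ℤ) + 1) * ((Z : ℤ) + 1)) ^ 2 := by ring
    have : (((X : ℤ) + 1) * ((Y : ℤ) + 1) * ((Z : ℤ) + 1)) ^ 2 ≤ N ^ 2 := by
      apply pow_le_pow_left₀ (by positivity) hle
    omega
  obtain ⟨x, y, z, hnz, hdvd, hxb, hyb, hzb⟩ := box_lemma N hN lam mu nu X Y Z hsize
  have hx2 : x ^ 2 ≤ b * c' := by
    calc x ^ 2 = |x| ^ 2 := (sq_abs x).symm
      _ ≤ (X : ℤ) ^ 2 := by apply pow_le_pow_left₀ (abs_nonneg x) hxb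
      _ ≤ b * c' := hX1
  have hy2 : y ^ 2 ≤ a * c' := by
    calc y ^ 2 = |y| ^ 2 := (sq_abs y).symm
      _ ≤ (Y : ℤ) ^ 2 := by apply pow_le_pow_left₀ (abs_nonneg y) hyb
      _ ≤ a * c' := hY1
  have hz2 : z ^ 2 ≤ a * b := by
    calc z ^ 2 = |z| ^ 2 := (sq_abs z).symm
      _ ≤ (Z : ℤ) ^ 2 := by apply pow_le_pow_left₀ (abs_nonneg z) hzb
      _ ≤ a * b := hZ1
  have hq : N ∣ a * x ^ 2 + b * y ^ 2 + c * z ^ 2 := main_dvd x y z hdvd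
  set q : ℤ := a * x ^ 2 + b * y ^ 2 + c * z ^ 2 with hqdef
  obtain ⟨k, hk⟩ := hq
  -- bounds on q
  have hax : a * x ^ 2 ≤ N := by
    rw [hNdef, mul_assoc]
    exact mul_le_mul_of_nonneg_left hx2 ha.le
  have hby : b * y ^ 2 ≤ N := by
    have : b * y ^ 2 ≤ b * (a * c') := mul_le_mul_of_nonneg_left hy2 hb.le
    calc b * y ^ 2 ≤ b * (a * c') := this
      _ = N := by rw [hNdef]; ring
  have hcz : -N ≤ c * z ^ 2 := by
    have h1 : c * (a * b) ≤ c * z ^ 2 := by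
      apply mul_le_mul_of_nonpos_left hz2 hc.le
    calc -N = c * (a * b) := by rw [hNdef, hc'def]; ring
      _ ≤ c * z ^ 2 := h1
  have hxsq : 0 ≤ a * x ^ 2 := by positivity
  have hysq : 0 ≤ b * y ^ 2 := by positivity
  have hzsq : c * z ^ 2 ≤ 0 := mul_nonpos_of_nonpos_of_nonneg hc.le (sq_nonneg z)
  have hq_lo : -N ≤ q := by rw [hqdef]; linarith
  have hq_hi : q ≤ 2 * N := by rw [hqdef]; linarith
  have hklo : -1 ≤ k := by
    have h1 : N * (-1) ≤ N * k := by rw [← hk]; linarith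
    exact le_of_mul_le_mul_left h1 hN
  have hkhi : k ≤ 2 := by
    have h1 : N * k ≤ N * 2 := by rw [← hk]; linarith
    exact le_of_mul_le_mul_left h1 hN
  interval_cases k
  -- k = -1 : forces x = y = 0, z² = ab, so a = b = 1; then sum of two squares
  · have hq1 : q = -N := by rw [hk]; ring
    have hqe : a * x ^ 2 + b * y ^ 2 + c * z ^ 2 = -N := by rw [← hqdef]; exact hq1
    have hax0 : a * x ^ 2 = 0 := by linarith
    have hby0 : b * y ^ 2 = 0 := by linarith
    have hcz0 : c * z ^ 2 = -N := by linarith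
    have hx0 : x = 0 := by
      rcases mul_eq_zero.mp hax0 with h | h
      · exact absurd h ha.ne'
      · exact pow_eq_zero_iff two_ne_zero |>.mp h
    have hy0 : y = 0 := by
      rcases mul_eq_zero.mp hby0 with h | h
      · exact absurd h hb.ne'
      · exact pow_eq_zero_iff two_ne_zero |>.mp h
    have hzab : z ^ 2 = a * b := by
      have h1 : c * z ^ 2 = c * (a * b) := by rw [hcz0, hNdef, hc'def]; ring
      exact mul_left_cancel₀ hc.ne h1
    have hzne : z ≠ 0 := by
      rintro rfl
      exact hnz ⟨hx0, hy0, rfl⟩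
    have hsab : Squarefree (a * b) :=
      squarefree_mul_iff.mpr ⟨hab.isRelPrime, hsa, hsb⟩
    have hzu : IsUnit z := hsab z (by rw [← hzab]; exact ⟨1, by ring⟩)
    have hz1 : z ^ 2 = 1 := by
      rcases Int.isUnit_iff.mp hzu with rfl | rfl <;> norm_num
    have hab1 : a * b = 1 := by omega
    have ha1 : a = 1 := by
      have := Int.eq_one_of_mul_eq_one_right ha.le hab1
      omega
    have hb1 : b = 1 := by rw [ha1] at hab1; omega
    -- c' is a sum of two squares
    have hcnat : Squarefree c.natAbs := Int.squarefree_natAbs.mpr hsc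
    have hsq : IsSquare (-1 : ZMod c.natAbs) := by
      refine (ZMod.isSquare_neg_one_iff_forall_mem_primeFactors_mod_four_ne_three hcnat).mpr
        fun p hpm => ?_
      have hp := Nat.prime_of_mem_primeFactors hpm
      have hpdvd := Nat.dvd_of_mem_primeFactors hpm
      haveI : Fact p.Prime := ⟨hp⟩
      have hpc : (p : ℤ) ∣ c := Int.dvd_natAbs.mp (Int.natCast_dvd_natCast.mpr hpdvd)
      have hpr : (p : ℤ) ∣ r ^ 2 + 1 := by
        have : (p : ℤ) ∣ r ^ 2 + a * b := dvd_trans hpc hr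
        rwa [hab1] at this
      have : IsSquare (-1 : ZMod p) := by
        refine ⟨-(r : ZMod p), ?_⟩
        have h0 : ((r ^ 2 + 1 : ℤ) : ZMod p) = 0 := by
          rw [ZMod.intCast_zmod_eq_zero_iff_dvd]
          exact_mod_cast hpr
        push_cast at h0
        linear_combination -h0
      exact ZMod.exists_sq_eq_neg_one_iff.mp this
    obtain ⟨u, v, huv⟩ := Nat.eq_sq_add_sq_of_isSquare_mod_neg_one hsq
    have huv' : ((u : ℤ)) ^ 2 + (v : ℤ) ^ 2 = c' := by
      have : (c.natAbs : ℤ) = c' := by rw [hc'def]; omega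
      rw [← this]
      exact_mod_cast huv.symm
    refine ⟨(u : ℚ), (v : ℚ), 1, ne3_iff.mpr (Or.inr (Or.inr one_ne_zero)), ?_⟩
    rw [ha1, hb1]
    push_cast
    have : ((u : ℚ)) ^ 2 + (v : ℚ) ^ 2 = (c' : ℚ) := by exact_mod_cast huv'
    rw [hc'def] at this
    push_cast at this
    linarith [this]
  -- k = 0 : direct integer solution
  · have hq0 : q = 0 := by rw [hk]; ring
    refine ⟨(x : ℚ), (y : ℚ), (z : ℚ), ne3_iff.mpr ?_, ?_⟩
    · rcases not_and_or.mp hnz with h | h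
      · exact Or.inl (Int.cast_ne_zero.mpr h)
      · rcases not_and_or.mp h with h | h
        · exact Or.inr (Or.inl (Int.cast_ne_zero.mpr h))
        · exact Or.inr (Or.inr (Int.cast_ne_zero.mpr h))
    · exact_mod_cast congrArg (fun t : ℤ => (t : ℚ)) hq0
  -- k = 1 : use the composition identity
  · have hq1 : q + a * b * c = 0 := by
      rw [hk, hNdef, hc'def]; ring
    refine ⟨(x * z + b * y : ℤ), (y * z - a * x : ℤ), (z ^ 2 + a * b : ℤ),
      ne3_iff.mpr (Or.inr (Or.inr ?_)), ?_⟩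
    · have : (0 : ℤ) < z ^ 2 + a * b := by positivity
      exact_mod_cast this.ne'
    · have hid : (a : ℚ) * ((x : ℚ) * z + b * y) ^ 2 + (b : ℚ) * ((y : ℚ) * z - a * x) ^ 2
          + (c : ℚ) * ((z : ℚ) ^ 2 + a * b) ^ 2
          = ((z : ℚ) ^ 2 + a * b) * ((a : ℚ) * x ^ 2 + b * y ^ 2 + c * z ^ 2 + a * b * c) := by
        ring
      have hq1' : (a : ℚ) * x ^ 2 + b * y ^ 2 + c * z ^ 2 + a * b * c = 0 := by
        exact_mod_cast congrArg (fun t : ℤ => (t : ℚ)) hq1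
      push_cast
      rw [hid, hq1', mul_zero]
  -- k = 2 : forces z = 0, a x² = N, so x² = b c'
  · have hq2 : q = 2 * N := by rw [hk]; ring
    have hqe : a * x ^ 2 + b * y ^ 2 + c * z ^ 2 = 2 * N := by rw [← hqdef]; exact hq2
    have hcz0 : c * z ^ 2 = 0 := by linarith
    have hz0 : z = 0 := by
      rcases mul_eq_zero.mp hcz0 with h | h
      · exact absurd h hc.ne
      · exact pow_eq_zero_iff two_ne_zero |>.mp h
    have haxN : a * x ^ 2 = N := by linarith
    have hxbc : x ^ 2 = b * c' := by
      have : a * x ^ 2 = a * (b * c') := by rw [haxN, hNdef]; ring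
      exact mul_left_cancel₀ ha.ne' this
    refine ⟨0, (x : ℚ), (b : ℚ), ne3_iff.mpr (Or.inr (Or.inr ?_)), ?_⟩
    · exact Int.cast_ne_zero.mpr hb.ne'
    · have : (b : ℚ) * (x : ℚ) ^ 2 + (c : ℚ) * (b : ℚ) ^ 2 = 0 := by
        have h1 : (x : ℚ) ^ 2 = (b : ℚ) * (c' : ℚ) := by exact_mod_cast hxbc
        rw [h1, hc'def]
        push_cast
        ring
      calc (a : ℚ) * 0 ^ 2 + (b : ℚ) * (x : ℚ) ^ 2 + (c : ℚ) * (b : ℚ) ^ 2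
          = (b : ℚ) * (x : ℚ) ^ 2 + (c : ℚ) * (b : ℚ) ^ 2 := by ring
        _ = 0 := this

/-- a real zero forbids all-positive coefficients. -/
lemma real_sign {a b c : ℤ} (ha : 0 < a) (hb : 0 < b) (hc : 0 < c)
    (h : HMzero ℝ a b c) : False := by
  obtain ⟨x, y, z, hne, heq⟩ := h
  rw [ne3_iff] at hne
  have ha' : (0 : ℝ) < a := by exact_mod_cast ha
  have hb' : (0 : ℝ) < b := by exact_mod_cast hb
  have hc' : (0 : ℝ) < c := by exact_mod_cast hc
  rcases hne with h1 | h1 | h1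
  · nlinarith [sq_nonneg x, sq_nonneg y, sq_nonneg z, sq_pos_of_ne_zero h1]
  · nlinarith [sq_nonneg x, sq_nonneg y, sq_nonneg z, sq_pos_of_ne_zero h1]
  · nlinarith [sq_nonneg x, sq_nonneg y, sq_nonneg z, sq_pos_of_ne_zero h1]

lemma sqfree_neg {a : ℤ} (h : Squarefree a) : Squarefree (-a) :=
  fun x hx => h x (dvd_neg.mp hx)

/-- the normalized positive case: derive the quadratic-residue conditions and conclude. -/
lemma pos_case (a b c : ℤ) (ha : 0 < a) (hb : 0 < b) (hc : c < 0)
    (hsa : Squarefree a) (hsb : Squarefree b) (hsc : Squarefree c)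
    (hab : IsCoprime a b) (hac : IsCoprime a c) (hbc : IsCoprime b c)
    (hpad : ∀ (p : ℕ) [Fact p.Prime], HMzero ℚ_[p] a b c) :
    HMzero ℚ a b c := by
  have hane : a ≠ 0 := ha.ne'
  have hbne : b ≠ 0 := hb.ne'
  have hcne : c ≠ 0 := hc.ne
  -- helper for non-divisibility from coprimality
  have not_dvd : ∀ (u v : ℤ) (p : ℕ), p.Prime → IsCoprime u v → (p : ℤ) ∣ v →
      ¬(p : ℤ) ∣ u := by
    intro u v p hp hcov hpv hpu
    have := hcov.isUnit_of_dvd' hpu hpv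
    rw [Int.isUnit_iff_natAbs_eq] at this
    simp only [Int.natAbs_natCast] at this
    exact hp.one_lt.ne' this
  have not_sq_dvd : ∀ (u : ℤ) (p : ℕ), p.Prime → Squarefree u → ¬(p : ℤ) ∣ u ^ 2 / 1 ∨ True :=
    fun _ _ _ _ => Or.inr trivial
  have hQc : ∃ r : ℤ, c ∣ r ^ 2 + a * b := by
    have hside : ∀ p : ℕ, p.Prime → p ∣ c.natAbs → ∃ r : ℤ, (p : ℤ) ∣ r ^ 2 + a * b := by
      intro p hp hpdvd
      haveI : Fact p.Prime := ⟨hp⟩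
      have hpc : (p : ℤ) ∣ c := Int.dvd_natAbs.mp (Int.natCast_dvd_natCast.mpr hpdvd)
      have hsqd : ¬(p : ℤ) ^ 2 ∣ c := by
        intro hd
        have : IsUnit (p : ℤ) := hsc p (by rw [← sq]; exact hd)
        rw [Int.isUnit_iff_natAbs_eq] at this
        simp at this
        exact hp.one_lt.ne' this
      exact padic_square a b c p (not_dvd a c p hp hac hpc) (not_dvd b c p hp hbc hpc)
        hpc hsqd (hpad p)
    obtain ⟨r, hrd⟩ := crt_sq c.natAbs (Int.squarefree_natAbs.mpr hsc) (a * b) hside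
    exact ⟨r, Int.natAbs_dvd.mp hrd⟩
  have hQa : ∃ r : ℤ, a ∣ r ^ 2 + b * c := by
    have hside : ∀ p : ℕ, p.Prime → p ∣ a.natAbs → ∃ r : ℤ, (p : ℤ) ∣ r ^ 2 + b * c := by
      intro p hp hpdvd
      haveI : Fact p.Prime := ⟨hp⟩
      have hpa : (p : ℤ) ∣ a := Int.dvd_natAbs.mp (Int.natCast_dvd_natCast.mpr hpdvd)
      have hsqd : ¬(p : ℤ) ^ 2 ∣ a := by
        intro hd
        have : IsUnit (p : ℤ) := hsa p (by rw [← sq]; exact hd)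
        rw [Int.isUnit_iff_natAbs_eq] at this
        simp at this
        exact hp.one_lt.ne' this
      exact padic_square b c a p (not_dvd b a p hp hab.symm hpa)
        (not_dvd c a p hp hac.symm hpa) hpa hsqd ((hpad p).rot)
    obtain ⟨r, hrd⟩ := crt_sq a.natAbs (Int.squarefree_natAbs.mpr hsa) (b * c) hside
    exact ⟨r, Int.natAbs_dvd.mp hrd⟩
  have hQb : ∃ r : ℤ, b ∣ r ^ 2 + a * c := by
    have hside : ∀ p : ℕ, p.Prime → p ∣ b.natAbs → ∃ r : ℤ, (p : ℤ) ∣ r ^ 2 + a * c := by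
      intro p hp hpdvd
      haveI : Fact p.Prime := ⟨hp⟩
      have hpb : (p : ℤ) ∣ b := Int.dvd_natAbs.mp (Int.natCast_dvd_natCast.mpr hpdvd)
      have hsqd : ¬(p : ℤ) ^ 2 ∣ b := by
        intro hd
        have : IsUnit (p : ℤ) := hsb p (by rw [← sq]; exact hd)
        rw [Int.isUnit_iff_natAbs_eq] at this
        simp at this
        exact hp.one_lt.ne' this
      obtain ⟨r, hr⟩ := padic_square c a b p (not_dvd c b p hp hbc.symm hpb)
        (not_dvd a b p hp hab hpb) hpb hsqd ((hpad p).rot.rot)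
      exact ⟨r, by rwa [mul_comm c a] at hr⟩
    obtain ⟨r, hrd⟩ := crt_sq b.natAbs (Int.squarefree_natAbs.mpr hsb) (a * c) hside
    exact ⟨r, Int.natAbs_dvd.mp hrd⟩
  exact legendre_key a b c ha hb hc hsa hsb hsc hab hac hbc hQa hQb hQc

/-- normalized case with arbitrary signs. -/
lemma norm_case (a b c : ℤ) (ha : a ≠ 0) (hb : b ≠ 0) (hc : c ≠ 0)
    (hsa : Squarefree a) (hsb : Squarefree b) (hsc : Squarefree c)
    (hab : IsCoprime a b) (hac : IsCoprime a c) (hbc : IsCoprime b c)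
    (hre : HMzero ℝ a b c)
    (hpad : ∀ (p : ℕ) [Fact p.Prime], HMzero ℚ_[p] a b c) :
    HMzero ℚ a b c := by
  rcases ha.lt_or_gt with ha' | ha' <;> rcases hb.lt_or_gt with hb' | hb' <;>
    rcases hc.lt_or_gt with hc' | hc'
  -- (-,-,-) : impossible
  · exact absurd (hre.neg) (fun h => real_sign (by omega) (by omega) (by omega) h)
  -- (-,-,+) : negate to (+,+,-)
  · have h := pos_case (-a) (-b) (-c) (by omega) (by omega) (by omega)
      (sqfree_neg hsa) (sqfree_neg hsb) (sqfree_neg hsc)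
      (hab.neg_left.neg_right) (hac.neg_left.neg_right) (hbc.neg_left.neg_right)
      (fun p _ => (hpad p).neg)
    have := h.neg
    simpa using this
  -- (-,+,-) : negate to (+,-,+) then swap23 to (+,+,-)
  · have h := pos_case (-a) (-c) (-b) (by omega) (by omega) (by omega)
      (sqfree_neg hsa) (sqfree_neg hsc) (sqfree_neg hsb)
      (hac.neg_left.neg_right) (hab.neg_left.neg_right) (hbc.symm.neg_left.neg_right)
      (fun p _ => (hpad p).neg.swap23)
    have := h.swap23.neg
    simpa using this
  -- (-,+,+) : rotate to (b,c,a) = (+,+,-)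
  · have h := pos_case b c a hb' hc' ha' hsb hsc hsa hbc hab.symm hac.symm
      (fun p _ => (hpad p).rot)
    exact h.rot.rot
  -- (+,-,-) : rotate to (b,c,a) = (-,-,+) ... instead negate: (-,+,+) then rotate
  · have h := pos_case (-b) (-c) (-a) (by omega) (by omega) (by omega)
      (sqfree_neg hsb) (sqfree_neg hsc) (sqfree_neg hsa)
      (hbc.neg_left.neg_right) (hab.symm.neg_left.neg_right) (hac.symm.neg_left.neg_right)
      (fun p _ => (hpad p).neg.rot)
    have := h.rot.rot.neg
    simpa using this
  -- (+,-,+) : swap23 to (+,+,-)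
  · have h := pos_case a c b ha' hc' hb' hsa hsc hsb hac hab hbc.symm
      (fun p _ => (hpad p).swap23)
    exact h.swap23
  -- (+,+,-) : direct
  · exact pos_case a b c ha' hb' hc' hsa hsb hsc hab hac hbc hpad
  -- (+,+,+) : impossible
  · exact absurd hre (fun h => real_sign ha' hb' hc' h)

lemma int_main : ∀ n : ℕ, ∀ a b c : ℤ, (a * b * c).natAbs ≤ n → a ≠ 0 → b ≠ 0 → c ≠ 0 →
    HMzero ℝ a b c → (∀ (p : ℕ) [Fact p.Prime], HMzero ℚ_[p] a b c) → HMzero ℚ a b c := by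
  intro n
  induction n with
  | zero =>
    intro a b c hm ha hb hc _ _
    exfalso
    have h0 : a * b * c ≠ 0 := mul_ne_zero (mul_ne_zero ha hb) hc
    have := Int.natAbs_eq_zero.mp (Nat.le_zero.mp hm)
    exact h0 this
  | succ n ih =>
    intro a b c hm ha hb hc hre hpad
    by_cases hsa : Squarefree a
    case neg =>
      rw [Squarefree] at hsa
      push_neg at hsa
      obtain ⟨e, he2, heu⟩ := hsa
      have he0 : e ≠ 0 := by rintro rfl; exact ha (zero_dvd_iff.mp (by simpa using he2))
      obtain ⟨a₁, ha₁⟩ := he2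
      have ha₁' : a = e ^ 2 * a₁ := by rw [ha₁]; ring
      have ha₁0 : a₁ ≠ 0 := by rintro rfl; simp at ha₁; exact ha (by rw [ha₁']; ring)
      have hmeas : (a₁ * b * c).natAbs ≤ n := by
        have hsplit : a * b * c = e ^ 2 * (a₁ * b * c) := by rw [ha₁']; ring
        have h1 : (a * b * c).natAbs = e.natAbs ^ 2 * (a₁ * b * c).natAbs := by
          rw [hsplit, Int.natAbs_mul, Int.natAbs_pow]
        have he2' : 2 ≤ e.natAbs := by
          have hne1 : e.natAbs ≠ 1 := fun h => heu (Int.isUnit_iff_natAbs_eq.mpr h)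
          have hne0 : e.natAbs ≠ 0 := fun h => he0 (Int.natAbs_eq_zero.mp h)
          omega
        have hm1 : 1 ≤ (a₁ * b * c).natAbs := by
          have : a₁ * b * c ≠ 0 := mul_ne_zero (mul_ne_zero ha₁0 hb) hc
          have := Int.natAbs_pos.mpr this
          omega
        have h4 : 4 * (a₁ * b * c).natAbs ≤ e.natAbs ^ 2 * (a₁ * b * c).natAbs :=
          Nat.mul_le_mul_right _ (by nlinarith)
        omega
      have hre' : HMzero ℝ a₁ b c := HMzero.unsquare he0 (by rw [← ha₁']; exact hre)
      have hpad' : ∀ (p : ℕ) [Fact p.Prime], HMzero ℚ_[p] a₁ b c := fun p _ =>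
        HMzero.unsquare he0 (by rw [← ha₁']; exact hpad p)
      have := (ih a₁ b c hmeas ha₁0 hb hc hre' hpad').square e he0
      rw [← ha₁'] at this
      exact this
    by_cases hsb : Squarefree b
    case neg =>
      rw [Squarefree] at hsb
      push_neg at hsb
      obtain ⟨e, he2, heu⟩ := hsb
      have he0 : e ≠ 0 := by rintro rfl; exact hb (zero_dvd_iff.mp (by simpa using he2))
      obtain ⟨b₁, hb₁⟩ := he2
      have hb₁' : b = e ^ 2 * b₁ := by rw [hb₁]; ring
      have hb₁0 : b₁ ≠ 0 := by rintro rfl; simp at hb₁; exact hb (by rw [hb₁']; ring)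
      have hmeas : (b₁ * a * c).natAbs ≤ n := by
        have hsplit : a * b * c = e ^ 2 * (b₁ * a * c) := by rw [hb₁']; ring
        have h1 : (a * b * c).natAbs = e.natAbs ^ 2 * (b₁ * a * c).natAbs := by
          rw [hsplit, Int.natAbs_mul, Int.natAbs_pow]
        have he2' : 2 ≤ e.natAbs := by
          have hne1 : e.natAbs ≠ 1 := fun h => heu (Int.isUnit_iff_natAbs_eq.mpr h)
          have hne0 : e.natAbs ≠ 0 := fun h => he0 (Int.natAbs_eq_zero.mp h)
          omega
        have hm1 : 1 ≤ (b₁ * a * c).natAbs := by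
          have : b₁ * a * c ≠ 0 := mul_ne_zero (mul_ne_zero hb₁0 ha) hc
          have := Int.natAbs_pos.mpr this
          omega
        have h4 : 4 * (b₁ * a * c).natAbs ≤ e.natAbs ^ 2 * (b₁ * a * c).natAbs :=
          Nat.mul_le_mul_right _ (by nlinarith)
        omega
      have hre' : HMzero ℝ b₁ a c :=
        HMzero.unsquare he0 (by rw [← hb₁']; exact hre.swap12)
      have hpad' : ∀ (p : ℕ) [Fact p.Prime], HMzero ℚ_[p] b₁ a c := fun p _ =>
        HMzero.unsquare he0 (by rw [← hb₁']; exact (hpad p).swap12)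
      have := (ih b₁ a c hmeas hb₁0 ha hc hre' hpad').square e he0
      rw [← hb₁'] at this
      exact this.swap12
    by_cases hsc : Squarefree c
    case neg =>
      rw [Squarefree] at hsc
      push_neg at hsc
      obtain ⟨e, he2, heu⟩ := hsc
      have he0 : e ≠ 0 := by rintro rfl; exact hc (zero_dvd_iff.mp (by simpa using he2))
      obtain ⟨c₁, hc₁⟩ := he2
      have hc₁' : c = e ^ 2 * c₁ := by rw [hc₁]; ring
      have hc₁0 : c₁ ≠ 0 := by rintro rfl; simp at hc₁; exact hc (by rw [hc₁']; ring)
      have hmeas : (c₁ * a * b).natAbs ≤ n := by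
        have hsplit : a * b * c = e ^ 2 * (c₁ * a * b) := by rw [hc₁']; ring
        have h1 : (a * b * c).natAbs = e.natAbs ^ 2 * (c₁ * a * b).natAbs := by
          rw [hsplit, Int.natAbs_mul, Int.natAbs_pow]
        have he2' : 2 ≤ e.natAbs := by
          have hne1 : e.natAbs ≠ 1 := fun h => heu (Int.isUnit_iff_natAbs_eq.mpr h)
          have hne0 : e.natAbs ≠ 0 := fun h => he0 (Int.natAbs_eq_zero.mp h)
          omega
        have hm1 : 1 ≤ (c₁ * a * b).natAbs := by
          have : c₁ * a * b ≠ 0 := mul_ne_zero (mul_ne_zero hc₁0 ha) hb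
          have := Int.natAbs_pos.mpr this
          omega
        have h4 : 4 * (c₁ * a * b).natAbs ≤ e.natAbs ^ 2 * (c₁ * a * b).natAbs :=
          Nat.mul_le_mul_right _ (by nlinarith)
        omega
      have hre' : HMzero ℝ c₁ a b :=
        HMzero.unsquare he0 (by rw [← hc₁']; exact hre.rot.rot)
      have hpad' : ∀ (p : ℕ) [Fact p.Prime], HMzero ℚ_[p] c₁ a b := fun p _ =>
        HMzero.unsquare he0 (by rw [← hc₁']; exact (hpad p).rot.rot)
      have := (ih c₁ a b hmeas hc₁0 ha hb hre' hpad').square e he0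
      rw [← hc₁'] at this
      exact this.rot
    by_cases hgab : Int.gcd a b = 1
    case neg =>
      obtain ⟨p, hp, hpg⟩ := Nat.exists_prime_and_dvd hgab
      have hpa : (p : ℤ) ∣ a := (Int.natCast_dvd_natCast.mpr hpg).trans (Int.gcd_dvd_left _ _)
      have hpb : (p : ℤ) ∣ b := (Int.natCast_dvd_natCast.mpr hpg).trans (Int.gcd_dvd_right _ _)
      obtain ⟨a', ha'⟩ := hpa
      obtain ⟨b', hb'⟩ := hpb
      have hp0 : (p : ℤ) ≠ 0 := by exact_mod_cast hp.ne_zero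
      have ha'0 : a' ≠ 0 := by rintro rfl; exact ha (by rw [ha', mul_zero])
      have hb'0 : b' ≠ 0 := by rintro rfl; exact hb (by rw [hb', mul_zero])
      have hpc0 : (p : ℤ) * c ≠ 0 := mul_ne_zero hp0 hc
      have hmeas : (a' * b' * ((p : ℤ) * c)).natAbs ≤ n := by
        have hsplit : a * b * c = (p : ℤ) * (a' * b' * ((p : ℤ) * c)) := by
          rw [ha', hb']; ring
        have h1 : (a * b * c).natAbs = p * (a' * b' * ((p : ℤ) * c)).natAbs := by
          rw [hsplit, Int.natAbs_mul, Int.natAbs_natCast]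
        have hm1 : 1 ≤ (a' * b' * ((p : ℤ) * c)).natAbs :=
          Int.natAbs_pos.mpr (mul_ne_zero (mul_ne_zero ha'0 hb'0) hpc0)
        have hp2 : 2 ≤ p := hp.two_le
        have h2 : 2 * (a' * b' * ((p : ℤ) * c)).natAbs ≤
            p * (a' * b' * ((p : ℤ) * c)).natAbs := Nat.mul_le_mul_right _ hp2
        omega
      have hre' : HMzero ℝ a' b' ((p : ℤ) * c) :=
        HMzero.pdiv hp0 (by rw [← ha', ← hb']; exact hre)
      have hpad' : ∀ (q : ℕ) [Fact q.Prime], HMzero ℚ_[q] a' b' ((p : ℤ) * c) := fun q _ =>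
        HMzero.pdiv hp0 (by rw [← ha', ← hb']; exact hpad q)
      have := (ih a' b' ((p : ℤ) * c) hmeas ha'0 hb'0 hpc0 hre' hpad').pmul hp0
      rw [← ha', ← hb'] at this
      exact this
    by_cases hgac : Int.gcd a c = 1
    case neg =>
      obtain ⟨p, hp, hpg⟩ := Nat.exists_prime_and_dvd hgac
      have hpa : (p : ℤ) ∣ a := (Int.natCast_dvd_natCast.mpr hpg).trans (Int.gcd_dvd_left _ _)
      have hpc : (p : ℤ) ∣ c := (Int.natCast_dvd_natCast.mpr hpg).trans (Int.gcd_dvd_right _ _)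
      obtain ⟨a', ha'⟩ := hpa
      obtain ⟨c', hc'⟩ := hpc
      have hp0 : (p : ℤ) ≠ 0 := by exact_mod_cast hp.ne_zero
      have ha'0 : a' ≠ 0 := by rintro rfl; exact ha (by rw [ha', mul_zero])
      have hc'0 : c' ≠ 0 := by rintro rfl; exact hc (by rw [hc', mul_zero])
      have hpb0 : (p : ℤ) * b ≠ 0 := mul_ne_zero hp0 hb
      have hmeas : (a' * c' * ((p : ℤ) * b)).natAbs ≤ n := by
        have hsplit : a * b * c = (p : ℤ) * (a' * c' * ((p : ℤ) * b)) := by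
          rw [ha', hc']; ring
        have h1 : (a * b * c).natAbs = p * (a' * c' * ((p : ℤ) * b)).natAbs := by
          rw [hsplit, Int.natAbs_mul, Int.natAbs_natCast]
        have hm1 : 1 ≤ (a' * c' * ((p : ℤ) * b)).natAbs :=
          Int.natAbs_pos.mpr (mul_ne_zero (mul_ne_zero ha'0 hc'0) hpb0)
        have hp2 : 2 ≤ p := hp.two_le
        have h2 : 2 * (a' * c' * ((p : ℤ) * b)).natAbs ≤
            p * (a' * c' * ((p : ℤ) * b)).natAbs := Nat.mul_le_mul_right _ hp2
        omega
      have hre' : HMzero ℝ a' c' ((p : ℤ) * b) :=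
        HMzero.pdiv hp0 (by rw [← ha', ← hc']; exact hre.swap23)
      have hpad' : ∀ (q : ℕ) [Fact q.Prime], HMzero ℚ_[q] a' c' ((p : ℤ) * b) := fun q _ =>
        HMzero.pdiv hp0 (by rw [← ha', ← hc']; exact (hpad q).swap23)
      have := (ih a' c' ((p : ℤ) * b) hmeas ha'0 hc'0 hpb0 hre' hpad').pmul hp0
      rw [← ha', ← hc'] at this
      exact this.swap23
    by_cases hgbc : Int.gcd b c = 1
    case neg =>
      obtain ⟨p, hp, hpg⟩ := Nat.exists_prime_and_dvd hgbc
      have hpb : (p : ℤ) ∣ b := (Int.natCast_dvd_natCast.mpr hpg).trans (Int.gcd_dvd_left _ _)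
      have hpc : (p : ℤ) ∣ c := (Int.natCast_dvd_natCast.mpr hpg).trans (Int.gcd_dvd_right _ _)
      obtain ⟨b', hb'⟩ := hpb
      obtain ⟨c', hc'⟩ := hpc
      have hp0 : (p : ℤ) ≠ 0 := by exact_mod_cast hp.ne_zero
      have hb'0 : b' ≠ 0 := by rintro rfl; exact hb (by rw [hb', mul_zero])
      have hc'0 : c' ≠ 0 := by rintro rfl; exact hc (by rw [hc', mul_zero])
      have hpa0 : (p : ℤ) * a ≠ 0 := mul_ne_zero hp0 ha
      have hmeas : (b' * c' * ((p : ℤ) * a)).natAbs ≤ n := by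
        have hsplit : a * b * c = (p : ℤ) * (b' * c' * ((p : ℤ) * a)) := by
          rw [hb', hc']; ring
        have h1 : (a * b * c).natAbs = p * (b' * c' * ((p : ℤ) * a)).natAbs := by
          rw [hsplit, Int.natAbs_mul, Int.natAbs_natCast]
        have hm1 : 1 ≤ (b' * c' * ((p : ℤ) * a)).natAbs :=
          Int.natAbs_pos.mpr (mul_ne_zero (mul_ne_zero hb'0 hc'0) hpa0)
        have hp2 : 2 ≤ p := hp.two_le
        have h2 : 2 * (b' * c' * ((p : ℤ) * a)).natAbs ≤
            p * (b' * c' * ((p : ℤ) * a)).natAbs := Nat.mul_le_mul_right _ hp2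
        omega
      have hre' : HMzero ℝ b' c' ((p : ℤ) * a) :=
        HMzero.pdiv hp0 (by rw [← hb', ← hc']; exact hre.rot)
      have hpad' : ∀ (q : ℕ) [Fact q.Prime], HMzero ℚ_[q] b' c' ((p : ℤ) * a) := fun q _ =>
        HMzero.pdiv hp0 (by rw [← hb', ← hc']; exact (hpad q).rot)
      have := (ih b' c' ((p : ℤ) * a) hmeas hb'0 hc'0 hpa0 hre' hpad').pmul hp0
      rw [← hb', ← hc'] at this
      exact this.rot.rot
    exact norm_case a b c ha hb hc hsa hsb hsc
      (Int.isCoprime_iff_gcd_eq_one.mpr hgab) (Int.isCoprime_iff_gcd_eq_one.mpr hgac)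
      (Int.isCoprime_iff_gcd_eq_one.mpr hgbc) hre hpad

/-- **Legendre / Hasse–Minkowski for conics.** If the nondegenerate ternary diagonal
quadratic form `a x² + b y² + c z²` over `ℚ` has a nontrivial zero over `ℝ` and over
`ℚ_p` for every prime `p`, then it has a nontrivial zero over `ℚ`. -/
theorem hasse_minkowski_ternary (a b c : ℚ) (ha : a ≠ 0) (hb : b ≠ 0) (hc : c ≠ 0)
    (hreal : ∃ x y z : ℝ, (x, y, z) ≠ 0 ∧
      (a : ℝ) * x ^ 2 + (b : ℝ) * y ^ 2 + (c : ℝ) * z ^ 2 = 0)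
    (hpadic : ∀ (p : ℕ) [Fact p.Prime], ∃ x y z : ℚ_[p], (x, y, z) ≠ 0 ∧
      (a : ℚ_[p]) * x ^ 2 + (b : ℚ_[p]) * y ^ 2 + (c : ℚ_[p]) * z ^ 2 = 0) :
    ∃ x y z : ℚ, (x, y, z) ≠ 0 ∧ a * x ^ 2 + b * y ^ 2 + c * z ^ 2 = 0 := by
  set A : ℤ := a.num * b.den * c.den with hA
  set B : ℤ := b.num * a.den * c.den with hB
  set C : ℤ := c.num * a.den * b.den with hC
  have hA0 : A ≠ 0 := by
    simp only [hA]
    exact mul_ne_zero (mul_ne_zero (Rat.num_ne_zero.mpr ha) (by exact_mod_cast b.den_nz))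
      (by exact_mod_cast c.den_nz)
  have hB0 : B ≠ 0 := by
    simp only [hB]
    exact mul_ne_zero (mul_ne_zero (Rat.num_ne_zero.mpr hb) (by exact_mod_cast a.den_nz))
      (by exact_mod_cast c.den_nz)
  have hC0 : C ≠ 0 := by
    simp only [hC]
    exact mul_ne_zero (mul_ne_zero (Rat.num_ne_zero.mpr hc) (by exact_mod_cast a.den_nz))
      (by exact_mod_cast b.den_nz)
  -- coefficient identities over any field of characteristic zero
  have key : ∀ (K : Type) (_ : Field K) (_ : CharZero K),
      (∀ x y z : K, (A : K) * x ^ 2 + (B : K) * y ^ 2 + (C : K) * z ^ 2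
        = ((a.den : K) * b.den * c.den) * ((a : K) * x ^ 2 + (b : K) * y ^ 2 + (c : K) * z ^ 2)) := by
    intro K hK hcz x y z
    have hden : ∀ q : ℚ, ((q.den : K)) ≠ 0 := fun q =>
      Nat.cast_ne_zero.mpr q.den_nz
    have hq : ∀ q : ℚ, ((q.num : K)) = (q : K) * (q.den : K) := by
      intro q
      rw [Rat.cast_def]
      field_simp
    simp only [hA, hB, hC]
    push_cast
    rw [hq a, hq b, hq c]
    ring
  have hreH : HMzero ℝ A B C := by
    obtain ⟨x, y, z, hne, heq⟩ := hreal
    exact ⟨x, y, z, hne, by rw [key ℝ _ inferInstance x y z, heq, mul_zero]⟩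
  have hpadH : ∀ (p : ℕ) [Fact p.Prime], HMzero ℚ_[p] A B C := by
    intro p _
    obtain ⟨x, y, z, hne, heq⟩ := hpadic p
    exact ⟨x, y, z, hne, by rw [key ℚ_[p] _ inferInstance x y z, heq, mul_zero]⟩
  obtain ⟨x, y, z, hne, heq⟩ := int_main (A * B * C).natAbs A B C le_rfl hA0 hB0 hC0 hreH hpadH
  refine ⟨x, y, z, hne, ?_⟩
  rw [key ℚ _ inferInstance x y z] at heq
  rcases mul_eq_zero.mp heq with h | h
  · exfalso
    have hden : ∀ q : ℚ, ((q.den : ℚ)) ≠ 0 := fun q => Nat.cast_ne_zero.mpr q.den_nz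
    exact (mul_ne_zero (mul_ne_zero (hden a) (hden b)) (hden c)) h
  · exact h
end

section
/- (Amer–Brumer theorem) Let k be a field of characteristic not 2 and let f, g be quadratic forms in n variables over k. Then f and g have a common nontrivial zero over k if and only if the quadratic form f + t·g, viewed as a quadratic form in n variables over the rational function field k(t), is isotropic. -/
set_option synthInstance.maxHeartbeats 400000
set_option maxHeartbeats 1000000
open Matrix Polynomial Finset

section Helpers
variable {k : Type*} [Field k] {n : ℕ}

theorem coeff_dotMul (M₀ : Matrix (Fin n) (Fin n) k)
    (x y : Fin n → Polynomial k) (e : ℕ) :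
    ((x ⬝ᵥ (M₀.map Polynomial.C).mulVec y)).coeff e
      = ∑ ab ∈ Finset.HasAntidiagonal.antidiagonal e,
          (fun i => (x i).coeff ab.1) ⬝ᵥ M₀.mulVec (fun i => (y i).coeff ab.2) := by
  have h1 : x ⬝ᵥ (M₀.map Polynomial.C).mulVec y
      = ∑ i, ∑ j, Polynomial.C (M₀ i j) * (x i * y j) := by
    simp only [dotProduct, mulVec, Matrix.map_apply, Finset.mul_sum]
    exact Finset.sum_congr rfl fun i _ => Finset.sum_congr rfl fun j _ => by ring
  rw [h1]
  simp only [Polynomial.finset_sum_coeff]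
  simp only [coeff_C_mul]
  simp only [coeff_mul, Finset.mul_sum]
  calc ∑ i, ∑ j, ∑ ab ∈ Finset.HasAntidiagonal.antidiagonal e,
          M₀ i j * ((x i).coeff ab.1 * (y j).coeff ab.2)
      = ∑ i, ∑ ab ∈ Finset.HasAntidiagonal.antidiagonal e, ∑ j,
          M₀ i j * ((x i).coeff ab.1 * (y j).coeff ab.2) :=
        Finset.sum_congr rfl fun i _ => Finset.sum_comm
    _ = ∑ ab ∈ Finset.HasAntidiagonal.antidiagonal e, ∑ i, ∑ j,
          M₀ i j * ((x i).coeff ab.1 * (y j).coeff ab.2) := Finset.sum_comm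
    _ = _ := by
        refine Finset.sum_congr rfl fun ab _ => ?_
        simp only [dotProduct, mulVec, Finset.mul_sum]
        exact Finset.sum_congr rfl fun i _ => Finset.sum_congr rfl fun j _ => by ring

theorem split_phi (A B : Matrix (Fin n) (Fin n) k) (x y : Fin n → Polynomial k) :
    x ⬝ᵥ (A.map Polynomial.C + (Polynomial.X : Polynomial k) • B.map Polynomial.C).mulVec y
      = x ⬝ᵥ (A.map Polynomial.C).mulVec y
        + Polynomial.X * (x ⬝ᵥ (B.map Polynomial.C).mulVec y) := by
  rw [add_mulVec, dotProduct_add, smul_mulVec, dotProduct_smul, smul_eq_mul]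

theorem ringHom_const_dot {K : Type*} [CommRing K] (f : k →+* K)
    (M₀ : Matrix (Fin n) (Fin n) k) (v w : Fin n → k) :
    (fun i => f (v i)) ⬝ᵥ (M₀.map f).mulVec (fun i => f (w i))
      = f (v ⬝ᵥ M₀.mulVec w) := by
  have h2 : (⇑f ∘ (M₀ *ᵥ w)) = (M₀.map ⇑f) *ᵥ (⇑f ∘ w) :=
    funext fun i => RingHom.map_mulVec f M₀ w i
  calc (fun i => f (v i)) ⬝ᵥ (M₀.map ⇑f) *ᵥ (⇑f ∘ w)
      = (⇑f ∘ v) ⬝ᵥ (M₀.map ⇑f) *ᵥ (⇑f ∘ w) := rfl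
    _ = (⇑f ∘ v) ⬝ᵥ (⇑f ∘ (M₀ *ᵥ w)) := by rw [h2]
    _ = f (v ⬝ᵥ M₀ *ᵥ w) := (RingHom.map_dotProduct f v _).symm

theorem const_dot (M₀ : Matrix (Fin n) (Fin n) k) (v w : Fin n → k) :
    (fun i => Polynomial.C (v i)) ⬝ᵥ (M₀.map Polynomial.C).mulVec (fun i => Polynomial.C (w i))
      = Polynomial.C (v ⬝ᵥ M₀.mulVec w) :=
  ringHom_const_dot Polynomial.C M₀ v w

theorem antidiag_vanish {m e : ℕ} (h : 2*m < e) (T : ℕ × ℕ → k)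
    (hT : ∀ ab : ℕ × ℕ, (m < ab.1 ∨ m < ab.2) → T ab = 0) :
    ∑ ab ∈ Finset.HasAntidiagonal.antidiagonal e, T ab = 0 :=
  Finset.sum_eq_zero fun ab hab => hT ab (by rw [Finset.HasAntidiagonal.mem_antidiagonal] at hab; omega)

theorem antidiag_single {m e : ℕ} (he : m + m = e) (T : ℕ × ℕ → k)
    (hT : ∀ ab : ℕ × ℕ, (m < ab.1 ∨ m < ab.2) → T ab = 0) :
    ∑ ab ∈ Finset.HasAntidiagonal.antidiagonal e, T ab = T (m, m) := by
  refine Finset.sum_eq_single_of_mem (m, m) (by simpa [Finset.HasAntidiagonal.mem_antidiagonal] using he)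
    fun ab hab hne => hT ab ?_
  rw [Finset.HasAntidiagonal.mem_antidiagonal] at hab
  by_contra hc
  push_neg at hc
  exact hne (Prod.ext (by omega) (by omega))

theorem antidiag_pair {m e : ℕ} (he : m + (m+1) = e) (T : ℕ × ℕ → k)
    (hT : ∀ ab : ℕ × ℕ, (m + 1 < ab.1 ∨ m + 1 < ab.2) → T ab = 0) :
    ∑ ab ∈ Finset.HasAntidiagonal.antidiagonal e, T ab = T (m, m+1) + T (m+1, m) := by
  rw [← Finset.sum_pair (show ((m : ℕ), m+1) ≠ (m+1, m) by simp)]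
  refine (Finset.sum_subset ?_ ?_).symm
  · intro ab hab
    rw [Finset.mem_insert, Finset.mem_singleton] at hab
    rcases hab with rfl | rfl <;> rw [Finset.HasAntidiagonal.mem_antidiagonal] <;> omega
  · intro ab hab hnab
    rw [Finset.HasAntidiagonal.mem_antidiagonal] at hab
    rw [Finset.mem_insert, Finset.mem_singleton] at hnab
    push_neg at hnab
    refine hT ab ?_
    by_contra hc
    push_neg at hc
    rcases hnab with ⟨h1, h2⟩
    have : ab.1 = m ∨ ab.1 = m + 1 := by omega
    rcases this with h | h
    · exact h1 (Prod.ext h (by omega))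
    · exact h2 (Prod.ext h (by omega))

theorem coeff_dot_constR (M₀ : Matrix (Fin n) (Fin n) k) (x : Fin n → Polynomial k)
    (u : Fin n → k) (a : ℕ) :
    ((x ⬝ᵥ (M₀.map Polynomial.C).mulVec (fun i => Polynomial.C (u i)))).coeff a
      = (fun i => (x i).coeff a) ⬝ᵥ M₀.mulVec u := by
  rw [coeff_dotMul]
  refine Finset.sum_eq_single_of_mem ((a : ℕ), (0 : ℕ))
    (s := Finset.HasAntidiagonal.antidiagonal a)
    (f := fun ab => (fun i => (x i).coeff ab.1) ⬝ᵥ M₀.mulVec (fun i => (Polynomial.C (u i)).coeff ab.2))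
    (Finset.HasAntidiagonal.mem_antidiagonal.mpr (add_zero a)) (fun ab hab hne => ?_) |>.trans (by simp)
  rw [Finset.HasAntidiagonal.mem_antidiagonal] at hab
  have hb : ab.2 ≠ 0 := fun h => hne (Prod.ext (by omega) h)
  have : (fun i => (Polynomial.C (u i)).coeff ab.2) = (0 : Fin n → k) := by
    funext i; simp [Polynomial.coeff_C, hb]
  beta_reduce
  rw [this, Matrix.mulVec_zero, dotProduct_zero]

theorem coeff_dot_constL (M₀ : Matrix (Fin n) (Fin n) k) (x : Fin n → Polynomial k)
    (u : Fin n → k) (a : ℕ) :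
    (((fun i => Polynomial.C (u i)) ⬝ᵥ (M₀.map Polynomial.C).mulVec x)).coeff a
      = u ⬝ᵥ M₀.mulVec (fun i => (x i).coeff a) := by
  rw [coeff_dotMul]
  refine Finset.sum_eq_single_of_mem ((0 : ℕ), (a : ℕ))
    (s := Finset.HasAntidiagonal.antidiagonal a)
    (f := fun ab => (fun i => (Polynomial.C (u i)).coeff ab.1) ⬝ᵥ M₀.mulVec (fun i => (x i).coeff ab.2))
    (Finset.HasAntidiagonal.mem_antidiagonal.mpr (zero_add a)) (fun ab hab hne => ?_) |>.trans (by simp)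
  rw [Finset.HasAntidiagonal.mem_antidiagonal] at hab
  have hb : ab.1 ≠ 0 := fun h => hne (Prod.ext h (by omega))
  have : (fun i => (Polynomial.C (u i)).coeff ab.1) = (0 : Fin n → k) := by
    funext i; simp [Polynomial.coeff_C, hb]
  beta_reduce
  rw [this, zero_dotProduct]

end Helpers

section Descent
variable {k : Type*} [Field k] {n : ℕ}

theorem amer_descent (A B : Matrix (Fin n) (Fin n) k) :
    ∀ (d : ℕ) (p : Fin n → Polynomial k), p ≠ 0 → (∀ i, (p i).natDegree ≤ d) →
      p ⬝ᵥ (A.map Polynomial.C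
          + (Polynomial.X : Polynomial k) • B.map Polynomial.C).mulVec p = 0 →
      ∃ v : Fin n → k, v ≠ 0 ∧ v ⬝ᵥ A.mulVec v = 0 ∧ v ⬝ᵥ B.mulVec v = 0 := by
  intro d
  induction d with
  | zero =>
    intro p hp hdeg hphi
    have hpC : p = fun i => Polynomial.C ((p i).coeff 0) :=
      funext fun i => Polynomial.eq_C_of_natDegree_le_zero (hdeg i)
    rw [hpC, split_phi, const_dot, const_dot] at hphi
    refine ⟨fun i => (p i).coeff 0, ?_, ?_, ?_⟩
    · intro hv
      apply hp
      rw [hpC]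
      funext i
      rw [show (p i).coeff 0 = 0 from congrFun hv i, map_zero]
      rfl
    · simpa using congrArg (fun q => Polynomial.coeff q 0) hphi
    · simpa using congrArg (fun q => Polynomial.coeff q 1) hphi
  | succ d ih =>
    intro p hp hdeg hphi
    obtain ⟨u, hu_def⟩ : ∃ u : Fin n → k, u = fun i => (p i).coeff (d+1) := ⟨_, rfl⟩
    by_cases hu : u = 0
    · -- the top coefficient vector vanishes, so the degree is ≤ d
      refine ih p hp (fun i => ?_) hphi
      have h1 := hdeg i
      rw [Polynomial.natDegree_le_iff_coeff_eq_zero] at h1 ⊢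
      intro m hm
      by_cases hm1 : m = d + 1
      · subst hm1
        have := congrFun (hu_def.symm.trans hu) i
        simpa using this
      · exact h1 m (by omega)
    · -- the top coefficient vector u is nonzero
      have hcp : ∀ a, d + 1 < a → (fun i => (p i).coeff a) = (0 : Fin n → k) := by
        intro a ha
        funext i
        exact Polynomial.coeff_eq_zero_of_natDegree_lt (lt_of_le_of_lt (hdeg i) ha)
      have hphis := (split_phi A B p p).symm.trans hphi
      -- g(u) = 0
      have hgu : u ⬝ᵥ B.mulVec u = 0 := by
        have h0 := congrArg (fun q => Polynomial.coeff q (2*d+3)) hphis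
        simp only [Polynomial.coeff_add, Polynomial.coeff_zero] at h0
        rw [show 2*d+3 = (2*d+2)+1 by omega, Polynomial.coeff_X_mul] at h0
        have e1 : (p ⬝ᵥ (A.map Polynomial.C).mulVec p).coeff (2*d+2+1) = 0 := by
          rw [coeff_dotMul]
          refine antidiag_vanish (m := d+1) (by omega) _ fun ab hab => ?_
          beta_reduce
          rcases hab with h | h
          · rw [hcp ab.1 (by omega), zero_dotProduct]
          · rw [hcp ab.2 (by omega), Matrix.mulVec_zero, dotProduct_zero]
        have e2 : (p ⬝ᵥ (B.map Polynomial.C).mulVec p).coeff (2*d+2) = u ⬝ᵥ B.mulVec u := by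
          rw [coeff_dotMul]
          refine (antidiag_single (m := d+1) (by omega) _ fun ab hab => ?_).trans ?_
          · beta_reduce
            rcases hab with h | h
            · rw [hcp ab.1 (by omega), zero_dotProduct]
            · rw [hcp ab.2 (by omega), Matrix.mulVec_zero, dotProduct_zero]
          · beta_reduce
            rw [hu_def]
        rw [e1, e2] at h0
        linear_combination h0
      obtain ⟨c, hc_def⟩ : ∃ c : Fin n → k, c = fun i => (p i).coeff d := ⟨_, rfl⟩
      -- the relation  f(u) + B_g(c,u) + B_g(u,c) = 0
      have hrel : u ⬝ᵥ A.mulVec u + (c ⬝ᵥ B.mulVec u + u ⬝ᵥ B.mulVec c) = 0 := by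
        have h0 := congrArg (fun q => Polynomial.coeff q (2*d+2)) hphis
        simp only [Polynomial.coeff_add, Polynomial.coeff_zero] at h0
        rw [show 2*d+2 = (2*d+1)+1 by omega, Polynomial.coeff_X_mul] at h0
        have e1 : (p ⬝ᵥ (A.map Polynomial.C).mulVec p).coeff (2*d+1+1) = u ⬝ᵥ A.mulVec u := by
          rw [coeff_dotMul]
          refine (antidiag_single (m := d+1) (by omega) _ fun ab hab => ?_).trans ?_
          · beta_reduce
            rcases hab with h | h
            · rw [hcp ab.1 (by omega), zero_dotProduct]
            · rw [hcp ab.2 (by omega), Matrix.mulVec_zero, dotProduct_zero]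
          · beta_reduce
            rw [hu_def]
        have e2 : (p ⬝ᵥ (B.map Polynomial.C).mulVec p).coeff (2*d+1)
            = c ⬝ᵥ B.mulVec u + u ⬝ᵥ B.mulVec c := by
          rw [coeff_dotMul]
          refine (antidiag_pair (m := d) (by omega) _ fun ab hab => ?_).trans ?_
          · beta_reduce
            rcases hab with h | h
            · rw [hcp ab.1 (by omega), zero_dotProduct]
            · rw [hcp ab.2 (by omega), Matrix.mulVec_zero, dotProduct_zero]
          · beta_reduce
            rw [hu_def, hc_def]
        rw [e1, e2] at h0
        linear_combination h0
      by_cases hfu : u ⬝ᵥ A.mulVec u = 0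
      · exact ⟨u, hu, hfu, hgu⟩
      · -- descent step
        obtain ⟨u', hu'_def⟩ : ∃ u' : Fin n → Polynomial k,
          u' = fun i => Polynomial.C (u i) := ⟨_, rfl⟩
        obtain ⟨M, hM⟩ : ∃ M : Matrix (Fin n) (Fin n) (Polynomial k),
          M = A.map Polynomial.C + (Polynomial.X : Polynomial k) • B.map Polynomial.C := ⟨_, rfl⟩
        obtain ⟨s, hs_def⟩ : ∃ s : Polynomial k,
          s = p ⬝ᵥ M.mulVec u' + u' ⬝ᵥ M.mulVec p := ⟨_, rfl⟩
        obtain ⟨p', hp'_def⟩ : ∃ p' : Fin n → Polynomial k,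
          p' = s • u' - Polynomial.C (u ⬝ᵥ A.mulVec u) • p := ⟨_, rfl⟩
        have hphiM : p ⬝ᵥ M.mulVec p = 0 := by rw [hM]; exact hphi
        have hphiu : u' ⬝ᵥ M.mulVec u' = Polynomial.C (u ⬝ᵥ A.mulVec u) := by
          rw [hM, hu'_def, split_phi, const_dot, const_dot, hgu, map_zero, mul_zero, add_zero]
        -- φ(p') = 0
        have hphip' : p' ⬝ᵥ M.mulVec p' = 0 := by
          have hexp : p' ⬝ᵥ M.mulVec p'
              = s * s * (u' ⬝ᵥ M.mulVec u')
                - s * Polynomial.C (u ⬝ᵥ A.mulVec u) * (u' ⬝ᵥ M.mulVec p)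
                - Polynomial.C (u ⬝ᵥ A.mulVec u) * s * (p ⬝ᵥ M.mulVec u')
                + Polynomial.C (u ⬝ᵥ A.mulVec u) * Polynomial.C (u ⬝ᵥ A.mulVec u)
                  * (p ⬝ᵥ M.mulVec p) := by
            rw [hp'_def]
            simp only [sub_dotProduct, dotProduct_sub, Matrix.mulVec_sub, Matrix.mulVec_smul,
              smul_dotProduct, dotProduct_smul, smul_eq_mul]
            ring
          rw [hexp, hphiu, hphiM]
          linear_combination (s * Polynomial.C (u ⬝ᵥ A.mulVec u)) * hs_def
        -- coefficients of s
        have hs_coeff : ∀ m : ℕ, s.coeff (m+1)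
            = ((fun i => (p i).coeff (m+1)) ⬝ᵥ A.mulVec u
                + (fun i => (p i).coeff m) ⬝ᵥ B.mulVec u)
              + (u ⬝ᵥ A.mulVec (fun i => (p i).coeff (m+1))
                + u ⬝ᵥ B.mulVec (fun i => (p i).coeff m)) := by
          intro m
          rw [hs_def, hM, hu'_def, split_phi, split_phi]
          simp only [Polynomial.coeff_add]
          rw [Polynomial.coeff_X_mul, Polynomial.coeff_X_mul, coeff_dot_constR,
            coeff_dot_constR, coeff_dot_constL, coeff_dot_constL]
        -- degree bound for p'
        have hdeg' : ∀ i, (p' i).natDegree ≤ d := by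
          intro i
          rw [Polynomial.natDegree_le_iff_coeff_eq_zero]
          intro m hm
          obtain ⟨m', rfl⟩ : ∃ m', m = m' + 1 := ⟨m - 1, by omega⟩
          have hdm : d ≤ m' := by omega
          have hcoe : (p' i).coeff (m'+1)
              = s.coeff (m'+1) * u i - (u ⬝ᵥ A.mulVec u) * (p i).coeff (m'+1) := by
            rw [hp'_def]
            simp only [Pi.sub_apply, Pi.smul_apply, smul_eq_mul, Polynomial.coeff_sub,
              Polynomial.coeff_C_mul, hu'_def, Polynomial.coeff_mul_C]
          rw [hcoe, hs_coeff m']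
          rcases eq_or_lt_of_le hdm with rfl | h1
          · -- m' = d
            rw [show (fun i => (p i).coeff (d+1)) = u from hu_def.symm,
              show (fun i => (p i).coeff d) = c from hc_def.symm,
              show (p i).coeff (d+1) = u i from by rw [hu_def]]
            linear_combination (u i) * hrel
          · -- m' ≥ d + 1
            rw [hcp (m'+1) (by omega), zero_dotProduct, Matrix.mulVec_zero, dotProduct_zero,
              show (p i).coeff (m'+1) = 0 from
                Polynomial.coeff_eq_zero_of_natDegree_lt
                  (by have := hdeg i; omega : (p i).natDegree < m'+1)]
            rcases eq_or_lt_of_le (show d + 1 ≤ m' by omega) with rfl | h2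
            · rw [show (fun i => (p i).coeff (d+1)) = u from hu_def.symm]
              rw [hgu]
              ring
            · rw [hcp m' (by omega), zero_dotProduct, Matrix.mulVec_zero, dotProduct_zero]
              ring
        -- p' is nonzero
        have hp'ne : p' ≠ 0 := by
          intro h0
          have heq : s • u' = Polynomial.C (u ⬝ᵥ A.mulVec u) • p := by
            rw [← sub_eq_zero, ← hp'_def]
            exact h0
          have e1 : (s • u') ⬝ᵥ M.mulVec (s • u')
              = s * s * Polynomial.C (u ⬝ᵥ A.mulVec u) := by
            simp only [smul_dotProduct, Matrix.mulVec_smul, dotProduct_smul, smul_eq_mul, hphiu]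
            ring
          have e2 : (Polynomial.C (u ⬝ᵥ A.mulVec u) • p) ⬝ᵥ
              M.mulVec (Polynomial.C (u ⬝ᵥ A.mulVec u) • p) = 0 := by
            simp only [smul_dotProduct, Matrix.mulVec_smul, dotProduct_smul, smul_eq_mul, hphiM]
            ring
          rw [heq, e2] at e1
          have hC : Polynomial.C (u ⬝ᵥ A.mulVec u) ≠ 0 := by
            simpa using hfu
          have hs0 : s = 0 := by
            rcases mul_eq_zero.mp e1.symm with h | h
            · rcases mul_eq_zero.mp h with h' | h'
              · exact h'
              · exact h'
            · exact absurd h hC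
          apply hp
          funext i
          have h3 := congrFun heq i
          rw [hs0] at h3
          simp only [Pi.smul_apply, smul_eq_mul, zero_mul, zero_smul] at h3
          have h4 : Polynomial.C (u ⬝ᵥ A.mulVec u) * p i = 0 := h3.symm
          exact (mul_eq_zero.mp h4).resolve_left hC
        refine ih p' hp'ne hdeg' (by rw [← hM]; exact hphip')
end Descent

/-- **Amer–Brumer theorem.** Let `k` be a field of characteristic `≠ 2` and let `f, g`
be quadratic forms in `n` variables over `k`, given by matrices `A, B` (`f v = v ⬝ᵥ A *ᵥ v`,
`g v = v ⬝ᵥ B *ᵥ v`). Then `f` and `g` have a common nontrivial zero over `k` iff the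
quadratic form `f + t • g` over the rational function field `k(t)` is isotropic. -/
theorem amer_brumer {k : Type*} [Field k] (h2 : (2 : k) ≠ 0) {n : ℕ}
    (A B : Matrix (Fin n) (Fin n) k) :
    (∃ v : Fin n → k, v ≠ 0 ∧ v ⬝ᵥ A.mulVec v = 0 ∧ v ⬝ᵥ B.mulVec v = 0) ↔
      (∃ w : Fin n → RatFunc k, w ≠ 0 ∧
        w ⬝ᵥ (A.map (algebraMap k (RatFunc k))
            + (RatFunc.X : RatFunc k) • B.map (algebraMap k (RatFunc k))).mulVec w = 0) := by
  constructor
  · rintro ⟨v, hv, hfv, hgv⟩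
    refine ⟨fun i => algebraMap k (RatFunc k) (v i), ?_, ?_⟩
    · intro h0
      apply hv
      funext i
      have h1 := congrFun h0 i
      simp only [Pi.zero_apply] at h1 ⊢
      exact (algebraMap k (RatFunc k)).injective (h1.trans (map_zero _).symm)
    · rw [add_mulVec, dotProduct_add, smul_mulVec, dotProduct_smul, smul_eq_mul,
        ringHom_const_dot, ringHom_const_dot, hfv, hgv]
      simp
  · rintro ⟨w, hw, hphiw⟩
    have hb0 := IsLocalization.exist_integer_multiples
      (nonZeroDivisors (Polynomial k)) Finset.univ w
    obtain ⟨b, hb⟩ := hb0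
    have hb' : ∀ i, ∃ r : Polynomial k,
        algebraMap (Polynomial k) (RatFunc k) r = (b : Polynomial k) • w i :=
      fun i => hb i (Finset.mem_univ i)
    choose q hq using hb'
    have hq' : ∀ i, algebraMap (Polynomial k) (RatFunc k) (q i)
        = algebraMap (Polynomial k) (RatFunc k) (b : Polynomial k) * w i := by
      intro i
      rw [hq i, Algebra.smul_def]
    have hbne : algebraMap (Polynomial k) (RatFunc k) (b : Polynomial k) ≠ 0 := by
      intro h
      exact nonZeroDivisors.coe_ne_zero b
        (IsFractionRing.injective (Polynomial k) (RatFunc k) (h.trans (map_zero _).symm))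
    have hqne : q ≠ 0 := by
      obtain ⟨j, hj⟩ := Function.ne_iff.mp hw
      intro h0
      have h1 := hq' j
      rw [congrFun h0 j, Pi.zero_apply, map_zero] at h1
      exact mul_ne_zero hbne (by simpa using hj) h1.symm
    have hMmap : (A.map Polynomial.C
          + (Polynomial.X : Polynomial k) • B.map Polynomial.C).map
            (algebraMap (Polynomial k) (RatFunc k))
        = A.map (algebraMap k (RatFunc k))
          + (RatFunc.X : RatFunc k) • B.map (algebraMap k (RatFunc k)) := by
      ext i j
      simp only [Matrix.map_apply, Matrix.add_apply, Matrix.smul_apply, smul_eq_mul,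
        _root_.map_add, _root_.map_mul, RatFunc.algebraMap_C, RatFunc.algebraMap_X,
        RatFunc.algebraMap_eq_C]
    have hphi : q ⬝ᵥ (A.map Polynomial.C
        + (Polynomial.X : Polynomial k) • B.map Polynomial.C).mulVec q = 0 := by
      apply IsFractionRing.injective (Polynomial k) (RatFunc k)
      rw [map_zero, RingHom.map_dotProduct]
      have hmv : (algebraMap (Polynomial k) (RatFunc k)) ∘
            ((A.map Polynomial.C
              + (Polynomial.X : Polynomial k) • B.map Polynomial.C).mulVec q)
          = ((A.map Polynomial.C
              + (Polynomial.X : Polynomial k) • B.map Polynomial.C).map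
                (algebraMap (Polynomial k) (RatFunc k))).mulVec
              ((algebraMap (Polynomial k) (RatFunc k)) ∘ q) :=
        funext fun i => RingHom.map_mulVec _ _ _ i
      rw [hmv, hMmap]
      have hvec : (algebraMap (Polynomial k) (RatFunc k)) ∘ q
          = (algebraMap (Polynomial k) (RatFunc k) (b : Polynomial k)) • w :=
        funext fun i => hq' i
      rw [hvec, smul_dotProduct, Matrix.mulVec_smul, dotProduct_smul, hphiw,
        smul_zero, smul_zero]
    obtain ⟨v, hv, hfv, hgv⟩ := amer_descent A B
      (Finset.univ.sup fun i => (q i).natDegree) q hqne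
      (fun i => Finset.le_sup (f := fun i => (q i).natDegree) (Finset.mem_univ i)) hphi
    exact ⟨v, hv, hfv, hgv⟩
end

section
/- (Amer's theorem for planes) Let k be an infinite field of characteristic not 2 and let f, g be quadratic forms in n variables over k. Then f and g vanish simultaneously on a 2-dimensional k-linear subspace of kⁿ if and only if the quadratic form f + t·g over k(t) vanishes on a 2-dimensional k(t)-linear subspace of k(t)ⁿ. -/
set_option synthInstance.maxHeartbeats 400000

open Matrix Polynomial

section Helpers

variable {R S : Type*} [CommRing R] [CommRing S] {n : ℕ}

/-- auxiliary bilinear pairing -/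
def dd (M : Matrix (Fin n) (Fin n) R) (x y : Fin n → R) : R := x ⬝ᵥ M.mulVec y

lemma dd_addl (M : Matrix (Fin n) (Fin n) R) (x y z : Fin n → R) :
    dd M (x + y) z = dd M x z + dd M y z := add_dotProduct _ _ _

lemma dd_addr (M : Matrix (Fin n) (Fin n) R) (x y z : Fin n → R) :
    dd M x (y + z) = dd M x y + dd M x z := by
  unfold dd; rw [mulVec_add, dotProduct_add]

lemma dd_subl (M : Matrix (Fin n) (Fin n) R) (x y z : Fin n → R) :
    dd M (x - y) z = dd M x z - dd M y z := sub_dotProduct _ _ _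

lemma dd_subr (M : Matrix (Fin n) (Fin n) R) (x y z : Fin n → R) :
    dd M x (y - z) = dd M x y - dd M x z := by
  unfold dd; rw [mulVec_sub, dotProduct_sub]

lemma dd_smull (M : Matrix (Fin n) (Fin n) R) (p : R) (x z : Fin n → R) :
    dd M (p • x) z = p * dd M x z := by
  unfold dd; rw [smul_dotProduct, smul_eq_mul]

lemma dd_smulr (M : Matrix (Fin n) (Fin n) R) (p : R) (x z : Fin n → R) :
    dd M x (p • z) = p * dd M x z := by
  unfold dd; rw [mulVec_smul, dotProduct_smul, smul_eq_mul]

lemma dd_zerol (M : Matrix (Fin n) (Fin n) R) (z : Fin n → R) : dd M 0 z = 0 :=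
  zero_dotProduct _

lemma dd_zeror (M : Matrix (Fin n) (Fin n) R) (z : Fin n → R) : dd M z 0 = 0 := by
  unfold dd; rw [mulVec_zero, dotProduct_zero]

lemma dd_matrix_add (M N : Matrix (Fin n) (Fin n) R) (x y : Fin n → R) :
    dd (M + N) x y = dd M x y + dd N x y := by
  unfold dd; rw [add_mulVec, dotProduct_add]

lemma dd_matrix_smul (a : R) (M : Matrix (Fin n) (Fin n) R) (x y : Fin n → R) :
    dd (a • M) x y = a * dd M x y := by
  unfold dd; rw [smul_mulVec, dotProduct_smul, smul_eq_mul]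

lemma dd_eq_sum (M : Matrix (Fin n) (Fin n) R) (a b : Fin n → R) :
    dd M a b = ∑ i, ∑ j, M i j * (a i * b j) := by
  simp only [dd, dotProduct, mulVec, Finset.mul_sum]
  exact Finset.sum_congr rfl fun i _ => Finset.sum_congr rfl fun j _ => by ring

lemma dd_map (g : R →+* S) (M : Matrix (Fin n) (Fin n) R) (x y : Fin n → R) :
    g (dd M x y) = dd (M.map g) (fun i => g (x i)) (fun i => g (y i)) := by
  unfold dd
  simp [dotProduct, mulVec, Matrix.map_apply, _root_.map_sum, _root_.map_mul, Finset.mul_sum]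

/-- the span-vanishing characterization over a field -/
lemma span_vanish_iff {K : Type*} [Field K] (M : Matrix (Fin n) (Fin n) K) (v w : Fin n → K) :
    (∀ x ∈ Submodule.span K {v, w}, x ⬝ᵥ M.mulVec x = 0) ↔
      (dd M v v = 0 ∧ dd M w w = 0 ∧ dd M v w + dd M w v = 0) := by
  constructor
  · intro h
    have hv := h v (Submodule.subset_span (by simp))
    have hw := h w (Submodule.subset_span (by simp))
    have hvw := h (v + w) (Submodule.add_mem _ (Submodule.subset_span (by simp))
      (Submodule.subset_span (by simp)))
    have hv' : dd M v v = 0 := hv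
    have hw' : dd M w w = 0 := hw
    have hvw' : dd M (v + w) (v + w) = 0 := hvw
    rw [dd_addl, dd_addr, dd_addr] at hvw'
    exact ⟨hv', hw', by linear_combination hvw' - hv' - hw'⟩
  · rintro ⟨h1, h2, h3⟩ x hx
    obtain ⟨a, b, rfl⟩ := Submodule.mem_span_pair.mp hx
    have : dd M (a • v + b • w) (a • v + b • w) = 0 := by
      simp only [dd_addl, dd_addr, dd_smull, dd_smulr]
      linear_combination (a*a) * h1 + (b*b) * h2 + (a*b) * h3
    exact this

lemma indep_pair_swap {K M : Type*} [Field K] [AddCommGroup M] [Module K M] {x y : M}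
    (h : LinearIndependent K ![x, y]) : LinearIndependent K ![y, x] := by
  rw [LinearIndependent.pair_iff] at h ⊢
  intro s t hst
  obtain ⟨ht, hs⟩ := h t s (by rw [← hst]; abel)
  exact ⟨hs, ht⟩

end Helpers

section PolyHelpers

variable {k : Type*} [Field k] {n : ℕ}

/-- coefficient vector -/
def cf (j : ℕ) (x : Fin n → Polynomial k) : Fin n → k := fun i => (x i).coeff j

lemma cf_eq_zero {a j : ℕ} {x : Fin n → Polynomial k} (hx : ∀ i, (x i).natDegree ≤ a)
    (hj : a < j) : cf j x = 0 :=
  funext fun i => coeff_eq_zero_of_natDegree_lt (lt_of_le_of_lt (hx i) hj)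

lemma dd_coeff (A : Matrix (Fin n) (Fin n) k) (x y : Fin n → Polynomial k) (N : ℕ) :
    (dd (A.map C) x y).coeff N
      = ∑ p ∈ Finset.HasAntidiagonal.antidiagonal N, dd A (cf p.1 x) (cf p.2 y) := by
  have h1 : dd (A.map C) x y = ∑ i, ∑ j, C (A i j) * (x i * y j) := by
    rw [dd_eq_sum]
    exact Finset.sum_congr rfl fun i _ => Finset.sum_congr rfl fun j _ => by
      rw [Matrix.map_apply]
  rw [h1]
  simp only [finset_sum_coeff, coeff_C_mul]
  simp only [coeff_mul, Finset.mul_sum]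
  have h2 : ∀ p : ℕ × ℕ, dd A (cf p.1 x) (cf p.2 y)
      = ∑ i : Fin n, ∑ j : Fin n, A i j * ((x i).coeff p.1 * (y j).coeff p.2) := by
    intro p
    rw [dd_eq_sum]
    rfl
  calc (∑ i : Fin n, ∑ j : Fin n, ∑ p ∈ Finset.HasAntidiagonal.antidiagonal N,
        A i j * ((x i).coeff p.1 * (y j).coeff p.2))
      = ∑ p ∈ Finset.HasAntidiagonal.antidiagonal N, ∑ i : Fin n, ∑ j : Fin n,
        A i j * ((x i).coeff p.1 * (y j).coeff p.2) :=
        (Finset.sum_congr rfl fun i _ => Finset.sum_comm).trans Finset.sum_comm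
    _ = ∑ p ∈ Finset.HasAntidiagonal.antidiagonal N, dd A (cf p.1 x) (cf p.2 y) :=
        Finset.sum_congr rfl fun p _ => (h2 p).symm

lemma dd_coeff_bound {a b : ℕ} (A : Matrix (Fin n) (Fin n) k) {x y : Fin n → Polynomial k}
    (hx : ∀ i, (x i).natDegree ≤ a) (hy : ∀ i, (y i).natDegree ≤ b) {N : ℕ} (hN : a + b < N) :
    (dd (A.map C) x y).coeff N = 0 := by
  rw [dd_coeff]
  apply Finset.sum_eq_zero
  rintro ⟨p, q⟩ hp
  rw [Finset.HasAntidiagonal.mem_antidiagonal] at hp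
  rcases le_or_gt p a with h | h
  · have : b < q := by omega
    rw [cf_eq_zero hy this, dd_zeror]
  · rw [cf_eq_zero hx h, dd_zerol]

lemma dd_coeff_top {a b : ℕ} (A : Matrix (Fin n) (Fin n) k) {x y : Fin n → Polynomial k}
    (hx : ∀ i, (x i).natDegree ≤ a) (hy : ∀ i, (y i).natDegree ≤ b) :
    (dd (A.map C) x y).coeff (a + b) = dd A (cf a x) (cf b y) := by
  rw [dd_coeff]
  rw [Finset.sum_eq_single (a, b)]
  · rintro ⟨p, q⟩ hp hne
    rw [Finset.HasAntidiagonal.mem_antidiagonal] at hp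
    have : a < p ∨ b < q := by
      by_contra hc
      push_neg at hc
      exact hne (by ext <;> simp <;> omega)
    rcases this with h | h
    · rw [cf_eq_zero hx h, dd_zerol]
    · rw [cf_eq_zero hy h, dd_zeror]
  · intro h
    simp [Finset.HasAntidiagonal.mem_antidiagonal] at h

lemma dd_coeff_two (A : Matrix (Fin n) (Fin n) k) {x : Fin n → Polynomial k} {m : ℕ}
    (hx : ∀ i, (x i).natDegree ≤ m + 1) :
    (dd (A.map C) x x).coeff (2 * m + 1)
      = dd A (cf m x) (cf (m+1) x) + dd A (cf (m+1) x) (cf m x) := by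
  rw [dd_coeff]
  have hsub : ({(m, m+1), (m+1, m)} : Finset (ℕ × ℕ)) ⊆ Finset.HasAntidiagonal.antidiagonal (2 * m + 1) := by
    intro p hp
    simp only [Finset.mem_insert, Finset.mem_singleton] at hp
    rcases hp with rfl | rfl <;> simp only [Finset.HasAntidiagonal.mem_antidiagonal] <;> omega
  rw [← Finset.sum_subset hsub]
  · rw [Finset.sum_insert (by intro hmem; simp only [Finset.mem_singleton, Prod.mk.injEq] at hmem; omega), Finset.sum_singleton]
  · rintro ⟨p, q⟩ hp hnot
    rw [Finset.HasAntidiagonal.mem_antidiagonal] at hp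
    simp only [Finset.mem_insert, Finset.mem_singleton, Prod.mk.injEq, not_or, not_and] at hnot
    have : m + 1 < p ∨ m + 1 < q := by
      rcases hnot with ⟨h1, h2⟩
      by_contra hc
      push_neg at hc
      rcases hc with ⟨hp1, hq1⟩
      have hpm : p = m ∨ p = m + 1 := by omega
      rcases hpm with rfl | rfl
      · exact h1 rfl (by omega)
      · exact h2 rfl (by omega)
    rcases this with h | h
    · rw [cf_eq_zero hx h, dd_zerol]
    · rw [cf_eq_zero hx h, dd_zeror]

lemma coeff_mul_top {a b : ℕ} {p q : Polynomial k} (ha : p.natDegree ≤ a) (hb : q.natDegree ≤ b) :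
    (p * q).coeff (a + b) = p.coeff a * q.coeff b := by
  rw [coeff_mul, Finset.sum_eq_single (a, b)]
  · rintro ⟨s, t⟩ hst hne
    rw [Finset.HasAntidiagonal.mem_antidiagonal] at hst
    have : a < s ∨ b < t := by
      by_contra hc
      push_neg at hc
      exact hne (by ext <;> simp <;> omega)
    rcases this with h | h
    · rw [coeff_eq_zero_of_natDegree_lt (lt_of_le_of_lt ha h), zero_mul]
    · rw [coeff_eq_zero_of_natDegree_lt (lt_of_le_of_lt hb h), mul_zero]
  · intro h
    simp [Finset.HasAntidiagonal.mem_antidiagonal] at h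

end PolyHelpers

section ConstArg

variable {k : Type*} [Field k] {n : ℕ}

lemma cf_const (c : Fin n → k) : cf 0 (fun i => (C (c i) : Polynomial k)) = c :=
  funext fun i => by simp [cf]

lemma cf_const_pos (c : Fin n → k) {q : ℕ} (hq : 0 < q) :
    cf q (fun i => (C (c i) : Polynomial k)) = 0 :=
  funext fun i => by simp [cf, Polynomial.coeff_C, Nat.pos_iff_ne_zero.mp hq]

lemma dd_coeff_constr (A : Matrix (Fin n) (Fin n) k) (x : Fin n → Polynomial k)
    (c : Fin n → k) (j : ℕ) :
    (dd (A.map C) x (fun i => C (c i))).coeff j = dd A (cf j x) c := by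
  rw [dd_coeff, Finset.sum_eq_single (j, 0)]
  · rw [cf_const]
  · rintro ⟨p, q⟩ hp hne
    rw [Finset.HasAntidiagonal.mem_antidiagonal] at hp
    rcases Nat.eq_zero_or_pos q with rfl | hq
    · exact absurd (by ext <;> simp <;> omega) hne
    · rw [cf_const_pos c hq, dd_zeror]
  · intro hmem
    simp [Finset.HasAntidiagonal.mem_antidiagonal] at hmem
lemma dd_coeff_constl (A : Matrix (Fin n) (Fin n) k) (x : Fin n → Polynomial k)
    (c : Fin n → k) (j : ℕ) :
    (dd (A.map C) (fun i => C (c i)) x).coeff j = dd A c (cf j x) := by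
  rw [dd_coeff, Finset.sum_eq_single (0, j)]
  · rw [cf_const]
  · rintro ⟨p, q⟩ hp hne
    rw [Finset.HasAntidiagonal.mem_antidiagonal] at hp
    rcases Nat.eq_zero_or_pos p with rfl | hq
    · exact absurd (by ext <;> simp <;> omega) hne
    · rw [cf_const_pos c hq, dd_zerol]
  · intro hmem
    simp [Finset.HasAntidiagonal.mem_antidiagonal] at hmem

end ConstArg
section Amer

variable {k : Type*} [Field k] {n : ℕ}

lemma phi_C (a : k) :
    algebraMap (Polynomial k) (RatFunc k) (C a) = algebraMap k (RatFunc k) a := by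
  rw [← Polynomial.algebraMap_eq, ← IsScalarTower.algebraMap_apply]

lemma dd_map_poly (A : Matrix (Fin n) (Fin n) k) (x y : Fin n → Polynomial k) :
    algebraMap (Polynomial k) (RatFunc k) (dd (A.map C) x y)
      = dd (A.map (algebraMap k (RatFunc k)))
          (fun i => algebraMap (Polynomial k) (RatFunc k) (x i))
          (fun i => algebraMap (Polynomial k) (RatFunc k) (y i)) := by
  rw [dd_map (algebraMap (Polynomial k) (RatFunc k))]
  have hM : (A.map C).map (algebraMap (Polynomial k) (RatFunc k))
      = A.map (algebraMap k (RatFunc k)) := by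
    ext i j
    simp only [Matrix.map_apply]
    exact phi_C (A i j)
  rw [hM]

lemma dd_map_const (A : Matrix (Fin n) (Fin n) k) (x y : Fin n → k) :
    dd (A.map C) (fun i => C (x i)) (fun i => C (y i)) = C (dd A x y) :=
  (dd_map (C : k →+* Polynomial k) A x y).symm

lemma phi_inj : Function.Injective (algebraMap (Polynomial k) (RatFunc k)) :=
  IsFractionRing.injective _ _

lemma psi_inj : Function.Injective (algebraMap k (RatFunc k)) :=
  RingHom.injective _

lemma CXC_zero {a b : k} (h : C a + X * C b = 0) : a = 0 ∧ b = 0 := by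
  constructor
  · have := congrArg (fun p => Polynomial.coeff p 0) h
    simpa using this
  · have := congrArg (fun p => Polynomial.coeff p 1) h
    simpa [Polynomial.coeff_X_mul] using this

/-- the inductive data: a pair of polynomial vectors spanning a totally isotropic
plane for `f + t g` over `k(t)`, with degree bounds -/
def AmerHyp (A B : Matrix (Fin n) (Fin n) k) (dv dw : ℕ) (v w : Fin n → Polynomial k) : Prop :=
  (∀ i, (v i).natDegree ≤ dv) ∧ (∀ i, (w i).natDegree ≤ dw) ∧
  LinearIndependent (RatFunc k)
    ![fun i => algebraMap (Polynomial k) (RatFunc k) (v i),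
      fun i => algebraMap (Polynomial k) (RatFunc k) (w i)] ∧
  dd (A.map C) v v + X * dd (B.map C) v v = 0 ∧
  dd (A.map C) w w + X * dd (B.map C) w w = 0 ∧
  (dd (A.map C) v w + dd (A.map C) w v) + X * (dd (B.map C) v w + dd (B.map C) w v) = 0

/-- the desired conclusion : a common totally isotropic plane over `k` -/
def AmerConcl (A B : Matrix (Fin n) (Fin n) k) : Prop :=
  ∃ v₀ w₀ : Fin n → k, LinearIndependent k ![v₀, w₀] ∧
    dd A v₀ v₀ = 0 ∧ dd A w₀ w₀ = 0 ∧ dd A v₀ w₀ + dd A w₀ v₀ = 0 ∧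
    dd B v₀ v₀ = 0 ∧ dd B w₀ w₀ = 0 ∧ dd B v₀ w₀ + dd B w₀ v₀ = 0

lemma amerHyp_swap {A B : Matrix (Fin n) (Fin n) k} {dv dw : ℕ} {v w : Fin n → Polynomial k}
    (h : AmerHyp A B dv dw v w) : AmerHyp A B dw dv w v := by
  obtain ⟨hdv, hdw, hind, h1, h2, h3⟩ := h
  exact ⟨hdw, hdv, indep_pair_swap hind, h2, h1, by linear_combination h3⟩

lemma amer_base {A B : Matrix (Fin n) (Fin n) k} {v w : Fin n → Polynomial k}
    (h : AmerHyp A B 0 0 v w) : AmerConcl A B := by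
  obtain ⟨hdv, hdw, hind, h1, h2, h3⟩ := h
  refine ⟨fun i => (v i).coeff 0, fun i => (w i).coeff 0, ?_, ?_⟩
  case _ =>
    set v₀ : Fin n → k := fun i => (v i).coeff 0 with hv₀
    set w₀ : Fin n → k := fun i => (w i).coeff 0 with hw₀
    rw [LinearIndependent.pair_iff]
    rw [LinearIndependent.pair_iff] at hind
    intro a b hab
    have hv : ∀ i, v i = C (v₀ i) := fun i => Polynomial.eq_C_of_natDegree_le_zero (hdv i)
    have hw : ∀ i, w i = C (w₀ i) := fun i => Polynomial.eq_C_of_natDegree_le_zero (hdw i)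
    have key := hind (algebraMap k (RatFunc k) a) (algebraMap k (RatFunc k) b) ?_
    · exact ⟨by have := key.1; rwa [map_eq_zero_iff _ psi_inj] at this,
        by have := key.2; rwa [map_eq_zero_iff _ psi_inj] at this⟩
    · funext i
      have habi := congrFun hab i
      simp only [Pi.add_apply, Pi.smul_apply, smul_eq_mul, Pi.zero_apply] at habi ⊢
      rw [hv i, hw i, phi_C, phi_C, ← _root_.map_mul, ← _root_.map_mul, ← _root_.map_add,
        habi, map_zero]
  case _ =>
    have hv : v = fun i => C ((v i).coeff 0) :=
      funext fun i => Polynomial.eq_C_of_natDegree_le_zero (hdv i)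
    have hw : w = fun i => C ((w i).coeff 0) :=
      funext fun i => Polynomial.eq_C_of_natDegree_le_zero (hdw i)
    rw [hv, dd_map_const, dd_map_const] at h1
    rw [hw, dd_map_const, dd_map_const] at h2
    rw [hv, hw, dd_map_const, dd_map_const, dd_map_const, dd_map_const,
      ← Polynomial.C_add, ← Polynomial.C_add] at h3
    obtain ⟨e1, e2⟩ := CXC_zero h1
    obtain ⟨e3, e4⟩ := CXC_zero h2
    obtain ⟨e5, e6⟩ := CXC_zero h3
    exact ⟨e1, e3, e5, e2, e4, e6⟩

end Amer
section Reduce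
set_option synthInstance.maxHeartbeats 1000000
set_option maxHeartbeats 2000000

variable {k : Type*} [Field k] {n : ℕ}

lemma amer_reduce {A B : Matrix (Fin n) (Fin n) k} {dv dw : ℕ} {v w : Fin n → Polynomial k}
    (h : AmerHyp A B dv dw v w) (hdv1 : 1 ≤ dv) :
    ∃ dv' dw' v' w', dv' + dw' < dv + dw ∧ AmerHyp A B dv' dw' v' w' := by
  obtain ⟨hdv, hdw, hind, h1, h2, h3⟩ := h
  by_cases hu0 : cf dv v = 0
  · -- leading coefficient vector vanishes : just lower the degree bound
    refine ⟨dv - 1, dw, v, w, by omega, fun i => ?_, hdw, hind, h1, h2, h3⟩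
    rw [Polynomial.natDegree_le_iff_coeff_eq_zero]
    intro N hN
    rcases Nat.lt_or_ge dv N with hlt | hge
    · exact Polynomial.coeff_eq_zero_of_natDegree_lt (lt_of_le_of_lt (hdv i) hlt)
    · have hNdv : N = dv := by omega
      subst hNdv
      exact congrFun hu0 i
  · set u : Fin n → k := cf dv v with hu
    set U : Fin n → Polynomial k := fun i => C (u i) with hU
    have hUdeg : ∀ i, (U i).natDegree ≤ 0 := fun i => by
      rw [hU]; exact le_of_eq (Polynomial.natDegree_C _)
    have hUcf0 : cf 0 U = u := funext fun i => by simp [cf, hU]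
    have hUcf : ∀ j, 0 < j → cf j U = 0 := fun j hj => cf_eq_zero hUdeg hj
    -- F1 : g(u) = 0
    have F1 : dd B u u = 0 := by
      have e := congrArg (fun p => Polynomial.coeff p (dv + dv + 1)) h1
      simp only [Polynomial.coeff_add, Polynomial.coeff_zero, Polynomial.coeff_X_mul] at e
      rw [dd_coeff_bound A hdv hdv (by omega), dd_coeff_top B hdv hdv, zero_add] at e
      exact e
    -- F2 : f(u) + P_g(v₋, u) = 0
    have cB : (dd (B.map C) v v).coeff (dv + dv - 1)
        = dd B (cf (dv-1) v) u + dd B u (cf (dv-1) v) := by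
      have e := dd_coeff_two B (x := v) (m := dv - 1) (fun i => by have := hdv i; omega)
      rw [show 2 * (dv - 1) + 1 = dv + dv - 1 by omega, show dv - 1 + 1 = dv by omega] at e
      exact e
    have F2 : dd A u u + (dd B (cf (dv-1) v) u + dd B u (cf (dv-1) v)) = 0 := by
      have e := congrArg (fun p => Polynomial.coeff p (dv + dv)) h1
      simp only [Polynomial.coeff_add, Polynomial.coeff_zero] at e
      rw [show dv + dv = (dv + dv - 1) + 1 by omega, Polynomial.coeff_X_mul,
        show (dv + dv - 1) + 1 = dv + dv by omega, dd_coeff_top A hdv hdv, cB] at e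
      exact e
    -- F3 : P_g(u, w_top) = 0
    have F3 : dd B u (cf dw w) + dd B (cf dw w) u = 0 := by
      have t2 : (dd (B.map C) w v).coeff (dv + dw) = dd B (cf dw w) u := by
        have e := dd_coeff_top B hdw hdv
        rw [show dw + dv = dv + dw by omega] at e
        exact e
      have e := congrArg (fun p => Polynomial.coeff p (dv + dw + 1)) h3
      simp only [Polynomial.coeff_add, Polynomial.coeff_zero, Polynomial.coeff_X_mul] at e
      rw [dd_coeff_bound A hdv hdw (by omega), dd_coeff_bound A hdw hdv (by omega),
        dd_coeff_top B hdv hdw, t2] at e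
      simpa using e
    -- polar forms with U
    set α : Polynomial k := (dd (A.map C) v U + dd (A.map C) U v)
      + X * (dd (B.map C) v U + dd (B.map C) U v) with hα
    set β : Polynomial k := (dd (A.map C) w U + dd (A.map C) U w)
      + X * (dd (B.map C) w U + dd (B.map C) U w) with hβ
    have hαc : ∀ j, α.coeff (j+1)
        = (dd A (cf (j+1) v) u + dd A u (cf (j+1) v))
          + (dd B (cf j v) u + dd B u (cf j v)) := by
      intro j
      rw [hα, hU]
      simp only [Polynomial.coeff_add, Polynomial.coeff_X_mul]
      rw [dd_coeff_constr, dd_coeff_constl, dd_coeff_constr, dd_coeff_constl]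
    have hβc : ∀ j, β.coeff (j+1)
        = (dd A (cf (j+1) w) u + dd A u (cf (j+1) w))
          + (dd B (cf j w) u + dd B u (cf j w)) := by
      intro j
      rw [hβ, hU]
      simp only [Polynomial.coeff_add, Polynomial.coeff_X_mul]
      rw [dd_coeff_constr, dd_coeff_constl, dd_coeff_constr, dd_coeff_constl]
    have hαdeg : α.natDegree ≤ dv := by
      rw [Polynomial.natDegree_le_iff_coeff_eq_zero]
      intro N hN
      obtain ⟨j, rfl⟩ : ∃ j, N = j + 1 := ⟨N - 1, by omega⟩
      rw [hαc j]
      rcases eq_or_lt_of_le (show dv ≤ j by omega) with rfl | hj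
      · rw [cf_eq_zero hdv (by omega : dv < dv + 1), ← hu, F1]
        simp [dd_zerol, dd_zeror]
      · rw [cf_eq_zero hdv (by omega : dv < j + 1), cf_eq_zero hdv hj]
        simp [dd_zerol, dd_zeror]
    have hαtop : α.coeff dv = dd A u u := by
      have e := hαc (dv - 1)
      rw [show dv - 1 + 1 = dv by omega] at e
      rw [e, ← hu]
      linear_combination F2
    have hβdeg : β.natDegree ≤ dw := by
      rw [Polynomial.natDegree_le_iff_coeff_eq_zero]
      intro N hN
      obtain ⟨j, rfl⟩ : ∃ j, N = j + 1 := ⟨N - 1, by omega⟩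
      rw [hβc j]
      rcases eq_or_lt_of_le (show dw ≤ j by omega) with rfl | hj
      · rw [cf_eq_zero hdw (by omega : dw < dw + 1)]
        simp only [dd_zerol, dd_zeror]
        linear_combination F3
      · rw [cf_eq_zero hdw (by omega : dw < j + 1), cf_eq_zero hdw hj]
        simp [dd_zerol, dd_zeror]
    have hAUU : dd (A.map C) U U = C (dd A u u) := by rw [hU]; exact dd_map_const A u u
    have hBUU : dd (B.map C) U U = C (dd B u u) := by rw [hU]; exact dd_map_const B u u
    have hgu : (C (dd B u u) : Polynomial k) = 0 := by rw [F1, map_zero]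
    -- mapped facts over RatFunc
    have hindP := LinearIndependent.pair_iff.mp hind
    have PQv := congrArg (algebraMap (Polynomial k) (RatFunc k)) h1
    have PQw := congrArg (algebraMap (Polynomial k) (RatFunc k)) h2
    have PP3 := congrArg (algebraMap (Polynomial k) (RatFunc k)) h3
    have rα := congrArg (algebraMap (Polynomial k) (RatFunc k)) hα
    have rβ := congrArg (algebraMap (Polynomial k) (RatFunc k)) hβ
    simp only [_root_.map_add, _root_.map_mul, map_zero, RatFunc.algebraMap_X,
      dd_map_poly] at PQv PQw PP3 rα rβ
    have rAUU : dd (A.map (algebraMap k (RatFunc k)))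
        (fun i => algebraMap (Polynomial k) (RatFunc k) (U i))
        (fun i => algebraMap (Polynomial k) (RatFunc k) (U i))
        = algebraMap k (RatFunc k) (dd A u u) := by
      have e := congrArg (algebraMap (Polynomial k) (RatFunc k)) hAUU
      rw [dd_map_poly, phi_C] at e
      exact e
    have rBUU : dd (B.map (algebraMap k (RatFunc k)))
        (fun i => algebraMap (Polynomial k) (RatFunc k) (U i))
        (fun i => algebraMap (Polynomial k) (RatFunc k) (U i)) = 0 := by
      have e := congrArg (algebraMap (Polynomial k) (RatFunc k)) hBUU
      rw [dd_map_poly, F1, map_zero, map_zero] at e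
      exact e
    have hUK0 : (fun i => algebraMap (Polynomial k) (RatFunc k) (U i)) ≠ 0 := by
      obtain ⟨i0, hui0⟩ : ∃ i, u i ≠ 0 := by
        by_contra hc
        push_neg at hc
        exact hu0 (funext fun i => hc i)
      intro hz
      apply hui0
      have e := congrFun hz i0
      rw [hU] at e
      simp only [Pi.zero_apply, phi_C] at e
      exact (map_eq_zero_iff _ psi_inj).mp e
    have hWK0 : (fun i => algebraMap (Polynomial k) (RatFunc k) (w i)) ≠ 0 := by
      intro hz
      have e := hindP 0 1 (by rw [hz]; simp)
      exact one_ne_zero e.2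
    by_cases hfu : dd A u u = 0
    · -- f(u) = 0 branch
      have hQU : dd (A.map C) U U + X * dd (B.map C) U U = 0 := by
        rw [hAUU, hBUU, hfu, F1]
        simp
      have hCfu : (C (dd A u u) : Polynomial k) = 0 := by rw [hfu, map_zero]
      have hαdeg' : α.natDegree ≤ dv - 1 := by
        rw [Polynomial.natDegree_le_iff_coeff_eq_zero]
        intro N hN
        rcases Nat.lt_or_ge dv N with hlt | hge
        · exact Polynomial.coeff_eq_zero_of_natDegree_lt (lt_of_le_of_lt hαdeg hlt)
        · have hNdv : N = dv := by omega
          subst hNdv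
          rw [hαtop, hfu]
      by_cases hUsp : (fun i => algebraMap (Polynomial k) (RatFunc k) (U i)) ∈
          Submodule.span (RatFunc k)
            {(fun i => algebraMap (Polynomial k) (RatFunc k) (v i)),
             (fun i => algebraMap (Polynomial k) (RatFunc k) (w i))}
      · -- U lies in the plane
        obtain ⟨a, b, hab⟩ := Submodule.mem_span_pair.mp hUsp
        have hα0 : α = 0 := by
          apply phi_inj
          rw [map_zero, rα, ← hab]
          simp only [dd_addl, dd_addr, dd_smull, dd_smulr]
          linear_combination (2*a) * PQv + b * PP3
        have hβ0 : β = 0 := by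
          apply phi_inj
          rw [map_zero, rβ, ← hab]
          simp only [dd_addl, dd_addr, dd_smull, dd_smulr]
          linear_combination a * PP3 + (2*b) * PQw
        by_cases hb : b = 0
        · -- b = 0 : U is a multiple of v ; new pair (U, w)
          have ha : a ≠ 0 := by
            rintro rfl
            rw [hb] at hab
            simp only [zero_smul, add_zero, zero_add] at hab
            exact hUK0 hab.symm
          refine ⟨0, dw, U, w, by omega, hUdeg, hdw, ?_, hQU, h2, ?_⟩
          · rw [LinearIndependent.pair_iff]
            intro s t hst
            rw [← hab, hb] at hst
            have e := hindP (s * a) t ?_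
            · refine ⟨?_, e.2⟩
              rcases mul_eq_zero.mp e.1 with h' | h'
              · exact h'
              · exact absurd h' ha
            · rw [← hst]
              funext i
              simp only [Pi.add_apply, Pi.smul_apply, smul_eq_mul, Pi.zero_apply]
              ring
          · linear_combination (hβ.symm.trans hβ0)
        · -- b ≠ 0 : new pair (U, v - X^dv • U)
          refine ⟨0, dv - 1, U, v - (X : Polynomial k)^dv • U, by omega, hUdeg, ?_, ?_, hQU,
            ?_, ?_⟩
          · intro i
            rw [Polynomial.natDegree_le_iff_coeff_eq_zero]
            intro N hN
            simp only [Pi.sub_apply, Pi.smul_apply, smul_eq_mul, Polynomial.coeff_sub, hU]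
            rw [show (X : Polynomial k)^dv * C (u i) = C (u i) * X^dv from mul_comm _ _,
              Polynomial.coeff_C_mul, Polynomial.coeff_X_pow]
            rcases Nat.lt_or_ge dv N with hlt | hge
            · rw [Polynomial.coeff_eq_zero_of_natDegree_lt (lt_of_le_of_lt (hdv i) hlt),
                if_neg (by omega)]
              ring
            · have hNdv : N = dv := by omega
              have hui : (v i).coeff dv = u i := (congrFun hu i).symm
              rw [hNdv, if_pos rfl, hui]
              ring
          · rw [LinearIndependent.pair_iff]
            intro s t hst
            have hvK : (fun i => algebraMap (Polynomial k) (RatFunc k)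
                  ((v - (X : Polynomial k)^dv • U) i))
                = (fun i => algebraMap (Polynomial k) (RatFunc k) (v i))
                  - ((RatFunc.X : RatFunc k))^dv
                    • (fun i => algebraMap (Polynomial k) (RatFunc k) (U i)) := by
              funext i
              simp only [Pi.sub_apply, Pi.smul_apply, smul_eq_mul, map_sub, _root_.map_mul,
                map_pow, RatFunc.algebraMap_X]
            rw [hvK, ← hab] at hst
            have e := hindP (t + a * (s - t * RatFunc.X^dv)) (b * (s - t * RatFunc.X^dv)) ?_
            · have e3 : s - t * RatFunc.X^dv = 0 := by
                rcases mul_eq_zero.mp e.2 with h' | h'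
                · exact absurd h' hb
                · exact h'
              have e4 : t = 0 := by
                have e1 := e.1
                rw [e3, mul_zero, add_zero] at e1
                exact e1
              refine ⟨?_, e4⟩
              have e5 := e3
              rw [e4, zero_mul, sub_zero] at e5
              exact e5
            · rw [← hst]
              funext i
              simp only [Pi.add_apply, Pi.sub_apply, Pi.smul_apply, smul_eq_mul, Pi.zero_apply]
              ring
          · simp only [dd_subl, dd_subr, dd_smull, dd_smulr]
            linear_combination h1 - (X : Polynomial k)^dv * hα.symm - (X : Polynomial k)^dv * hα0
              + ((X : Polynomial k)^dv)^2 * hAUU + ((X : Polynomial k)^dv)^2 * hCfu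
              + ((X : Polynomial k)^dv)^2 * X * hBUU + ((X : Polynomial k)^dv)^2 * X * hgu
          · simp only [dd_subl, dd_subr, dd_smull, dd_smulr]
            linear_combination hα.symm + hα0 - 2*(X : Polynomial k)^dv*hAUU
              - 2*(X : Polynomial k)^dv*hCfu - 2*(X : Polynomial k)^dv*X*hBUU
              - 2*(X : Polynomial k)^dv*X*hgu
      · by_cases hbz : β = 0
        · -- U outside the plane, β = 0 : pair (U, w)
          refine ⟨0, dw, U, w, by omega, hUdeg, hdw, ?_, hQU, h2, ?_⟩
          · rw [LinearIndependent.pair_iff]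
            intro s t hst
            by_cases hs : s = 0
            · refine ⟨hs, ?_⟩
              rw [hs, zero_smul, zero_add] at hst
              rcases smul_eq_zero.mp hst with h' | h'
              · exact h'
              · exact absurd h' hWK0
            · exfalso
              apply hUsp
              refine Submodule.mem_span_pair.mpr ⟨0, -t/s, ?_⟩
              funext i
              have e := congrFun hst i
              simp only [Pi.add_apply, Pi.smul_apply, smul_eq_mul, Pi.zero_apply] at e ⊢
              field_simp
              linear_combination -e
          · linear_combination (hβ.symm.trans hbz)
        · -- U outside the plane, β ≠ 0 : the main new pair (U, y')
          refine ⟨0, dv + dw - 1, U,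
            β • v - α • w - (C (β.coeff dw) * (X : Polynomial k)^(dv+dw)) • U, by omega,
            hUdeg, ?_, ?_, hQU, ?_, ?_⟩
          · intro i
            rw [Polynomial.natDegree_le_iff_coeff_eq_zero]
            intro N hN
            simp only [Pi.sub_apply, Pi.smul_apply, smul_eq_mul, Polynomial.coeff_sub, hU]
            rw [show (C (β.coeff dw) * (X : Polynomial k)^(dv+dw)) * C (u i)
                = C (β.coeff dw * u i) * X^(dv+dw) by rw [Polynomial.C_mul]; ring,
              Polynomial.coeff_C_mul, Polynomial.coeff_X_pow]
            have hαw : ((α * w i).natDegree : ℕ) ≤ (dv - 1) + dw :=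
              le_trans Polynomial.natDegree_mul_le (add_le_add hαdeg' (hdw i))
            rcases Nat.lt_or_ge (dv + dw) N with hlt | hge
            · rw [Polynomial.coeff_eq_zero_of_natDegree_lt
                  (lt_of_le_of_lt (le_trans Polynomial.natDegree_mul_le
                    (add_le_add hβdeg (hdv i))) (by omega)),
                Polynomial.coeff_eq_zero_of_natDegree_lt (lt_of_le_of_lt hαw (by omega)),
                if_neg (by omega)]
              ring
            · have hND : N = dv + dw := by omega
              rw [hND, Polynomial.coeff_eq_zero_of_natDegree_lt (lt_of_le_of_lt hαw (by omega)),
                if_pos rfl]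
              have e := coeff_mul_top (a := dw) (b := dv) hβdeg (hdv i)
              rw [show dw + dv = dv + dw by omega] at e
              have hui : (v i).coeff dv = u i := (congrFun hu i).symm
              rw [e, hui]
              ring
          · rw [LinearIndependent.pair_iff]
            intro s t hst
            have hyK : (fun i => algebraMap (Polynomial k) (RatFunc k)
                  ((β • v - α • w - (C (β.coeff dw) * (X : Polynomial k)^(dv+dw)) • U) i))
                = (algebraMap (Polynomial k) (RatFunc k) β)
                    • (fun i => algebraMap (Polynomial k) (RatFunc k) (v i))
                  - (algebraMap (Polynomial k) (RatFunc k) α)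
                    • (fun i => algebraMap (Polynomial k) (RatFunc k) (w i))
                  - (algebraMap (Polynomial k) (RatFunc k)
                      (C (β.coeff dw) * (X : Polynomial k)^(dv+dw)))
                    • (fun i => algebraMap (Polynomial k) (RatFunc k) (U i)) := by
              funext i
              simp only [Pi.sub_apply, Pi.smul_apply, smul_eq_mul, map_sub, _root_.map_mul]
            rw [hyK] at hst
            set γK := algebraMap (Polynomial k) (RatFunc k)
              (C (β.coeff dw) * (X : Polynomial k)^(dv+dw)) with hγK
            by_cases hsc : s - t * γK = 0
            · have e := hindP (t * algebraMap (Polynomial k) (RatFunc k) β)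
                (-(t * algebraMap (Polynomial k) (RatFunc k) α)) ?_
              · have hβK : algebraMap (Polynomial k) (RatFunc k) β ≠ 0 := by
                  rw [Ne, map_eq_zero_iff _ phi_inj]
                  exact hbz
                have e4 : t = 0 := by
                  rcases mul_eq_zero.mp e.1 with h' | h'
                  · exact h'
                  · exact absurd h' hβK
                refine ⟨?_, e4⟩
                have e5 := hsc
                rw [e4, zero_mul, sub_zero] at e5
                exact e5
              · rw [← hst]
                funext i
                simp only [Pi.add_apply, Pi.sub_apply, Pi.smul_apply, smul_eq_mul,
                  Pi.neg_apply, neg_mul]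
                rw [sub_eq_zero.mp hsc]
                ring
            · exfalso
              apply hUsp
              refine Submodule.mem_span_pair.mpr
                ⟨-(t * algebraMap (Polynomial k) (RatFunc k) β) / (s - t * γK),
                 t * algebraMap (Polynomial k) (RatFunc k) α / (s - t * γK), ?_⟩
              funext i
              have e := congrFun hst i
              simp only [Pi.add_apply, Pi.sub_apply, Pi.smul_apply, smul_eq_mul,
                Pi.zero_apply] at e ⊢
              rw [div_mul_eq_mul_div, div_mul_eq_mul_div, ← add_div, eq_comm,
                eq_div_iff hsc]
              linear_combination e
          · simp only [dd_subl, dd_subr, dd_smull, dd_smulr, dd_addl, dd_addr]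
            linear_combination β^2 * h1 + α^2 * h2 - β*α*h3
              - β*(C (β.coeff dw) * (X : Polynomial k)^(dv+dw))*hα.symm
              + α*(C (β.coeff dw) * (X : Polynomial k)^(dv+dw))*hβ.symm
              + (C (β.coeff dw) * (X : Polynomial k)^(dv+dw))^2*hAUU
              + (C (β.coeff dw) * (X : Polynomial k)^(dv+dw))^2*hCfu
              + (C (β.coeff dw) * (X : Polynomial k)^(dv+dw))^2*X*hBUU
              + (C (β.coeff dw) * (X : Polynomial k)^(dv+dw))^2*X*hgu
          · simp only [dd_subl, dd_subr, dd_smull, dd_smulr, dd_addl, dd_addr]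
            linear_combination β*hα.symm - α*hβ.symm
              - 2*(C (β.coeff dw) * (X : Polynomial k)^(dv+dw))*hAUU
              - 2*(C (β.coeff dw) * (X : Polynomial k)^(dv+dw))*hCfu
              - 2*(C (β.coeff dw) * (X : Polynomial k)^(dv+dw))*X*hBUU
              - 2*(C (β.coeff dw) * (X : Polynomial k)^(dv+dw))*X*hgu
    · -- reflection branch f(u) ≠ 0
      refine ⟨dv - 1, dw, C (dd A u u) • v - α • U, C (dd A u u) • w - β • U, by omega,
        ?_, ?_, ?_, ?_, ?_, ?_⟩
      · intro i
        rw [Polynomial.natDegree_le_iff_coeff_eq_zero]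
        intro N hN
        simp only [Pi.sub_apply, Pi.smul_apply, smul_eq_mul, Polynomial.coeff_sub, hU,
          Polynomial.coeff_C_mul]
        rw [Polynomial.coeff_mul_C]
        rcases Nat.lt_or_ge dv N with hlt | hge
        · rw [Polynomial.coeff_eq_zero_of_natDegree_lt (lt_of_le_of_lt (hdv i) hlt),
            Polynomial.coeff_eq_zero_of_natDegree_lt (lt_of_le_of_lt hαdeg hlt)]
          ring
        · have hNdv : N = dv := by omega
          have hui : (v i).coeff dv = u i := (congrFun hu i).symm
          rw [hNdv, hui, hαtop]
          ring
      · intro i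
        rw [Polynomial.natDegree_le_iff_coeff_eq_zero]
        intro N hN
        simp only [Pi.sub_apply, Pi.smul_apply, smul_eq_mul, Polynomial.coeff_sub, hU,
          Polynomial.coeff_C_mul]
        rw [Polynomial.coeff_mul_C,
          Polynomial.coeff_eq_zero_of_natDegree_lt (lt_of_le_of_lt (hdw i) hN),
          Polynomial.coeff_eq_zero_of_natDegree_lt (lt_of_le_of_lt hβdeg hN)]
        ring
      · -- independence via the polar functional with U
        rw [LinearIndependent.pair_iff]
        intro s t hst
        have hvK : (fun i => algebraMap (Polynomial k) (RatFunc k)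
              ((C (dd A u u) • v - α • U) i))
            = (algebraMap k (RatFunc k) (dd A u u))
                • (fun i => algebraMap (Polynomial k) (RatFunc k) (v i))
              - (algebraMap (Polynomial k) (RatFunc k) α)
                • (fun i => algebraMap (Polynomial k) (RatFunc k) (U i)) := by
          funext i
          simp only [Pi.sub_apply, Pi.smul_apply, smul_eq_mul, map_sub, _root_.map_mul, phi_C]
        have hwK : (fun i => algebraMap (Polynomial k) (RatFunc k)
              ((C (dd A u u) • w - β • U) i))
            = (algebraMap k (RatFunc k) (dd A u u))
                • (fun i => algebraMap (Polynomial k) (RatFunc k) (w i))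
              - (algebraMap (Polynomial k) (RatFunc k) β)
                • (fun i => algebraMap (Polynomial k) (RatFunc k) (U i)) := by
          funext i
          simp only [Pi.sub_apply, Pi.smul_apply, smul_eq_mul, map_sub, _root_.map_mul, phi_C]
        rw [hvK, hwK] at hst
        have key := congrArg (fun z : Fin n → RatFunc k =>
          (dd (A.map (algebraMap k (RatFunc k))) z
              (fun i => algebraMap (Polynomial k) (RatFunc k) (U i))
            + dd (A.map (algebraMap k (RatFunc k)))
              (fun i => algebraMap (Polynomial k) (RatFunc k) (U i)) z)
          + RatFunc.X * (dd (B.map (algebraMap k (RatFunc k))) z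
              (fun i => algebraMap (Polynomial k) (RatFunc k) (U i))
            + dd (B.map (algebraMap k (RatFunc k)))
              (fun i => algebraMap (Polynomial k) (RatFunc k) (U i)) z)) hst
        simp only [dd_addl, dd_addr, dd_subl, dd_subr, dd_smull, dd_smulr, dd_zerol,
          dd_zeror, mul_zero, add_zero, zero_add] at key
        have hψfu : algebraMap k (RatFunc k) (dd A u u) ≠ 0 := by
          rw [Ne, map_eq_zero_iff _ psi_inj]
          exact hfu
        have hsum : s * algebraMap (Polynomial k) (RatFunc k) α
            + t * algebraMap (Polynomial k) (RatFunc k) β = 0 := by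
          have e2 : algebraMap k (RatFunc k) (dd A u u) *
              (s * algebraMap (Polynomial k) (RatFunc k) α
                + t * algebraMap (Polynomial k) (RatFunc k) β) = 0 := by
            linear_combination (-1 : RatFunc k) * key
              - s * (algebraMap k (RatFunc k) (dd A u u)) * rα
              - t * (algebraMap k (RatFunc k) (dd A u u)) * rβ
              - 2 * (s * algebraMap (Polynomial k) (RatFunc k) α
                  + t * algebraMap (Polynomial k) (RatFunc k) β) * rAUU
              - 2 * RatFunc.X * (s * algebraMap (Polynomial k) (RatFunc k) α
                  + t * algebraMap (Polynomial k) (RatFunc k) β) * rBUU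
          rcases mul_eq_zero.mp e2 with h' | h'
          · exact absurd h' hψfu
          · exact h'
        have e := hindP (s * algebraMap k (RatFunc k) (dd A u u))
          (t * algebraMap k (RatFunc k) (dd A u u)) ?_
        · constructor
          · rcases mul_eq_zero.mp e.1 with h' | h'
            · exact h'
            · exact absurd h' hψfu
          · rcases mul_eq_zero.mp e.2 with h' | h'
            · exact h'
            · exact absurd h' hψfu
        · funext i
          have e0 := congrFun hst i
          simp only [Pi.add_apply, Pi.sub_apply, Pi.smul_apply, smul_eq_mul,
            Pi.zero_apply] at e0 ⊢
          linear_combination e0 + (algebraMap (Polynomial k) (RatFunc k) (U i)) * hsum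
      · simp only [dd_subl, dd_subr, dd_smull, dd_smulr]
        linear_combination (C (dd A u u))^2 * h1 - C (dd A u u) * α * hα.symm
          + α^2 * hAUU + α^2 * X * hBUU + α^2 * X * hgu
      · simp only [dd_subl, dd_subr, dd_smull, dd_smulr]
        linear_combination (C (dd A u u))^2 * h2 - C (dd A u u) * β * hβ.symm
          + β^2 * hAUU + β^2 * X * hBUU + β^2 * X * hgu
      · simp only [dd_subl, dd_subr, dd_smull, dd_smulr]
        linear_combination (C (dd A u u))^2 * h3 - C (dd A u u) * β * hα.symm
          - C (dd A u u) * α * hβ.symm + 2*α*β*hAUU + 2*α*β*X*hBUU + 2*α*β*X*hgu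

end Reduce
section Outer

variable {k : Type*} [Field k] {n : ℕ}

lemma indep_constants (v w : Fin n → k) (h : LinearIndependent k ![v, w]) :
    LinearIndependent (RatFunc k)
      ![fun i => algebraMap k (RatFunc k) (v i), fun i => algebraMap k (RatFunc k) (w i)] := by
  rw [LinearIndependent.pair_iff] at h ⊢
  have hm : ∃ i j, v i * w j - v j * w i ≠ 0 := by
    by_contra hc
    push_neg at hc
    have hv0 : ∃ i₀, v i₀ ≠ 0 := by
      by_contra hv
      push_neg at hv
      have h10 := h 1 0 (by funext i; simp [hv i])
      exact one_ne_zero h10.1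
    obtain ⟨i₀, hi₀⟩ := hv0
    have hrel := h (w i₀) (-(v i₀)) ?_
    · exact hi₀ (neg_eq_zero.mp hrel.2)
    · funext j
      have h2 := hc j i₀
      simp only [Pi.add_apply, Pi.smul_apply, smul_eq_mul, Pi.zero_apply]
      linear_combination h2
  obtain ⟨i, j, hij⟩ := hm
  intro s t hst
  have Hi := congrFun hst i
  have Hj := congrFun hst j
  simp only [Pi.add_apply, Pi.smul_apply, smul_eq_mul, Pi.zero_apply] at Hi Hj
  have hminor : algebraMap k (RatFunc k) (v i * w j - v j * w i) ≠ 0 := by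
    rw [Ne, map_eq_zero_iff _ psi_inj]
    exact hij
  have hs : s * algebraMap k (RatFunc k) (v i * w j - v j * w i) = 0 := by
    rw [map_sub, _root_.map_mul, _root_.map_mul]
    linear_combination (algebraMap k (RatFunc k) (w j)) * Hi
      - (algebraMap k (RatFunc k) (w i)) * Hj
  have hs0 : s = 0 := by
    rcases mul_eq_zero.mp hs with h' | h'
    · exact h'
    · exact absurd h' hminor
  refine ⟨hs0, ?_⟩
  subst hs0
  rw [zero_mul, zero_add] at Hi Hj
  by_contra ht
  have hwi : w i = 0 := by
    have := (mul_eq_zero.mp Hi).resolve_left ht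
    rwa [map_eq_zero_iff _ psi_inj] at this
  have hwj : w j = 0 := by
    have := (mul_eq_zero.mp Hj).resolve_left ht
    rwa [map_eq_zero_iff _ psi_inj] at this
  rw [hwi, hwj] at hij
  simp at hij

lemma exists_poly_rep (x : Fin n → RatFunc k) :
    ∃ (q : Polynomial k) (p : Fin n → Polynomial k), q ≠ 0 ∧
      ∀ i, algebraMap (Polynomial k) (RatFunc k) (p i)
        = algebraMap (Polynomial k) (RatFunc k) q * x i := by
  refine ⟨∏ j, (x j).denom, fun i => (x i).num * ∏ j ∈ Finset.univ.erase i, (x j).denom,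
    Finset.prod_ne_zero_iff.mpr fun j _ => RatFunc.denom_ne_zero _, fun i => ?_⟩
  have hd : algebraMap (Polynomial k) (RatFunc k) ((x i).denom) ≠ 0 := by
    rw [Ne, map_eq_zero_iff _ phi_inj]
    exact RatFunc.denom_ne_zero _
  have key : algebraMap (Polynomial k) (RatFunc k) ((x i).denom) * x i
      = algebraMap (Polynomial k) (RatFunc k) ((x i).num) := by
    rw [mul_comm, ← eq_div_iff hd]
    exact (RatFunc.num_div_denom (x i)).symm
  have hprod : (x i).denom * ∏ j ∈ Finset.univ.erase i, (x j).denom = ∏ j, (x j).denom :=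
    Finset.mul_prod_erase Finset.univ (fun j => (x j).denom) (Finset.mem_univ i)
  rw [_root_.map_mul, ← key, ← hprod, _root_.map_mul]
  ring

lemma amer_descent_s4 (A B : Matrix (Fin n) (Fin n) k) :
    ∀ D dv dw (v w : Fin n → Polynomial k), dv + dw ≤ D →
      AmerHyp A B dv dw v w → AmerConcl A B := by
  intro D
  induction D using Nat.strong_induction_on with
  | _ D IH =>
    intro dv dw v w hle h
    rcases Nat.eq_zero_or_pos dv with hdv | hdv
    · rcases Nat.eq_zero_or_pos dw with hdw | hdw
      · subst hdv; subst hdw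
        exact amer_base h
      · obtain ⟨dv', dw', v', w', hlt, h'⟩ := amer_reduce (amerHyp_swap h) hdw
        exact IH (dv' + dw') (by omega) dv' dw' v' w' le_rfl h'
    · obtain ⟨dv', dw', v', w', hlt, h'⟩ := amer_reduce h hdv
      exact IH (dv' + dw') (by omega) dv' dw' v' w' le_rfl h'

end Outer

set_option synthInstance.maxHeartbeats 400000 in
set_option maxHeartbeats 2000000 in
/-- **Amer's theorem for planes.** -/
theorem amer_planes {k : Type*} [Field k] [Infinite k] (h2 : (2 : k) ≠ 0) {n : ℕ}
    (A B : Matrix (Fin n) (Fin n) k) :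
    (∃ v w : Fin n → k, LinearIndependent k ![v, w] ∧
        ∀ x ∈ Submodule.span k {v, w},
          x ⬝ᵥ A.mulVec x = 0 ∧ x ⬝ᵥ B.mulVec x = 0) ↔
      (∃ v w : Fin n → RatFunc k, LinearIndependent (RatFunc k) ![v, w] ∧
        ∀ x ∈ Submodule.span (RatFunc k) {v, w},
          x ⬝ᵥ (A.map (algebraMap k (RatFunc k))
              + (RatFunc.X : RatFunc k) • B.map (algebraMap k (RatFunc k))).mulVec x = 0) := by
  constructor
  · rintro ⟨v, w, hind, hvan⟩
    have hA := (span_vanish_iff A v w).mp (fun x hx => (hvan x hx).1)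
    have hB := (span_vanish_iff B v w).mp (fun x hx => (hvan x hx).2)
    refine ⟨fun i => algebraMap k (RatFunc k) (v i), fun i => algebraMap k (RatFunc k) (w i),
      indep_constants v w hind, ?_⟩
    rw [span_vanish_iff]
    refine ⟨?_, ?_, ?_⟩
    · rw [dd_matrix_add, dd_matrix_smul, ← dd_map (algebraMap k (RatFunc k)) A v v,
        ← dd_map (algebraMap k (RatFunc k)) B v v, hA.1, hB.1]
      simp
    · rw [dd_matrix_add, dd_matrix_smul, ← dd_map (algebraMap k (RatFunc k)) A w w,
        ← dd_map (algebraMap k (RatFunc k)) B w w, hA.2.1, hB.2.1]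
      simp
    · rw [dd_matrix_add, dd_matrix_smul, dd_matrix_add, dd_matrix_smul,
        ← dd_map (algebraMap k (RatFunc k)) A v w, ← dd_map (algebraMap k (RatFunc k)) A w v,
        ← dd_map (algebraMap k (RatFunc k)) B v w, ← dd_map (algebraMap k (RatFunc k)) B w v]
      have h3A : algebraMap k (RatFunc k) (dd A v w) + algebraMap k (RatFunc k) (dd A w v)
          = 0 := by rw [← _root_.map_add, hA.2.2, map_zero]
      have h3B : algebraMap k (RatFunc k) (dd B v w) + algebraMap k (RatFunc k) (dd B w v)
          = 0 := by rw [← _root_.map_add, hB.2.2, map_zero]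
      linear_combination h3A + (RatFunc.X : RatFunc k) * h3B
  · rintro ⟨vK, wK, hind, hvan⟩
    have hq := (span_vanish_iff _ vK wK).mp hvan
    obtain ⟨qv, pv, hqv, hpv⟩ := exists_poly_rep vK
    obtain ⟨qw, pw, hqw, hpw⟩ := exists_poly_rep wK
    have hQv : algebraMap (Polynomial k) (RatFunc k) qv ≠ 0 := by
      rw [Ne, map_eq_zero_iff _ phi_inj]; exact hqv
    have hQw : algebraMap (Polynomial k) (RatFunc k) qw ≠ 0 := by
      rw [Ne, map_eq_zero_iff _ phi_inj]; exact hqw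
    have hVv : (fun i => algebraMap (Polynomial k) (RatFunc k) (pv i))
        = fun i => algebraMap (Polynomial k) (RatFunc k) qv * vK i := funext fun i => hpv i
    have hVw : (fun i => algebraMap (Polynomial k) (RatFunc k) (pw i))
        = fun i => algebraMap (Polynomial k) (RatFunc k) qw * wK i := funext fun i => hpw i
    have hMA : ∀ x y : Fin n → RatFunc k,
        dd (A.map (algebraMap k (RatFunc k))
              + (RatFunc.X : RatFunc k) • B.map (algebraMap k (RatFunc k))) x y
        = dd (A.map (algebraMap k (RatFunc k))) x y
          + RatFunc.X * dd (B.map (algebraMap k (RatFunc k))) x y := by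
      intro x y
      rw [dd_matrix_add, dd_matrix_smul]
    have hhyp : AmerHyp A B (Finset.univ.sup fun i => (pv i).natDegree)
        (Finset.univ.sup fun i => (pw i).natDegree) pv pw := by
      refine ⟨fun i => Finset.le_sup (f := fun i => (pv i).natDegree) (Finset.mem_univ i),
        fun i => Finset.le_sup (f := fun i => (pw i).natDegree) (Finset.mem_univ i),
        ?_, ?_, ?_, ?_⟩
      · rw [LinearIndependent.pair_iff]
        rw [LinearIndependent.pair_iff] at hind
        intro s t hst
        have key := hind (s * algebraMap (Polynomial k) (RatFunc k) qv)
          (t * algebraMap (Polynomial k) (RatFunc k) qw) ?_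
        · constructor
          · rcases mul_eq_zero.mp key.1 with h' | h'
            · exact h'
            · exact absurd h' hQv
          · rcases mul_eq_zero.mp key.2 with h' | h'
            · exact h'
            · exact absurd h' hQw
        · rw [← hst, hVv, hVw]
          funext i
          simp only [Pi.add_apply, Pi.smul_apply, smul_eq_mul]
          ring
      · apply phi_inj
        rw [_root_.map_add, _root_.map_mul, dd_map_poly, dd_map_poly, RatFunc.algebraMap_X,
          hVv, map_zero]
        have e1 : (fun i => algebraMap (Polynomial k) (RatFunc k) qv * vK i)
            = algebraMap (Polynomial k) (RatFunc k) qv • vK := rfl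
        rw [e1, dd_smull, dd_smulr, dd_smull, dd_smulr]
        have := hq.1
        rw [hMA vK vK] at this
        linear_combination (algebraMap (Polynomial k) (RatFunc k) qv)^2 * this
      · apply phi_inj
        rw [_root_.map_add, _root_.map_mul, dd_map_poly, dd_map_poly, RatFunc.algebraMap_X,
          hVw, map_zero]
        have e1 : (fun i => algebraMap (Polynomial k) (RatFunc k) qw * wK i)
            = algebraMap (Polynomial k) (RatFunc k) qw • wK := rfl
        rw [e1, dd_smull, dd_smulr, dd_smull, dd_smulr]
        have := hq.2.1
        rw [hMA wK wK] at this
        linear_combination (algebraMap (Polynomial k) (RatFunc k) qw)^2 * this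
      · apply phi_inj
        rw [_root_.map_add, _root_.map_mul, _root_.map_add, _root_.map_add, dd_map_poly,
          dd_map_poly, dd_map_poly, dd_map_poly, RatFunc.algebraMap_X, hVv, hVw, map_zero]
        have e1 : (fun i => algebraMap (Polynomial k) (RatFunc k) qv * vK i)
            = algebraMap (Polynomial k) (RatFunc k) qv • vK := rfl
        have e2 : (fun i => algebraMap (Polynomial k) (RatFunc k) qw * wK i)
            = algebraMap (Polynomial k) (RatFunc k) qw • wK := rfl
        rw [e1, e2, dd_smull, dd_smulr, dd_smull, dd_smulr, dd_smull, dd_smulr, dd_smull,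
          dd_smulr]
        have := hq.2.2
        rw [hMA vK wK, hMA wK vK] at this
        linear_combination (algebraMap (Polynomial k) (RatFunc k) qv)
          * (algebraMap (Polynomial k) (RatFunc k) qw) * this
    obtain ⟨v₀, w₀, hind₀, e1, e2, e3, e4, e5, e6⟩ :=
      amer_descent_s4 A B _ _ _ pv pw le_rfl hhyp
    refine ⟨v₀, w₀, hind₀, fun x hx => ?_⟩
    exact ⟨(span_vanish_iff A v₀ w₀).mpr ⟨e1, e2, e3⟩ x hx,
      (span_vanish_iff B v₀ w₀).mpr ⟨e4, e5, e6⟩ x hx⟩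
end

section
/- (Chevalley–Warning) Every finite field is a C₁ field: if F is a finite field and f is a homogeneous polynomial of degree d in n variables over F with n > d, then f has a nontrivial zero in Fⁿ. -/
/-- A field `K` is a `Cᵢ` field if every homogeneous polynomial of degree `d > 0`
in `n > dⁱ` variables over `K` has a nontrivial zero. -/
def IsCiField (i : ℕ) (K : Type*) [Field K] : Prop :=
  ∀ (d n : ℕ), 0 < d → d ^ i < n → ∀ f : MvPolynomial (Fin n) K,
    f.IsHomogeneous d → ∃ v : Fin n → K, v ≠ 0 ∧ MvPolynomial.eval v f = 0

/-- **Chevalley–Warning**: every finite field is a `C₁` field: a homogeneous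
polynomial of degree `d > 0` in `n > d` variables over a finite field `F` has a
nontrivial zero in `Fⁿ`. -/
theorem chevalley_warning_C1 (F : Type*) [Field F] [Fintype F] : IsCiField 1 F := by
  classical
  intro d n hd hdn f hf
  obtain ⟨p, hp⟩ := CharP.exists F
  haveI : Fact p.Prime := ⟨CharP.char_is_prime F p⟩
  have htd : f.totalDegree < Fintype.card (Fin n) := by
    simpa using lt_of_le_of_lt hf.totalDegree_le (by simpa using hdn)
  have hdv := char_dvd_card_solutions p htd
  have h0 : MvPolynomial.eval (0 : Fin n → F) f = 0 := by
    have hc : MvPolynomial.coeff 0 f = 0 :=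
      hf.coeff_eq_zero (by simp [Finsupp.degree]; omega)
    rw [MvPolynomial.eval_zero]
    simpa [MvPolynomial.constantCoeff_eq] using hc
  have hpos : 0 < Fintype.card { x : Fin n → F // MvPolynomial.eval x f = 0 } :=
    Fintype.card_pos_iff.mpr ⟨⟨0, h0⟩⟩
  have h1 : 1 < Fintype.card { x : Fin n → F // MvPolynomial.eval x f = 0 } := by
    have := Nat.le_of_dvd hpos hdv
    have := (Fact.out : p.Prime).two_le
    omega
  obtain ⟨⟨v, hv⟩, ⟨w, hw⟩, hne⟩ := Fintype.exists_pair_of_one_lt_card h1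
  by_cases h : v = 0
  · exact ⟨w, fun hw0 => hne (by subst h; simp [Subtype.ext_iff, hw0]), hw⟩
  · exact ⟨v, h, hv⟩
end

section
/- (Springer's theorem) Let k be a field of characteristic not 2, let q be an anisotropic quadratic form over k, and let K/k be a finite field extension of odd degree. Then q remains anisotropic over K. -/
open Matrix

open Polynomial in
private lemma springer_map_dot {R S : Type*} [CommRing R] [CommRing S] (φ : R →+* S) {n : ℕ}
    (A : Matrix (Fin n) (Fin n) R) (M : Matrix (Fin n) (Fin n) S)
    (hM : ∀ i j, M i j = φ (A i j)) (v : Fin n → R) :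
    (fun i => φ (v i)) ⬝ᵥ M.mulVec (fun i => φ (v i)) = φ (v ⬝ᵥ A.mulVec v) := by
  simp [dotProduct, mulVec, hM, map_sum, _root_.map_mul, Finset.mul_sum]

open Polynomial in
private lemma springer_odd_factor {k : Type*} [Field k] :
    ∀ (N : ℕ) (h : k[X]), h.natDegree ≤ N → h ≠ 0 → Odd h.natDegree →
      ∃ p : k[X], Irreducible p ∧ p ∣ h ∧ Odd p.natDegree := by
  intro N
  induction N with
  | zero =>
    intro h hle h0 hodd
    exact absurd hodd (by simp [Nat.le_zero.mp hle])
  | succ N IHN =>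
    intro h hle h0 hodd
    have hnu : ¬ IsUnit h := fun hu => by
      simp [Polynomial.natDegree_eq_zero_of_isUnit hu] at hodd
    obtain ⟨p, hp, hpd⟩ := WfDvdMonoid.exists_irreducible_factor hnu h0
    by_cases hpo : Odd p.natDegree
    · exact ⟨p, hp, hpd, hpo⟩
    · obtain ⟨h2, hh2⟩ := hpd
      have hp0 : p ≠ 0 := hp.ne_zero
      have hh20 : h2 ≠ 0 := fun hz => h0 (by rw [hh2, hz, mul_zero])
      have hdeg : h.natDegree = p.natDegree + h2.natDegree := by
        rw [hh2, Polynomial.natDegree_mul hp0 hh20]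
      have hppos : 0 < p.natDegree := hp.natDegree_pos
      have h2odd : Odd h2.natDegree := by
        rw [Nat.odd_iff] at hodd ⊢
        rw [Nat.not_odd_iff] at hpo
        omega
      obtain ⟨q, hq, hqd, hqo⟩ := IHN h2 (by omega) hh20 h2odd
      exact ⟨q, hq, hqd.trans ⟨p, by rw [hh2]; ring⟩, hqo⟩

open Polynomial in
private lemma springer_adjoinRoot {k : Type*} [Field k] {n : ℕ} (A : Matrix (Fin n) (Fin n) k)
    (hanis : ∀ v : Fin n → k, v ⬝ᵥ A.mulVec v = 0 → v = 0) :
    ∀ d : ℕ, Odd d → ∀ f : k[X], Irreducible f → f.natDegree = d →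
      ∀ w : Fin n → AdjoinRoot f,
        w ⬝ᵥ (A.map (algebraMap k (AdjoinRoot f))).mulVec w = 0 → w = 0 := by
  intro d
  induction d using Nat.strong_induction_on with | _ d IH => ?_
  intro hd f hf hfd w hw
  classical
  by_contra hne
  obtain ⟨i0, hi0⟩ : ∃ i, w i ≠ 0 := by
    by_contra hc; push_neg at hc; exact hne (funext hc)
  have hd1 : 1 ≤ d := hd.pos
  choose G hG using fun i => AdjoinRoot.mk_surjective (w i)
  set fm : k[X] := f * C f.leadingCoeff⁻¹ with hfm
  have hfne := hf.ne_zero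
  have hfm_monic : fm.Monic := monic_mul_leadingCoeff_inv hfne
  have hfm_deg : fm.natDegree = d := by
    have hC : (C f.leadingCoeff⁻¹ : k[X]) ≠ 0 := by
      simp [Polynomial.leadingCoeff_ne_zero.mpr hfne]
    rw [hfm, Polynomial.natDegree_mul hfne hC, Polynomial.natDegree_C, hfd]; omega
  set g : Fin n → k[X] := fun i => G i %ₘ fm with hgdef
  have hmkfm : AdjoinRoot.mk f fm = 0 := by
    rw [hfm, _root_.map_mul, AdjoinRoot.mk_self, zero_mul]
  have hmkg : ∀ i, AdjoinRoot.mk f (g i) = w i := by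
    intro i
    have hmd := Polynomial.modByMonic_add_div (G i) fm
    have h' := congrArg (AdjoinRoot.mk f) hmd
    rw [_root_.map_add, _root_.map_mul, hmkfm, zero_mul, add_zero] at h'
    show AdjoinRoot.mk f (G i %ₘ fm) = w i
    rw [h', hG i]
  have hgdeg : ∀ i, (g i).natDegree < d := by
    intro i
    have hfm1 : fm ≠ 1 := fun h => by
      rw [h] at hfm_deg; simp at hfm_deg; omega
    exact hfm_deg ▸ Polynomial.natDegree_modByMonic_lt _ hfm_monic hfm1
  have hgi0 : g i0 ≠ 0 := fun h => hi0 (by rw [← hmkg i0, h, map_zero])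
  obtain ⟨g', hg'0, hgcd⟩ :=
    Finset.extract_gcd g (⟨i0, Finset.mem_univ i0⟩ : (Finset.univ : Finset (Fin n)).Nonempty)
  set c := Finset.univ.gcd g with hcdef
  have hgc : ∀ i, g i = c * g' i := fun i => hg'0 i (Finset.mem_univ i)
  have hc0 : c ≠ 0 := fun h => hgi0 (by rw [hgc i0, h, zero_mul])
  have hg'i0 : g' i0 ≠ 0 := fun h => hgi0 (by rw [hgc i0, h, mul_zero])
  set qp : (Fin n → k[X]) → k[X] := fun v => v ⬝ᵥ (A.map C).mulVec v with hqpdef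
  have hqp_mk : ∀ (p : k[X]) (v : Fin n → k[X]),
      AdjoinRoot.mk p (qp v) =
        (fun i => AdjoinRoot.mk p (v i)) ⬝ᵥ
          (A.map (algebraMap k (AdjoinRoot p))).mulVec (fun i => AdjoinRoot.mk p (v i)) := by
    intro p v
    refine (springer_map_dot (AdjoinRoot.mk p) (A.map C) _ (fun i j => ?_) v).symm
    simp only [Matrix.map_apply, AdjoinRoot.algebraMap_eq]
    rfl
  have h1 : f ∣ qp g := by
    rw [← AdjoinRoot.mk_eq_zero, hqp_mk]
    have hfun : (fun i => AdjoinRoot.mk f (g i)) = w := funext hmkg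
    rw [hfun]; exact hw
  have hqp_eq : ∀ v : Fin n → k[X], qp v = ∑ i, ∑ j, C (A i j) * (v i * v j) := by
    intro v
    simp only [hqpdef, dotProduct, mulVec, Matrix.map_apply, Finset.mul_sum]
    exact Finset.sum_congr rfl fun i _ => Finset.sum_congr rfl fun j _ => by ring
  have hsmul : qp g = c * c * qp g' := by
    rw [hqp_eq, hqp_eq, Finset.mul_sum]
    refine Finset.sum_congr rfl fun i _ => ?_
    rw [Finset.mul_sum]
    refine Finset.sum_congr rfl fun j _ => ?_
    rw [hgc i, hgc j]; ring
  have hfg' : f ∣ qp g' := by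
    have hfprime : Prime f := hf.prime
    have hfc : ¬ f ∣ c := by
      intro hdvd
      have hdvd' : f ∣ g i0 := hdvd.trans ⟨g' i0, hgc i0⟩
      have := Polynomial.natDegree_le_of_dvd hdvd' hgi0
      have := hgdeg i0
      omega
    have h1' := h1; rw [hsmul] at h1'
    rcases hfprime.dvd_mul.mp h1' with h | h
    · rcases hfprime.dvd_mul.mp h with h' | h' <;> exact absurd h' hfc
    · exact h
  set m := Finset.univ.sup (fun i => (g' i).natDegree) with hmdef
  have hg'deg : ∀ i, (g' i).natDegree < d := by
    intro i
    by_cases h : g' i = 0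
    · simp [h]; omega
    · have hmul : (g i).natDegree = c.natDegree + (g' i).natDegree := by
        rw [hgc i]; exact Polynomial.natDegree_mul hc0 h
      have := hgdeg i; omega
  have hm : m < d := (Finset.sup_lt_iff (show (⊥ : ℕ) < d by simpa using hd.pos)).mpr
    (fun i _ => hg'deg i)
  have hle : ∀ i, (g' i).natDegree ≤ m := fun i => by
    rw [hmdef]
    exact Finset.le_sup (f := fun i => (g' i).natDegree) (Finset.mem_univ i)
  set cv : Fin n → k := fun i => (g' i).coeff m with hcvdef
  have hcv : cv ≠ 0 := by
    obtain ⟨i1, -, hi1⟩ := Finset.exists_mem_eq_sup Finset.univ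
      ⟨i0, Finset.mem_univ i0⟩ (fun i => (g' i).natDegree)
    intro hc
    by_cases hz : g' i1 = 0
    · have hm0 : m = 0 := by rw [hmdef, hi1, hz, Polynomial.natDegree_zero]
      have h0 : (g' i0).coeff 0 = 0 := by
        have := congrFun hc i0; simpa [hcvdef, hm0] using this
      have hd0 : (g' i0).natDegree = 0 := le_antisymm (hm0 ▸ hle i0) (Nat.zero_le _)
      exact hg'i0 (by rw [Polynomial.eq_C_of_natDegree_eq_zero hd0, h0, map_zero])
    · have hlc : (g' i1).coeff m ≠ 0 := by
        rw [hmdef, hi1]; exact mt Polynomial.leadingCoeff_eq_zero.mp hz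
      exact hlc (by have := congrFun hc i1; simpa [hcvdef] using this)
  have hcoeff : (qp g').coeff (2 * m) = cv ⬝ᵥ A.mulVec cv := by
    rw [hqp_eq]
    simp only [Polynomial.finset_sum_coeff, dotProduct, mulVec, Finset.mul_sum]
    refine Finset.sum_congr rfl fun i _ => Finset.sum_congr rfl fun j _ => ?_
    rw [Polynomial.coeff_C_mul]
    have hmm : (g' i * g' j).coeff (m + m) = (g' i).coeff m * (g' j).coeff m :=
      Polynomial.coeff_mul_add_eq_of_natDegree_le (hle i) (hle j)
    rw [two_mul, hmm]; ring
  have hne2 : cv ⬝ᵥ A.mulVec cv ≠ 0 := fun h => hcv (hanis cv h)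
  have hqpne : qp g' ≠ 0 := fun h => hne2 (by rw [← hcoeff, h, Polynomial.coeff_zero])
  have hdegle : (qp g').natDegree ≤ 2 * m := by
    rw [hqp_eq]
    refine Polynomial.natDegree_sum_le_of_forall_le _ _ fun i _ => ?_
    refine Polynomial.natDegree_sum_le_of_forall_le _ _ fun j _ => ?_
    calc (C (A i j) * (g' i * g' j)).natDegree
        ≤ (g' i * g' j).natDegree := Polynomial.natDegree_C_mul_le _ _
      _ ≤ (g' i).natDegree + (g' j).natDegree := Polynomial.natDegree_mul_le
      _ ≤ 2 * m := by have := hle i; have := hle j; omega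
  have hdegeq : (qp g').natDegree = 2 * m :=
    le_antisymm hdegle (Polynomial.le_natDegree_of_ne_zero (hcoeff ▸ hne2))
  obtain ⟨h, hh⟩ := hfg'
  have hhne : h ≠ 0 := fun hz => hqpne (by rw [hh, hz, mul_zero])
  have hdeg2 : d + h.natDegree = 2 * m := by
    rw [← hfd, ← Polynomial.natDegree_mul hfne hhne, ← hh, hdegeq]
  have hdodd : d % 2 = 1 := Nat.odd_iff.mp hd
  have hhodd : Odd h.natDegree := Nat.odd_iff.mpr (by omega)
  have hhlt : h.natDegree < d := by omega
  obtain ⟨p, hp, hpdvd, hpodd⟩ :=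
    springer_odd_factor h.natDegree h le_rfl hhne hhodd
  have hplt : p.natDegree < d :=
    lt_of_le_of_lt (Polynomial.natDegree_le_of_dvd hpdvd hhne) hhlt
  set w' : Fin n → AdjoinRoot p := fun i => AdjoinRoot.mk p (g' i) with hw'def
  have hw'0 : w' ⬝ᵥ (A.map (algebraMap k (AdjoinRoot p))).mulVec w' = 0 := by
    rw [hw'def, ← hqp_mk, hh, ← AdjoinRoot.mk_eq_zero.mpr (hpdvd.mul_left f)]
  have hw'eq := IH p.natDegree hplt hpodd p hp rfl w' hw'0
  have hdvd : ∀ i, p ∣ g' i := fun i => AdjoinRoot.mk_eq_zero.mp (congrFun hw'eq i)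
  have hpg : p ∣ Finset.univ.gcd g' := Finset.dvd_gcd fun i _ => hdvd i
  rw [hgcd] at hpg
  exact hp.not_isUnit (isUnit_of_dvd_one hpg)

private lemma springer_matrix_map_tower (R S T : Type*) [CommSemiring R] [CommSemiring S]
    [CommSemiring T] [Algebra R S] [Algebra R T] [Algebra S T] [IsScalarTower R S T] {n : ℕ}
    (A : Matrix (Fin n) (Fin n) R) :
    A.map (algebraMap R T) = (A.map (algebraMap R S)).map (algebraMap S T) := by
  rw [Matrix.map_map]
  ext i j
  simp [Matrix.map_apply, IsScalarTower.algebraMap_apply R S T]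

universe uu in
open IntermediateField in
private lemma springer_aux : ∀ (D : ℕ), Odd D →
    ∀ (k K : Type uu) [Field k] [Field K] [Algebra k K] [FiniteDimensional k K],
      Module.finrank k K = D → ∀ (n : ℕ) (A : Matrix (Fin n) (Fin n) k),
      (∀ v : Fin n → k, v ⬝ᵥ A.mulVec v = 0 → v = 0) →
      ∀ w : Fin n → K, w ⬝ᵥ (A.map (algebraMap k K)).mulVec w = 0 → w = 0 := by
  intro D
  induction D using Nat.strong_induction_on with | _ D IH => ?_
  intro hD k K _ _ _ _ hrank n A hanis w hw
  by_cases hall : ∀ i, w i ∈ (⊥ : IntermediateField k K)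
  · choose v hv using fun i => IntermediateField.mem_bot.mp (hall i)
    have hwv : w = fun i => algebraMap k K (v i) := funext fun i => (hv i).symm
    have hmap : algebraMap k K (v ⬝ᵥ A.mulVec v) = 0 := by
      rw [← springer_map_dot (algebraMap k K) A _ (fun i j => rfl) v, ← hwv]
      exact hw
    have h0 : v ⬝ᵥ A.mulVec v = 0 := by
      apply (algebraMap k K).injective
      rw [hmap, map_zero]
    rw [hwv, hanis v h0]
    funext i; simp
  · push_neg at hall
    obtain ⟨i, hi⟩ := hall
    set a := w i with hadef
    have hint : IsIntegral k a := IsIntegral.of_finite k a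
    haveI : FiniteDimensional k k⟮a⟯ := IntermediateField.adjoin.finiteDimensional hint
    set L := k⟮a⟯ with hLdef
    haveI : FiniteDimensional L K := FiniteDimensional.right k L K
    have htower : Module.finrank k L * Module.finrank L K = D := by
      rw [← hrank]; exact Module.finrank_mul_finrank k L K
    obtain ⟨hLodd, hKodd⟩ : Odd (Module.finrank k L) ∧ Odd (Module.finrank L K) :=
      Nat.odd_mul.mp (by rw [htower]; exact hD)
    have hL1 : Module.finrank k L ≠ 1 := by
      intro h1
      have hbot : L = ⊥ := IntermediateField.finrank_eq_one_iff.mp h1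
      exact hi (hbot ▸ IntermediateField.mem_adjoin_simple_self k a)
    have hposK : 0 < Module.finrank L K := Module.finrank_pos
    have hposL : 0 < Module.finrank k L := Module.finrank_pos
    have hlt : Module.finrank L K < D := by
      have h2 : 2 ≤ Module.finrank k L := by omega
      calc Module.finrank L K < 2 * Module.finrank L K := by omega
        _ ≤ Module.finrank k L * Module.finrank L K := Nat.mul_le_mul_right _ h2
        _ = D := htower
    haveI : Fact (Irreducible (minpoly k a)) := ⟨minpoly.irreducible hint⟩
    have hminodd : Odd (minpoly k a).natDegree := by
      rw [← IntermediateField.adjoin.finrank hint]; exact hLodd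
    have hanisAR := springer_adjoinRoot A hanis (minpoly k a).natDegree hminodd
      (minpoly k a) (minpoly.irreducible hint) rfl
    set e := IntermediateField.adjoinRootEquivAdjoin k hint with hedef
    have hanisL : ∀ v : Fin n → L, v ⬝ᵥ (A.map (algebraMap k L)).mulVec v = 0 → v = 0 := by
      intro v hv
      have hdot := springer_map_dot (e.symm : ↥L →+* AdjoinRoot (minpoly k a))
        (A.map (algebraMap k ↥L)) (A.map (algebraMap k (AdjoinRoot (minpoly k a))))
        (fun i0 j0 => by
          simp only [Matrix.map_apply]
          exact (e.symm.commutes (A i0 j0)).symm) v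
      have hzero : (e.symm : ↥L →+* AdjoinRoot (minpoly k a))
          (v ⬝ᵥ (A.map (algebraMap k ↥L)).mulVec v) = 0 := by
        rw [hv]; exact map_zero _
      have hv0 := hanisAR _ (hdot.trans hzero)
      funext i0
      have h00 := congrFun hv0 i0
      have hvi : v i0 = 0 := by
        apply e.symm.injective
        rw [map_zero]
        exact h00
      exact hvi
    have hmapmap : A.map (algebraMap k K) = (A.map (algebraMap k L)).map (algebraMap L K) :=
      springer_matrix_map_tower k L K A
    exact IH (Module.finrank (↥L) K) hlt hKodd (↥L) K rfl n (A.map (algebraMap k (↥L))) hanisL w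
      (by rw [← hmapmap]; exact hw)

/-- **Springer's theorem.** Let `k` be a field of characteristic `≠ 2`, let `q` be an
anisotropic quadratic form in `n` variables over `k` (represented by a matrix `A`,
`q v = v ⬝ᵥ A *ᵥ v`), and let `K/k` be a finite field extension of odd degree.
Then `q` remains anisotropic over `K`. -/
theorem springer_odd_degree {k K : Type*} [Field k] [Field K] [Algebra k K]
    (h2 : (2 : k) ≠ 0) [FiniteDimensional k K] (hodd : Odd (Module.finrank k K))
    {n : ℕ} (A : Matrix (Fin n) (Fin n) k)
    (hanis : ∀ v : Fin n → k, v ⬝ᵥ A.mulVec v = 0 → v = 0) :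
    ∀ w : Fin n → K, w ⬝ᵥ (A.map (algebraMap k K)).mulVec w = 0 → w = 0 := by
  intro w hw
  set L0 := (⊥ : IntermediateField k K) with hL0
  haveI : FiniteDimensional L0 K := FiniteDimensional.right k L0 K
  have h1 : Module.finrank k L0 = 1 := IntermediateField.finrank_bot
  have htower : Module.finrank k L0 * Module.finrank L0 K = Module.finrank k K :=
    Module.finrank_mul_finrank k L0 K
  have hodd' : Odd (Module.finrank L0 K) := by
    rw [h1, one_mul] at htower; rwa [htower]
  have hsurj : Function.Surjective (algebraMap k L0) := by
    intro x
    obtain ⟨y, hy⟩ := IntermediateField.mem_bot.mp x.2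
    refine ⟨y, Subtype.ext ?_⟩
    rw [← hy, IsScalarTower.algebraMap_apply k L0 K]
    rfl
  have hanisL0 : ∀ v : Fin n → L0, v ⬝ᵥ (A.map (algebraMap k L0)).mulVec v = 0 → v = 0 := by
    intro v hv
    choose u hu using fun i => hsurj (v i)
    have hveq : v = fun i => algebraMap k L0 (u i) := funext fun i => (hu i).symm
    have hmap : algebraMap k L0 (u ⬝ᵥ A.mulVec u) = 0 := by
      rw [← springer_map_dot (algebraMap k L0) A _ (fun i j => rfl) u, ← hveq]
      exact hv
    have h0 : u ⬝ᵥ A.mulVec u = 0 := by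
      apply (algebraMap k L0).injective
      rw [hmap, map_zero]
    rw [hveq, hanis u h0]
    funext i; simp
  have hmapmap : A.map (algebraMap k K) = (A.map (algebraMap k L0)).map (algebraMap L0 K) :=
    springer_matrix_map_tower k L0 K A
  exact springer_aux (Module.finrank L0 K) hodd' L0 K rfl n (A.map (algebraMap k L0)) hanisL0 w
    (by rw [← hmapmap]; exact hw)
end

section
/- A smooth conic C over a field k of characteristic not 2 has index 1 if and only if C has a k-rational point; equivalently, if C has a point in some field extension of odd degree over k, then C has a k-rational point. -/
open Matrix Polynomial IntermediateField

universe u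

lemma mapDot {R S : Type*} [CommRing R] [CommRing S] (φ : R →+* S)
    (B : Matrix (Fin 3) (Fin 3) R) (v : Fin 3 → R) :
    φ (v ⬝ᵥ B.mulVec v) = (fun i => φ (v i)) ⬝ᵥ (B.map φ).mulVec (fun i => φ (v i)) := by
  simp [dotProduct, Matrix.mulVec, map_sum, _root_.map_mul]

lemma smulDot {R : Type*} [CommRing R] (B : Matrix (Fin 3) (Fin 3) R) (c : R) (v : Fin 3 → R) :
    (fun i => c * v i) ⬝ᵥ B.mulVec (fun i => c * v i) = c ^ 2 * (v ⬝ᵥ B.mulVec v) := by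
  simp only [dotProduct, Matrix.mulVec, Finset.mul_sum, Finset.sum_mul]
  rw [Finset.sum_congr rfl]
  intro i _
  rw [Finset.sum_congr rfl]
  intro j _
  ring

lemma qCoeff {k : Type u} [Field k] (A : Matrix (Fin 3) (Fin 3) k) (p : Fin 3 → k[X]) (D : ℕ)
    (hp : ∀ i, (p i).natDegree ≤ D) :
    (p ⬝ᵥ (A.map C).mulVec p).coeff (D + D) =
      (fun i => (p i).coeff D) ⬝ᵥ A.mulVec (fun i => (p i).coeff D) := by
  simp only [dotProduct, Matrix.mulVec, Matrix.map_apply, Finset.mul_sum, finset_sum_coeff]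
  refine Finset.sum_congr rfl fun i _ => ?_
  refine Finset.sum_congr rfl fun j _ => ?_
  rw [mul_left_comm, coeff_C_mul, coeff_mul_add_eq_of_natDegree_le (hp i) (hp j), mul_left_comm]

lemma qDegLe {k : Type u} [Field k] (A : Matrix (Fin 3) (Fin 3) k) (p : Fin 3 → k[X]) (D : ℕ)
    (hp : ∀ i, (p i).natDegree ≤ D) :
    (p ⬝ᵥ (A.map C).mulVec p).natDegree ≤ D + D := by
  simp only [dotProduct, Matrix.mulVec, Matrix.map_apply, Finset.mul_sum]
  refine natDegree_sum_le_of_forall_le _ _ fun i _ => ?_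
  refine natDegree_sum_le_of_forall_le _ _ fun j _ => ?_
  exact natDegree_mul_le.trans (add_le_add (hp i) ((natDegree_C_mul_le _ _).trans (hp j)))

lemma oddFactor {k : Type u} [Field k] :
    ∀ (n : ℕ) (g : k[X]), g.natDegree ≤ n → g ≠ 0 → Odd g.natDegree →
      ∃ h : k[X], Irreducible h ∧ Odd h.natDegree ∧ h ∣ g := by
  intro n
  induction n with
  | zero =>
    intro g hle _ hodd
    interval_cases h : g.natDegree
    · simp at hodd
  | succ n ih =>
    intro g hle h0 hodd
    have hnu : ¬IsUnit g := by
      intro hu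
      rw [Polynomial.isUnit_iff] at hu
      obtain ⟨c, _, rfl⟩ := hu
      simp [natDegree_C] at hodd
    obtain ⟨h, hirr, hdvd⟩ := WfDvdMonoid.exists_irreducible_factor hnu h0
    by_cases hop : Odd h.natDegree
    · exact ⟨h, hirr, hop, hdvd⟩
    · obtain ⟨g', rfl⟩ := hdvd
      have hg' : g' ≠ 0 := right_ne_zero_of_mul h0
      have hmul : (h * g').natDegree = h.natDegree + g'.natDegree :=
        natDegree_mul hirr.ne_zero hg'
      have hpos : 0 < h.natDegree := hirr.natDegree_pos
      have hodd' : Odd g'.natDegree := by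
        rw [Nat.odd_iff] at hodd hop ⊢
        omega
      obtain ⟨h', h1, h2, h3⟩ := ih g' (by omega) hg' hodd'
      exact ⟨h', h1, h2, h3.mul_left h⟩

/-- Core inductive step of Springer's theorem for `AdjoinRoot f`. -/
lemma core {k : Type u} [Field k] (A : Matrix (Fin 3) (Fin 3) k) (f : k[X])
    (hirr : Irreducible f) (hfodd : Odd f.natDegree) :
    ∀ (d : ℕ) (p : Fin 3 → k[X]), (∀ i, (p i).natDegree ≤ d) → d < f.natDegree →
      ¬(∀ i, f ∣ p i) → f ∣ p ⬝ᵥ (A.map C).mulVec p →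
      (∃ v : Fin 3 → k, v ≠ 0 ∧ v ⬝ᵥ A.mulVec v = 0) ∨
        ∃ h : k[X], Irreducible h ∧ Odd h.natDegree ∧ h.natDegree < f.natDegree ∧
          ∃ w : Fin 3 → AdjoinRoot h, w ≠ 0 ∧
            w ⬝ᵥ ((A.map (algebraMap k (AdjoinRoot h))).mulVec w) = 0 := by
  intro d
  induction d using Nat.strong_induction_on with
  | _ d ih =>
  intro p hdeg hdlt hnf hdvd
  set D := Finset.univ.sup fun i => (p i).natDegree with hD
  have hDd : D ≤ d := Finset.sup_le fun i _ => hdeg i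
  have hpi : ∀ i, (p i).natDegree ≤ D := fun i => hD ▸ Finset.le_sup (f := fun i => (p i).natDegree) (Finset.mem_univ i)
  set v0 : Fin 3 → k := fun i => (p i).coeff D with hv0def
  -- some coordinate not divisible by f, hence nonzero
  obtain ⟨i0, hi0⟩ := not_forall.mp hnf
  have hpi0 : p i0 ≠ 0 := fun h => hi0 (h ▸ dvd_zero f)
  have hv0 : v0 ≠ 0 := by
    rcases Nat.eq_zero_or_pos D with hD0 | hDpos
    · intro hz
      apply hpi0
      have h1 : (p i0).natDegree ≤ 0 := hD0 ▸ hpi i0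
      have h2 : (p i0).coeff 0 = 0 := by
        have := congrFun hz i0
        simpa [hv0def, hD0] using this
      rw [eq_C_of_natDegree_le_zero h1, h2, map_zero]
    · obtain ⟨j, -, hj⟩ := Finset.exists_mem_eq_sup Finset.univ
        ⟨0, Finset.mem_univ 0⟩ (fun i => (p i).natDegree)
      have hpj : p j ≠ 0 := by
        intro h0
        rw [h0, natDegree_zero] at hj
        omega
      intro hz
      have := congrFun hz j
      simp only [hv0def, Pi.zero_apply] at this
      rw [← hD] at hj
      rw [hj, coeff_natDegree] at this
      exact hpj (leadingCoeff_eq_zero.mp this)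
  have key : (p ⬝ᵥ (A.map C).mulVec p).coeff (D + D) = v0 ⬝ᵥ A.mulVec v0 := qCoeff A p D hpi
  by_cases hq0 : v0 ⬝ᵥ A.mulVec v0 = 0
  · exact Or.inl ⟨v0, hv0, hq0⟩
  -- the quadratic value is a nonzero polynomial of degree exactly 2D
  have hQne : p ⬝ᵥ (A.map C).mulVec p ≠ 0 := by
    intro h
    rw [h, coeff_zero] at key
    exact hq0 key.symm
  have hQdeg : (p ⬝ᵥ (A.map C).mulVec p).natDegree = D + D :=
    le_antisymm (qDegLe A p D hpi) (le_natDegree_of_ne_zero (key ▸ hq0))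
  obtain ⟨g, hg⟩ := hdvd
  have hgne : g ≠ 0 := by
    intro h; rw [h, mul_zero] at hg; exact hQne hg
  have hsum : f.natDegree + g.natDegree = D + D := by
    rw [← natDegree_mul hirr.ne_zero hgne, ← hg, hQdeg]
  have hgodd : Odd g.natDegree := by
    rcases hfodd with ⟨m, hm⟩
    rw [Nat.odd_iff]; omega
  obtain ⟨h, hhirr, hhodd, hhdvd⟩ := oddFactor g.natDegree g le_rfl hgne hgodd
  have hhle : h.natDegree ≤ g.natDegree := natDegree_le_of_dvd hhdvd hgne
  have hhpos : 0 < h.natDegree := hhirr.natDegree_pos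
  have hfpos : 0 < f.natDegree := hirr.natDegree_pos
  have hhlt : h.natDegree < f.natDegree := by omega
  by_cases hall : ∀ i, h ∣ p i
  · -- divide every coordinate by h and recurse
    choose p' hp' using hall
    have hfh : ¬ f ∣ h := by
      intro hfh
      exact hnf fun i => (hfh.trans (hp' i ▸ dvd_mul_right h (p' i)))
    have hprime : Prime f := hirr.prime
    have hq' : f ∣ p' ⬝ᵥ (A.map C).mulVec p' := by
      have heq : p ⬝ᵥ (A.map C).mulVec p = h ^ 2 * (p' ⬝ᵥ (A.map C).mulVec p') := by
        have : p = fun i => h * p' i := funext hp'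
        rw [this]
        exact smulDot _ h p'
      have hdvd2 : f ∣ h ^ 2 * (p' ⬝ᵥ (A.map C).mulVec p') := heq ▸ ⟨g, hg⟩
      rcases hprime.dvd_mul.mp hdvd2 with h1 | h1
      · exact absurd (hprime.dvd_of_dvd_pow h1) hfh
      · exact h1
    have hdeg' : ∀ i, (p' i).natDegree ≤ d - 1 := by
      intro i
      rcases eq_or_ne (p' i) 0 with h0 | h0
      · simp [h0]
      · have : (p i).natDegree = h.natDegree + (p' i).natDegree := by
          rw [hp' i, natDegree_mul hhirr.ne_zero h0]
        have := hdeg i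
        omega
    have hd1 : 0 < d := by omega
    have hnf' : ¬ ∀ i, f ∣ p' i := by
      intro hff
      exact hnf fun i => (hp' i) ▸ (hff i).mul_left h
    exact ih (d - 1) (by omega) p' hdeg' (by omega) hnf' hq'
  · -- pass to AdjoinRoot h
    push_neg at hall
    obtain ⟨i1, hi1⟩ := hall
    refine Or.inr ⟨h, hhirr, hhodd, hhlt, fun i => AdjoinRoot.mk h (p i), ?_, ?_⟩
    · intro hz
      exact hi1 (AdjoinRoot.mk_eq_zero.mp (congrFun hz i1))
    · have hmap : A.map (algebraMap k (AdjoinRoot h)) = (A.map C).map (AdjoinRoot.mk h) := by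
        rw [Matrix.map_map]
        ext i j
        rw [Matrix.map_apply, Matrix.map_apply, AdjoinRoot.algebraMap_eq]
        rfl
      rw [hmap, ← mapDot]
      rw [hg]
      have : AdjoinRoot.mk h g = 0 := AdjoinRoot.mk_eq_zero.mpr hhdvd
      rw [_root_.map_mul, this, mul_zero]

lemma springer (n : ℕ) :
    ∀ (k K : Type u) [Field k] [Field K] [Algebra k K] [FiniteDimensional k K],
      Odd n → Module.finrank k K = n → ∀ (A : Matrix (Fin 3) (Fin 3) k)
      (w : Fin 3 → K), w ≠ 0 → w ⬝ᵥ (A.map (algebraMap k K)).mulVec w = 0 →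
      ∃ v : Fin 3 → k, v ≠ 0 ∧ v ⬝ᵥ A.mulVec v = 0 := by
  induction n using Nat.strong_induction_on with
  | _ n ih =>
  intro k K _ _ _ _ hodd hrank A w hw hq
  by_cases h1 : n = 1
  · -- trivial extension
    subst h1
    have hbot : (⊥ : Subalgebra k K) = ⊤ :=
      Subalgebra.bot_eq_top_iff_finrank_eq_one.mpr hrank
    have hsurj : ∀ x : K, ∃ c : k, algebraMap k K c = x := by
      intro x
      have : x ∈ (⊥ : Subalgebra k K) := hbot ▸ trivial
      rwa [Algebra.mem_bot, Set.mem_range] at this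
    choose v hv using fun i => hsurj (w i)
    refine ⟨v, ?_, ?_⟩
    · intro hz
      apply hw
      funext i
      rw [← hv i, congrFun hz i]
      simp
    · apply (algebraMap k K).injective
      rw [mapDot (algebraMap k K) A v, map_zero]
      have : (fun i => algebraMap k K (v i)) = w := funext hv
      rw [this, hq]
  · -- nontrivial: pick α outside the base field
    have hn1 : 1 ≤ n := hodd.pos
    have hbot : (⊥ : Subalgebra k K) ≠ ⊤ := by
      intro h
      exact h1 (hrank ▸ Subalgebra.bot_eq_top_iff_finrank_eq_one.mp h)
    obtain ⟨α, hα⟩ : ∃ α : K, α ∉ (⊥ : Subalgebra k K) := by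
      by_contra hcon
      push_neg at hcon
      exact hbot (top_le_iff.mp fun x _ => hcon x)
    have hint : IsIntegral k α := IsIntegral.of_finite k α
    have hα' : α ∉ (algebraMap k K).range := by
      rwa [Algebra.mem_bot] at hα
    set F := k⟮α⟯ with hF
    have hdegf : Module.finrank k F = (minpoly k α).natDegree :=
      IntermediateField.adjoin.finrank hint
    have hdeg2 : 2 ≤ (minpoly k α).natDegree :=
      (minpoly.two_le_natDegree_iff hint).mpr hα'
    have hm : Module.finrank k F * Module.finrank F K = n :=
      hrank ▸ Module.finrank_mul_finrank k F K
    have hoddF : Odd (Module.finrank k F) ∧ Odd (Module.finrank F K) :=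
      (Nat.odd_mul.mp (hm ▸ hodd))
    have hposFK : 0 < Module.finrank F K := Module.finrank_pos
    have hlt : Module.finrank F K < n := by
      have h2 : 2 ≤ Module.finrank k F := hdegf ▸ hdeg2
      nlinarith
    -- step 1: descend from K to F
    have hq' : w ⬝ᵥ ((A.map (algebraMap k F)).map (algebraMap F K)).mulVec w = 0 := by
      rw [Matrix.map_map, ← RingHom.coe_comp, ← IsScalarTower.algebraMap_eq]
      exact hq
    obtain ⟨w1, hw1ne, hw1⟩ := ih (Module.finrank F K) hlt F K hoddF.2 rfl
      (A.map (algebraMap k F)) w hw hq'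
    -- step 2: transport to AdjoinRoot (minpoly k α)
    set f := minpoly k α with hfdef
    have hirrf : Irreducible f := minpoly.irreducible hint
    have hmonf : f.Monic := minpoly.monic hint
    have hoddf : Odd f.natDegree := hdegf ▸ hoddF.1
    let e : F →ₐ[k] AdjoinRoot f :=
      (IntermediateField.adjoinRootEquivAdjoin k hint).symm.toAlgHom
    set w2 : Fin 3 → AdjoinRoot f := fun i => e (w1 i) with hw2def
    have hw2ne : w2 ≠ 0 := by
      intro hz
      apply hw1ne
      funext i
      have := congrFun hz i
      simp only [hw2def, Pi.zero_apply] at this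
      exact (IntermediateField.adjoinRootEquivAdjoin k hint).symm.injective
        (this.trans (map_zero _).symm)
    have hq2 : w2 ⬝ᵥ (A.map (algebraMap k (AdjoinRoot f))).mulVec w2 = 0 := by
      have hmap : A.map (algebraMap k (AdjoinRoot f)) =
          (A.map (algebraMap k F)).map e.toRingHom := by
        rw [Matrix.map_map]
        ext i j
        simp only [Matrix.map_apply, Function.comp_apply, RingHom.coe_coe]
        exact (e.commutes (A i j)).symm
      have := mapDot e.toRingHom (A.map (algebraMap k F)) w1
      rw [hw1, map_zero] at this
      rw [hmap, hw2def]
      exact this.symm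
    -- step 3: lift to polynomial representatives
    have hlift := fun i => AdjoinRoot.mk_surjective (w2 i)
    choose r hr using hlift
    set p : Fin 3 → k[X] := fun i => r i %ₘ f with hpdef
    have hfpos : 0 < f.natDegree := by omega
    have hfne1 : f ≠ 1 := by
      intro h
      rw [h, natDegree_one] at hfpos
      omega
    have hdegp : ∀ i, (p i).natDegree < f.natDegree := fun i =>
      natDegree_modByMonic_lt (r i) hmonf hfne1
    have hmk : ∀ i, AdjoinRoot.mk f (p i) = w2 i := by
      intro i
      have heq : AdjoinRoot.mk f (r i %ₘ f + f * (r i /ₘ f)) = AdjoinRoot.mk f (r i) := by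
        rw [modByMonic_add_div (r i) f]
      rw [map_add, _root_.map_mul, AdjoinRoot.mk_self, zero_mul, add_zero] at heq
      rw [hpdef]
      exact heq.trans (hr i)
    have hnf : ¬ ∀ i, f ∣ p i := by
      intro hall
      apply hw2ne
      funext i
      rw [← hmk i]
      exact AdjoinRoot.mk_eq_zero.mpr (hall i)
    have hdvdq : f ∣ p ⬝ᵥ (A.map C).mulVec p := by
      rw [← AdjoinRoot.mk_eq_zero]
      have hmap2 : A.map (algebraMap k (AdjoinRoot f)) = (A.map C).map (AdjoinRoot.mk f) := by
        rw [Matrix.map_map]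
        ext i j
        rw [Matrix.map_apply, Matrix.map_apply, AdjoinRoot.algebraMap_eq]
        rfl
      have := mapDot (AdjoinRoot.mk f) (A.map C) p
      rw [this]
      have hfun : (fun i => AdjoinRoot.mk f (p i)) = w2 := funext hmk
      rw [hfun, ← hmap2]
      exact hq2
    -- step 4: apply the core lemma and recurse
    rcases core A f hirrf hoddf (f.natDegree - 1) p
        (fun i => by have := hdegp i; omega) (by omega) hnf hdvdq with
      hL | ⟨h, hhirr, hhodd, hhlt, w3, hw3ne, hq3⟩
    · exact hL
    · haveI := Fact.mk hhirr
      haveI : Module.Finite k (AdjoinRoot h) :=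
        (AdjoinRoot.powerBasis (K := k) hhirr.ne_zero).finite
      have hfr : Module.finrank k (AdjoinRoot h) = h.natDegree := by
        rw [(AdjoinRoot.powerBasis (K := k) hhirr.ne_zero).finrank,
          AdjoinRoot.powerBasis_dim]
      have hfn : f.natDegree ≤ n := by
        rw [← hdegf] at *
        nlinarith
      exact ih h.natDegree (by omega) k (AdjoinRoot h) hhodd hfr A w3 hw3ne hq3

/-- A smooth conic over a field `k` of characteristic `≠ 2` (given by a nondegenerate
symmetric ternary quadratic form `A`) has index `1` iff it has a `k`-rational point:
if the conic has a point over some finite field extension `K/k` of odd degree, then it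
has a `k`-rational point. -/
theorem conic_index_one_iff_point {k : Type u} [Field k] (h2 : (2 : k) ≠ 0)
    (A : Matrix (Fin 3) (Fin 3) k) (hsym : A.IsSymm) (hdet : A.det ≠ 0)
    (hodd : ∃ (K : Type u) (_ : Field K) (_ : Algebra k K) (_ : FiniteDimensional k K),
      Odd (Module.finrank k K) ∧
        ∃ w : Fin 3 → K, w ≠ 0 ∧ w ⬝ᵥ (A.map (algebraMap k K)).mulVec w = 0) :
    ∃ v : Fin 3 → k, v ≠ 0 ∧ v ⬝ᵥ A.mulVec v = 0 := by
  obtain ⟨K, _, _, _, hoddK, w, hw, hq⟩ := hodd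
  exact springer (Module.finrank k K) k K hoddK rfl A w hw hq
end
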